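/- arXiv:1910.00852 — 4 statements merged into one kernel-verified Lean document; each statement's English description precedes it below -/
import Mathlib

section
/- Let n ≥ 2 and k ≥ 3 be integers and let S be a set of edges of the augmented k-ary n-cube AQ_{n,k} with |S| ≤ 12n−13. Then AQ_{n,k} − S has a connected component H with |V(H)| ≥ k^n − 2. -/
open SimpleGraph

/-- The augmented `k`-ary `n`-cube.  Vertices are `n`-tuples over `ZMod k`;
the `Fin n` index `j` corresponds to the coordinate `a_{j+1}` of the paper. -/
def AQ (n k : ℕ) : SimpleGraph (Fin n → ZMod k) where
  Adj u v := u ≠ v ∧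
    ((∃ i : Fin n, (v i = u i + 1 ∨ v i = u i - 1) ∧ ∀ j, j ≠ i → v j = u j) ∨
     (∃ i : Fin n, 1 ≤ i.val ∧
       ((∀ j, j ≤ i → v j = u j + 1) ∨ (∀ j, j ≤ i → v j = u j - 1)) ∧
       (∀ j, i < j → v j = u j)))
  symm := by
    constructor
    rintro u v ⟨hne, h⟩
    refine ⟨hne.symm, ?_⟩
    rcases h with ⟨i, hi, hj⟩ | ⟨i, hi1, hpm, hj⟩
    · left
      refine ⟨i, ?_, fun j hj' => (hj j hj').symm⟩
      rcases hi with h | h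
      · right; rw [h]; ring
      · left; rw [h]; ring
    · right
      refine ⟨i, hi1, ?_, fun j hj' => (hj j hj').symm⟩
      rcases hpm with h | h
      · right; intro j hj'; rw [h j hj']; ring
      · left; intro j hj'; rw [h j hj']; ring
  loopless := ⟨fun u h => h.1 rfl⟩

/-- Degree of a vertex, as the cardinality of its neighbour set. -/
noncomputable def deg {V : Type*} (G : SimpleGraph V) (x : V) : ℕ :=
  (G.neighborSet x).ncard

/-- `G` is strongly Menger connected: any two distinct vertices `x, y` are joined by
`min (deg x) (deg y)` pairwise distinct, pairwise internally vertex-disjoint paths. -/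
def StronglyMengerConnected {V : Type*} (G : SimpleGraph V) : Prop :=
  ∀ x y : V, x ≠ y →
    ∃ P : Fin (min (deg G x) (deg G y)) → G.Walk x y,
      (∀ i, (P i).IsPath) ∧
      (∀ i j, i ≠ j → P i ≠ P j) ∧
      (∀ i j, i ≠ j → ∀ w, w ∈ (P i).support → w ∈ (P j).support → w = x ∨ w = y)

/-- `G` is strongly Menger edge connected: any two distinct vertices `x, y` are joined
by `min (deg x) (deg y)` pairwise edge-disjoint paths. -/
def StronglyMengerEdgeConnected {V : Type*} (G : SimpleGraph V) : Prop :=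
  ∀ x y : V, x ≠ y →
    ∃ P : Fin (min (deg G x) (deg G y)) → G.Walk x y,
      (∀ i, (P i).IsPath) ∧
      (∀ i j, i ≠ j → ∀ e, e ∈ (P i).edges → e ∉ (P j).edges)

open Finset
set_option linter.unusedSectionVars false

namespace AQaux

variable {V : Type*} [DecidableEq V] [AddCommGroup V]

/-- Number of "exits" of `A` in direction `g`. -/
def cc (g : V) (A : Finset V) : ℕ := (A.filter (fun x => x + g ∉ A)).card

lemma cc_eq_zero_iff {g : V} {A : Finset V} : cc g A = 0 ↔ ∀ x ∈ A, x + g ∈ A := by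
  simp [cc, Finset.card_eq_zero, Finset.filter_eq_empty_iff]

lemma cc_pos {g : V} {A : Finset V} {x : V} (hx : x ∈ A) (hx' : x + g ∉ A) :
    1 ≤ cc g A :=
  Finset.card_pos.2 ⟨x, by simp [hx, hx']⟩

lemma cc_compl [Fintype V] (g : V) (A : Finset V) : cc g Aᶜ = cc g A := by
  classical
  set B := A.image (fun a => a - g) with hB
  have hmem : ∀ x : V, x + g ∈ A ↔ x ∈ B := by
    intro x
    constructor
    · intro h
      exact Finset.mem_image.2 ⟨x + g, h, by abel⟩
    · rintro hx
      obtain ⟨a, ha, rfl⟩ := Finset.mem_image.1 hx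
      simpa [sub_add_cancel] using ha
  have h1 : cc g A = (A \ B).card := by
    unfold cc
    congr 1
    ext x
    simp [Finset.mem_sdiff, hmem x]
  have h2 : cc g Aᶜ = (B \ A).card := by
    unfold cc
    congr 1
    ext x
    simp only [Finset.mem_filter, Finset.mem_sdiff, Finset.mem_compl, ← hmem x]
    tauto
  have e1 := Finset.card_sdiff_add_card_inter A B
  have e2 := Finset.card_sdiff_add_card_inter B A
  have hcard : B.card = A.card := Finset.card_image_of_injective _ (sub_left_injective)
  rw [Finset.inter_comm] at e2
  omega

lemma cc_le_card (g : V) (A : Finset V) : cc g A ≤ A.card :=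
  Finset.card_filter_le _ _

/-- If `g` "reaches" everything, a proper nonempty set has an exit. -/
lemma cc_pos_of_gen {g : V} {A : Finset V}
    (hgen : ∀ x y : V, ∃ m : ℕ, y = x + m • g)
    (hne : A.Nonempty) (hproper : ∃ y, y ∉ A) : 1 ≤ cc g A := by
  by_contra hcc
  have h0 : cc g A = 0 := by omega
  have hcl := cc_eq_zero_iff.1 h0
  obtain ⟨x, hx⟩ := hne
  obtain ⟨y, hy⟩ := hproper
  have key : ∀ m : ℕ, x + m • g ∈ A := by
    intro m
    induction m with
    | zero => simpa using hx
    | succ m ih =>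
        have := hcl _ ih
        rwa [add_assoc, ← succ_nsmul] at this
  obtain ⟨m, rfl⟩ := hgen x y
  exact hy (key m)

end AQaux

section zmodcycle

open AQaux

lemma zmod_gen (k : ℕ) [NeZero k] : ∀ x y : ZMod k, ∃ m : ℕ, y = x + m • (1 : ZMod k) := by
  intro x y
  refine ⟨(y - x).val, ?_⟩
  rw [nsmul_eq_mul, mul_one, ZMod.natCast_val, ZMod.cast_id]
  abel

lemma zmod_exit {k : ℕ} [NeZero k] {T : Finset (ZMod k)} (h1 : T.Nonempty) (h2 : T ≠ Finset.univ) :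
    1 ≤ cc (1 : ZMod k) T := by
  apply cc_pos_of_gen (zmod_gen k) h1
  by_contra h
  push_neg at h
  exact h2 (Finset.eq_univ_iff_forall.2 h)

end zmodcycle

namespace AQaux

variable {k : ℕ} [NeZero k] {W : Type*} [DecidableEq W] [AddCommGroup W] [Fintype W]

def layer (A : Finset (W × ZMod k)) (t : ZMod k) : Finset W :=
  (A.filter (fun p => p.2 = t)).image Prod.fst

lemma mem_layer {A : Finset (W × ZMod k)} {t : ZMod k} {w : W} :
    w ∈ layer A t ↔ (w, t) ∈ A := by
  constructor
  · intro h
    obtain ⟨p, hp, rfl⟩ := Finset.mem_image.1 h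
    have := (Finset.mem_filter.1 hp)
    have h2 : p = (p.1, t) := by
      ext <;> simp [this.2]
    rw [← h2]; exact this.1
  · intro h
    exact Finset.mem_image.2 ⟨(w, t), Finset.mem_filter.2 ⟨h, rfl⟩, rfl⟩

lemma layer_compl (A : Finset (W × ZMod k)) (t : ZMod k) :
    layer Aᶜ t = (layer A t)ᶜ := by
  ext w
  simp [mem_layer, Finset.mem_compl]

lemma sum_card_layers (A : Finset (W × ZMod k)) :
    ∑ t, (layer A t).card = A.card := by
  rw [Finset.card_eq_sum_card_fiberwise (f := Prod.snd) (t := Finset.univ) (fun x _ => Finset.mem_univ _)]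
  refine Finset.sum_congr rfl fun t _ => ?_
  unfold layer
  rw [Finset.card_image_of_injOn]
  intro p hp q hq hpq
  simp only [Finset.coe_filter, Set.mem_setOf_eq] at hp hq
  ext
  · exact hpq
  · rw [hp.2, hq.2]

lemma layer_card_le (A : Finset (W × ZMod k)) (t : ZMod k) :
    (layer A t).card ≤ Fintype.card W := Finset.card_le_univ _

end AQaux

namespace AQaux

variable {k : ℕ} [NeZero k] {W : Type*} [DecidableEq W] [AddCommGroup W] [Fintype W]

lemma cc_horiz (g : W) (A : Finset (W × ZMod k)) :
    cc (g, (0 : ZMod k)) A = ∑ t, cc g (layer A t) := by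
  unfold cc
  rw [Finset.card_eq_sum_card_fiberwise (f := Prod.snd) (t := Finset.univ) (fun x _ => Finset.mem_univ _)]
  refine Finset.sum_congr rfl fun t _ => ?_
  apply Finset.card_bij (fun p _ => p.1)
  · rintro ⟨x, s⟩ hp
    simp only [Finset.mem_filter, Prod.mk_add_mk, add_zero] at hp
    obtain ⟨⟨hA, hnot⟩, hs⟩ := hp
    subst hs
    simp only [Finset.mem_filter]
    exact ⟨mem_layer.2 hA, fun hc => hnot (mem_layer.1 hc)⟩
  · rintro ⟨x, s⟩ hp ⟨y, r⟩ hq hxy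
    simp only [Finset.mem_filter] at hp hq
    simp only at hxy
    ext
    · exact hxy
    · rw [hp.2, hq.2]
  · intro w hw
    simp only [Finset.mem_filter] at hw
    refine ⟨(w, t), ?_, rfl⟩
    simp only [Finset.mem_filter, Prod.mk_add_mk, add_zero]
    exact ⟨⟨mem_layer.1 hw.1, fun hc => hw.2 (mem_layer.2 hc)⟩, trivial⟩

variable [Module (ZMod k) W]

/-- The pattern of the skew fiber through `w` in direction `(h,1)`. -/
def fib (h : W) (A : Finset (W × ZMod k)) (w : W) : Finset (ZMod k) :=
  Finset.univ.filter (fun t => (w + t • h, t) ∈ A)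

lemma mem_fib {h : W} {A : Finset (W × ZMod k)} {w : W} {t : ZMod k} :
    t ∈ fib h A w ↔ (w + t • h, t) ∈ A := by
  simp [fib]

lemma succ_smul_eq (h : W) (w : W) (t : ZMod k) :
    w + t • h + h = w + (t + 1) • h := by
  rw [add_smul, one_smul]; abel

lemma cc_fiber (h : W) (A : Finset (W × ZMod k)) :
    cc (h, (1 : ZMod k)) A = ∑ w, cc 1 (fib h A w) := by
  show (A.filter (fun x => x + (h, 1) ∉ A)).card = _
  rw [Finset.card_eq_sum_card_fiberwise (f := fun p => p.1 - p.2 • h) (t := Finset.univ)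
    (fun x _ => Finset.mem_univ _)]
  refine Finset.sum_congr rfl fun w _ => ?_
  show _ = ((fib h A w).filter (fun t => t + 1 ∉ fib h A w)).card
  symm
  apply Finset.card_bij (fun t _ => ((w + t • h : W), (t : ZMod k)))
  · intro t ht
    rw [Finset.mem_filter, mem_fib] at ht
    obtain ⟨hA, hnot⟩ := ht
    simp only [Finset.mem_filter, Prod.mk_add_mk]
    refine ⟨⟨hA, ?_⟩, by abel⟩
    intro hc
    apply hnot
    rw [mem_fib, ← succ_smul_eq]
    exact hc
  · intro t ht s hs hts
    simpa using congrArg Prod.snd hts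
  · rintro ⟨x, t⟩ hp
    simp only [Finset.mem_filter, Prod.mk_add_mk] at hp
    obtain ⟨⟨hA, hnot⟩, hw⟩ := hp
    have hx : x = w + t • h := by
      rw [← hw]; abel
    refine ⟨t, ?_, by rw [← hx]⟩
    rw [Finset.mem_filter, mem_fib, ← hx]
    refine ⟨hA, ?_⟩
    intro hc
    apply hnot
    rw [mem_fib, ← succ_smul_eq, ← hx] at hc
    exact hc

lemma cc_diag_ge (h : W) (A : Finset (W × ZMod k)) (Ws : Finset W)
    (hw : ∀ w ∈ Ws, (∃ t, (w + t • h, t) ∈ A) ∧ (∃ t, (w + t • h, t) ∉ A)) :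
    Ws.card ≤ cc (h, (1 : ZMod k)) A := by
  rw [cc_fiber]
  calc Ws.card = ∑ w ∈ Ws, 1 := by simp
  _ ≤ ∑ w ∈ Ws, cc 1 (fib h A w) := by
      apply Finset.sum_le_sum
      intro w hw'
      obtain ⟨⟨t1, ht1⟩, ⟨t2, ht2⟩⟩ := hw w hw'
      refine zmod_exit ⟨t1, mem_fib.2 ht1⟩ (fun hc => ht2 ?_)
      exact mem_fib.1 (hc ▸ Finset.mem_univ t2)
  _ ≤ ∑ w, cc 1 (fib h A w) := Finset.sum_le_sum_of_subset (Finset.subset_univ _)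

/-- In the presence of a full layer, every layer-complement bounds every skew `cc` from below. -/
lemma cc_ge_compl_layer (h : W) {A : Finset (W × ZMod k)} {s : ZMod k}
    (hs : layer A s = Finset.univ) (t : ZMod k) :
    ((layer A t)ᶜ).card ≤ cc (h, (1 : ZMod k)) A := by
  have hinj : Function.Injective (fun x : W => x - t • h) := sub_left_injective
  have hcard : (((layer A t)ᶜ).image (fun x => x - t • h)).card = ((layer A t)ᶜ).card :=
    Finset.card_image_of_injective _ hinj
  rw [← hcard]
  apply cc_diag_ge
  intro w hw
  obtain ⟨x, hx, rfl⟩ := Finset.mem_image.1 hw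
  constructor
  · exact ⟨s, mem_layer.1 (hs ▸ Finset.mem_univ _)⟩
  · refine ⟨t, ?_⟩
    have : x - t • h + t • h = x := by abel
    rw [this]
    exact fun hc => (Finset.mem_compl.1 hx) (mem_layer.2 hc)

lemma cc_v_ge_sdiff {A : Finset (W × ZMod k)} (s t : ZMod k) :
    ((layer A s) \ (layer A t)).card ≤ cc ((0 : W), (1 : ZMod k)) A := by
  apply cc_diag_ge
  intro w hw
  rw [Finset.mem_sdiff] at hw
  constructor
  · exact ⟨s, by simpa [smul_zero] using mem_layer.1 hw.1⟩
  · exact ⟨t, by simpa [smul_zero] using fun hc => hw.2 (mem_layer.2 hc)⟩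

lemma smul_inj {u : W} (hu : ∀ c : ZMod k, c ≠ 0 → c • u ≠ 0) {a b : ZMod k}
    (h : a • u = b • u) : a = b := by
  by_contra hne
  exact hu (a - b) (sub_ne_zero.2 hne) (by rw [sub_smul, h, sub_self])

lemma full_layer_nonempty_fib {A : Finset (W × ZMod k)} {s : ZMod k}
    (hs : layer A s = Finset.univ) (h : W) (w : W) : ∃ t, (w + t • h, t) ∈ A :=
  ⟨s, mem_layer.1 (hs ▸ Finset.mem_univ _)⟩

lemma missing_fib {A : Finset (W × ZMod k)} {t : ZMod k} {m : W} (hm : m ∉ layer A t)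
    (h : W) : ∃ r, (m - t • h + r • h, r) ∉ A := by
  refine ⟨t, ?_⟩
  have he : m - t • h + t • h = m := by abel
  rw [he]
  exact fun hc => hm (mem_layer.2 hc)

/-- Two missing points in two distinct layers, plus a full layer, give `c_v + c_d ≥ 3`. -/
lemma vd_ge_three {A : Finset (W × ZMod k)} {u : W}
    (hu : ∀ c : ZMod k, c ≠ 0 → c • u ≠ 0)
    {s t₁ t₂ : ZMod k} (hs : layer A s = Finset.univ) (ht : t₁ ≠ t₂)
    {m₁ m₂ : W} (hm₁ : m₁ ∉ layer A t₁) (hm₂ : m₂ ∉ layer A t₂) :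
    3 ≤ cc ((0 : W), (1 : ZMod k)) A + cc (u, (1 : ZMod k)) A := by
  have hz : ∀ (m : W) (t : ZMod k), m - t • (0 : W) = m := by
    intro m t; rw [smul_zero, sub_zero]
  have hcv1 : ∀ (t : ZMod k) (m : W), m ∉ layer A t → 1 ≤ cc ((0 : W), (1 : ZMod k)) A := by
    intro t m hm
    have h := cc_diag_ge (0 : W) A {m} ?_
    · simpa using h
    · intro w hw
      rw [Finset.mem_singleton] at hw; subst hw
      refine ⟨full_layer_nonempty_fib hs _ _, ?_⟩
      have := missing_fib hm (0 : W)
      rwa [hz] at this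
  have hcd1 : 1 ≤ cc (u, (1 : ZMod k)) A := by
    have h := cc_diag_ge u A {m₁ - t₁ • u} ?_
    · simpa using h
    · intro w hw
      rw [Finset.mem_singleton] at hw; subst hw
      exact ⟨full_layer_nonempty_fib hs _ _, missing_fib hm₁ u⟩
  by_cases hm : m₁ = m₂
  · subst hm
    -- c_v ≥ 1, c_d ≥ 2
    have h1 := hcv1 t₁ m₁ hm₁
    have h2 : 2 ≤ cc (u, (1 : ZMod k)) A := by
      have hne : m₁ - t₁ • u ≠ m₁ - t₂ • u := by
        intro hc
        exact ht (smul_inj hu (sub_right_injective hc))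
      have h := cc_diag_ge u A {m₁ - t₁ • u, m₁ - t₂ • u} ?_
      · rwa [Finset.card_pair hne] at h
      · intro w hw
        rw [Finset.mem_insert, Finset.mem_singleton] at hw
        rcases hw with rfl | rfl
        · exact ⟨full_layer_nonempty_fib hs _ _, missing_fib hm₁ u⟩
        · exact ⟨full_layer_nonempty_fib hs _ _, missing_fib hm₂ u⟩
    omega
  · -- c_v ≥ 2, c_d ≥ 1
    have h1 : 2 ≤ cc ((0 : W), (1 : ZMod k)) A := by
      have h := cc_diag_ge (0 : W) A {m₁, m₂} ?_
      · rwa [Finset.card_pair hm] at h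
      · intro w hw
        rw [Finset.mem_insert, Finset.mem_singleton] at hw
        rcases hw with rfl | rfl
        · refine ⟨full_layer_nonempty_fib hs _ _, ?_⟩
          have := missing_fib hm₁ (0 : W); rwa [hz] at this
        · refine ⟨full_layer_nonempty_fib hs _ _, ?_⟩
          have := missing_fib hm₂ (0 : W); rwa [hz] at this
    omega

end AQaux

namespace AQaux

variable {k : ℕ} [NeZero k] {W : Type*} [DecidableEq W] [AddCommGroup W] [Fintype W]
variable [Module (ZMod k) W]

lemma zmod_closed {T : Finset (ZMod k)} (h : cc 1 T = 0) : T = ∅ ∨ T = Finset.univ := by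
  rcases T.eq_empty_or_nonempty with he | hne
  · exact Or.inl he
  · right
    by_contra hc
    have := zmod_exit hne hc
    omega

lemma mem_fib_shift (h : W) {A : Finset (W × ZMod k)} {x : W} {t : ZMod k} :
    (x, t) ∈ A ↔ t ∈ fib h A (x - t • h) := by
  rw [mem_fib]
  have : x - t • h + t • h = x := by abel
  rw [this]

lemma claimX_core (hk : 3 ≤ k) (h δ : W)
    (hε : ∀ c : ZMod k, c ≠ 0 → c • (δ - h) ≠ 0)
    (A : Finset (W × ZMod k)) (B : Finset W) (hBcard : B.card ≤ 2)
    (hB : ∀ x t, (x, t) ∈ A → x - t • h ∈ B)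
    (w₀ : W) (hw₀ : fib h A w₀ = Finset.univ) :
    3 ≤ cc (δ, (1 : ZMod k)) A := by
  have hεneg : ∀ c : ZMod k, c ≠ 0 → c • (h - δ) ≠ 0 := by
    intro c hc hz
    apply hε c hc
    have : (δ - h) = -(h - δ) := by abel
    rw [this, smul_neg, hz, neg_zero]
  have hεinj : ∀ c c' : ZMod k, c • (h - δ) = c' • (h - δ) → c = c' :=
    fun c c' hcc' => smul_inj hεneg hcc'
  have h1 : (1 : ZMod k) ≠ 0 := by
    have : ((1 : ℕ) : ZMod k) ≠ 0 := by
      rw [Ne, ZMod.natCast_eq_zero_iff]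
      exact fun hd => by have := Nat.le_of_dvd one_pos hd; omega
    simpa using this
  have h2 : (2 : ZMod k) ≠ 0 := by
    have : ((2 : ℕ) : ZMod k) ≠ 0 := by
      rw [Ne, ZMod.natCast_eq_zero_iff]
      exact fun hd => by have := Nat.le_of_dvd two_pos hd; omega
    simpa using this
  have h21 : (2 : ZMod k) ≠ 1 := by
    intro hc
    apply h1
    calc (1 : ZMod k) = 2 - 1 := by ring
    _ = 0 := by rw [hc]; ring
  have h012 : ({0, 1, 2} : Finset (ZMod k)).card = 3 := by
    have hne01 : (0 : ZMod k) ∉ ({1, 2} : Finset (ZMod k)) := by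
      simp only [Finset.mem_insert, Finset.mem_singleton]
      push_neg
      exact ⟨fun hc => h1 hc.symm, fun hc => h2 hc.symm⟩
    have hne12 : (1 : ZMod k) ∉ ({2} : Finset (ZMod k)) := by
      simp only [Finset.mem_singleton]
      exact fun hc => h21 hc.symm
    rw [Finset.card_insert_of_notMem hne01, Finset.card_insert_of_notMem hne12,
        Finset.card_singleton]
  set Ws := ({0, 1, 2} : Finset (ZMod k)).image (fun c : ZMod k => w₀ + c • (h - δ)) with hWs
  have hWscard : Ws.card = 3 := by
    rw [hWs, Finset.card_image_of_injOn, h012]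
    intro c _ c' _ hcc'
    simp only [add_right_inj] at hcc'
    exact hεinj _ _ hcc'
  rw [← hWscard]
  apply cc_diag_ge
  intro w hw
  obtain ⟨c, _, rfl⟩ := Finset.mem_image.1 hw
  constructor
  · refine ⟨c, ?_⟩
    have halg : w₀ + c • (h - δ) + c • δ = w₀ + c • h := by
      module
    rw [halg]
    have : c ∈ fib h A w₀ := hw₀ ▸ Finset.mem_univ _
    rwa [mem_fib] at this
  · by_contra hcon
    push_neg at hcon
    have himg : ∀ t : ZMod k, w₀ + (c - t) • (h - δ) ∈ B := by
      intro t
      have hmem := hB _ _ (hcon t)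
      have halg : w₀ + c • (h - δ) + t • δ - t • h = w₀ + (c - t) • (h - δ) := by
        module
      rwa [halg] at hmem
    have hsub : Finset.univ.image (fun t : ZMod k => w₀ + (c - t) • (h - δ)) ⊆ B := by
      intro x hx
      obtain ⟨t, _, rfl⟩ := Finset.mem_image.1 hx
      exact himg t
    have hcard : (Finset.univ.image (fun t : ZMod k => w₀ + (c - t) • (h - δ))).card = k := by
      rw [Finset.card_image_of_injOn, Finset.card_univ, ZMod.card]
      intro t _ t' _ htt'
      simp only [add_right_inj] at htt'
      exact sub_right_injective (hεinj _ _ htt')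
    have := Finset.card_le_card hsub
    rw [hcard] at this
    omega

lemma claimX (hk : 3 ≤ k) (h δ : W)
    (hε : ∀ c : ZMod k, c ≠ 0 → c • (δ - h) ≠ 0)
    (A : Finset (W × ZMod k))
    (hlay : ∀ t : ZMod k, (layer A t).Nonempty ∧ (layer A t).card ≤ 2)
    (hcc : cc (h, (1 : ZMod k)) A ≤ 1) :
    3 ≤ cc (δ, (1 : ZMod k)) A := by
  classical
  have hsum : ∑ w, cc 1 (fib h A w) ≤ 1 := by
    rw [← cc_fiber]; exact hcc
  by_cases hex : ∃ w₁, cc 1 (fib h A w₁) ≠ 0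
  · obtain ⟨w₁, hw₁⟩ := hex
    have hw₁0 : ∀ w, w ≠ w₁ → cc 1 (fib h A w) = 0 := by
      intro w hne
      have hle : ∑ x ∈ ({w, w₁} : Finset W), cc 1 (fib h A x) ≤ 1 :=
        le_trans (Finset.sum_le_sum_of_subset (Finset.subset_univ _)) hsum
      rw [Finset.sum_pair hne] at hle
      omega
    have hfw₁ : fib h A w₁ ≠ Finset.univ := by
      intro hc
      apply hw₁
      rw [hc]
      apply cc_eq_zero_iff.2
      intro x _
      exact Finset.mem_univ _
    have hfw₁ne : (fib h A w₁).Nonempty := by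
      rcases (fib h A w₁).eq_empty_or_nonempty with he | hne
      · exfalso; apply hw₁; rw [he]; simp [cc]
      · exact hne
    set Bfull := Finset.univ.filter (fun w => fib h A w = Finset.univ) with hBf
    set B := insert w₁ Bfull with hBdef
    have hB : ∀ x t, (x, t) ∈ A → x - t • h ∈ B := by
      intro x t hxt
      by_cases hxe : x - t • h = w₁
      · rw [hxe]; exact Finset.mem_insert_self _ _
      · have h0 := hw₁0 _ hxe
        rcases zmod_closed h0 with he | hu
        · exfalso
          have := (mem_fib_shift h).1 hxt
          rw [he] at this
          exact absurd this (Finset.notMem_empty _)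
        · exact Finset.mem_insert_of_mem (Finset.mem_filter.2 ⟨Finset.mem_univ _, hu⟩)
    -- card bound via a layer t₁ ∈ fib w₁
    obtain ⟨t₁, ht₁⟩ := hfw₁ne
    have hBcard : B.card ≤ 2 := by
      have hmaps : ∀ w ∈ B, w + t₁ • h ∈ layer A t₁ := by
        intro w hwB
        rcases Finset.mem_insert.1 hwB with rfl | hwf
        · exact mem_layer.2 (mem_fib.1 ht₁)
        · have : fib h A w = Finset.univ := (Finset.mem_filter.1 hwf).2
          exact mem_layer.2 (mem_fib.1 (this ▸ Finset.mem_univ t₁))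
      have hinj : Set.InjOn (fun w : W => w + t₁ • h) ↑B := by
        intro a _ b _ hab
        simpa using hab
      calc B.card ≤ (layer A t₁).card := Finset.card_le_card_of_injOn _ hmaps hinj
      _ ≤ 2 := (hlay t₁).2
    -- w₀ : a full fiber
    obtain ⟨t₀, ht₀⟩ : ∃ t₀, t₀ ∉ fib h A w₁ := by
      by_contra hcon
      push_neg at hcon
      exact hfw₁ (Finset.eq_univ_iff_forall.2 hcon)
    obtain ⟨x₀, hx₀⟩ := (hlay t₀).1
    have hx₀A : (x₀, t₀) ∈ A := mem_layer.1 hx₀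
    have hne₁ : x₀ - t₀ • h ≠ w₁ := by
      intro hc
      apply ht₀
      rw [← hc]
      exact (mem_fib_shift h).1 hx₀A
    have hw₀full : fib h A (x₀ - t₀ • h) = Finset.univ := by
      rcases zmod_closed (hw₁0 _ hne₁) with he | hu
      · exfalso
        have := (mem_fib_shift h).1 hx₀A
        rw [he] at this
        exact absurd this (Finset.notMem_empty _)
      · exact hu
    exact claimX_core hk h δ hε A B hBcard hB _ hw₀full
  · push_neg at hex
    set Bfull := Finset.univ.filter (fun w => fib h A w = Finset.univ) with hBf
    have hB : ∀ x t, (x, t) ∈ A → x - t • h ∈ Bfull := by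
      intro x t hxt
      rcases zmod_closed (hex (x - t • h)) with he | hu
      · exfalso
        have := (mem_fib_shift h).1 hxt
        rw [he] at this
        exact absurd this (Finset.notMem_empty _)
      · exact Finset.mem_filter.2 ⟨Finset.mem_univ _, hu⟩
    have hBcard : Bfull.card ≤ 2 := by
      have hmaps : ∀ w ∈ Bfull, w + (0 : ZMod k) • h ∈ layer A 0 := by
        intro w hwf
        have : fib h A w = Finset.univ := (Finset.mem_filter.1 hwf).2
        exact mem_layer.2 (mem_fib.1 (this ▸ Finset.mem_univ 0))
      have hinj : Set.InjOn (fun w : W => w + (0 : ZMod k) • h) ↑Bfull := by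
        intro a _ b _ hab
        simpa using hab
      calc Bfull.card ≤ (layer A 0).card := Finset.card_le_card_of_injOn _ hmaps hinj
      _ ≤ 2 := (hlay 0).2
    obtain ⟨x₀, hx₀⟩ := (hlay 0).1
    have hx₀A : (x₀, (0 : ZMod k)) ∈ A := mem_layer.1 hx₀
    have hw₀full : fib h A (x₀ - (0 : ZMod k) • h) = Finset.univ := by
      rcases zmod_closed (hex (x₀ - (0 : ZMod k) • h)) with he | hu
      · exfalso
        have := (mem_fib_shift h).1 hx₀A
        rw [he] at this
        exact absurd this (Finset.notMem_empty _)
      · exact hu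
    exact claimX_core hk h δ hε A Bfull hBcard hB _ hw₀full

lemma helper_base (h δ : W) (A : Finset (W × ZMod k))
    (hgen : ∀ x y : W, ∃ m : ℕ, y = x + m • (δ - h))
    (hlay : ∀ t : ZMod k, (layer A t).Nonempty ∧ layer A t ≠ Finset.univ)
    (hcc : cc (h, (1 : ZMod k)) A = 0) :
    Fintype.card W ≤ cc (δ, (1 : ZMod k)) A := by
  classical
  have hsum : ∑ w, cc 1 (fib h A w) = 0 := by
    rw [← cc_fiber]; exact hcc
  have hall : ∀ w, cc 1 (fib h A w) = 0 := by
    intro w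
    have := Finset.sum_eq_zero_iff.1 hsum
    exact this w (Finset.mem_univ _)
  set Bfull := Finset.univ.filter (fun w => fib h A w = Finset.univ) with hBf
  have hmemB : ∀ x t, ((x, t) ∈ A ↔ x - t • h ∈ Bfull) := by
    intro x t
    constructor
    · intro hxt
      rcases zmod_closed (hall (x - t • h)) with he | hu
      · exfalso
        have := (mem_fib_shift h).1 hxt
        rw [he] at this
        exact absurd this (Finset.notMem_empty _)
      · exact Finset.mem_filter.2 ⟨Finset.mem_univ _, hu⟩
    · intro hB
      have : fib h A (x - t • h) = Finset.univ := (Finset.mem_filter.1 hB).2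
      exact (mem_fib_shift h).2 (this ▸ Finset.mem_univ t)
  have hBne : Bfull.Nonempty := by
    obtain ⟨x₀, hx₀⟩ := (hlay 0).1
    exact ⟨x₀ - (0 : ZMod k) • h, (hmemB _ _).1 (mem_layer.1 hx₀)⟩
  have hBproper : ∃ y, y ∉ Bfull := by
    have : layer A 0 ≠ Finset.univ := (hlay 0).2
    obtain ⟨x₁, hx₁⟩ : ∃ x, x ∉ layer A 0 := by
      by_contra hcon
      push_neg at hcon
      exact this (Finset.eq_univ_iff_forall.2 hcon)
    refine ⟨x₁ - (0 : ZMod k) • h, fun hc => hx₁ ?_⟩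
    exact mem_layer.2 ((hmemB _ _).2 hc)
  -- now every δ-fiber is proper and nonempty
  rw [cc_fiber]
  have hfibs : ∀ w, 1 ≤ cc 1 (fib δ A w) := by
    intro w
    have hchar : ∀ t : ZMod k, t ∈ fib δ A w ↔ w + t • (δ - h) ∈ Bfull := by
      intro t
      rw [mem_fib]
      rw [hmemB]
      have halg : w + t • δ - t • h = w + t • (δ - h) := by
        rw [smul_sub]; abel
      rw [halg]
    obtain ⟨b, hb⟩ := hBne
    obtain ⟨b', hb'⟩ := hBproper
    obtain ⟨m, hm⟩ := hgen w b
    obtain ⟨m', hm'⟩ := hgen w b'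
    have hne : (fib δ A w).Nonempty := by
      refine ⟨(m : ZMod k), (hchar _).2 ?_⟩
      rw [Nat.cast_smul_eq_nsmul, ← hm]
      exact hb
    have hproper : fib δ A w ≠ Finset.univ := by
      intro hc
      apply hb'
      have : (m' : ZMod k) ∈ fib δ A w := hc ▸ Finset.mem_univ _
      have := (hchar _).1 this
      rwa [Nat.cast_smul_eq_nsmul, ← hm'] at this
    exact zmod_exit hne hproper
  calc Fintype.card W = ∑ _w : W, 1 := by simp
  _ ≤ ∑ w, cc 1 (fib δ A w) := Finset.sum_le_sum (fun w _ => hfibs w)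

end AQaux

namespace AQaux

variable {k : ℕ} [NeZero k] {W : Type*} [DecidableEq W] [AddCommGroup W] [Fintype W]
variable [Module (ZMod k) W]

lemma compl_nonempty_of_ne_univ {B : Finset W} (h : B ≠ Finset.univ) : Bᶜ.Nonempty := by
  rw [Finset.nonempty_iff_ne_empty]
  intro hc
  exact h (by simpa using congrArg compl hc)

lemma exists_not_mem_of_ne_univ {B : Finset W} (h : B ≠ Finset.univ) : ∃ y, y ∉ B := by
  obtain ⟨y, hy⟩ := compl_nonempty_of_ne_univ h
  exact ⟨y, Finset.mem_compl.1 hy⟩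

/-- transporting the main quantity through complements -/
lemma lhs_compl (u : W) (f : Finset W → ℕ) (hfc : ∀ B, f Bᶜ = f B)
    (A : Finset (W × ZMod k)) :
    (∑ t, f (layer Aᶜ t)) + cc ((0 : W), (1 : ZMod k)) Aᶜ + cc (u, (1 : ZMod k)) Aᶜ
      = (∑ t, f (layer A t)) + cc ((0 : W), (1 : ZMod k)) A + cc (u, (1 : ZMod k)) A := by
  rw [cc_compl, cc_compl]
  congr 2
  refine Finset.sum_congr rfl fun t _ => ?_
  rw [layer_compl, hfc]

lemma prod_L1 (u : W) {A : Finset (W × ZMod k)}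
    (hful : ∃ s, layer A s = Finset.univ) (hemp : ∃ e, layer A e = ∅) :
    2 * Fintype.card W ≤ cc ((0 : W), (1 : ZMod k)) A + cc (u, (1 : ZMod k)) A := by
  obtain ⟨s, hs⟩ := hful
  obtain ⟨e, he⟩ := hemp
  have h0 := cc_ge_compl_layer (0 : W) hs e
  have h1 := cc_ge_compl_layer u hs e
  rw [he, Finset.compl_empty, Finset.card_univ] at h0 h1
  omega

lemma sum_layers_ge (f : Finset W → ℕ) (c : ℕ) {A : Finset (W × ZMod k)}
    (h : ∀ t, c ≤ f (layer A t)) : Fintype.card (ZMod k) * c ≤ ∑ t, f (layer A t) := by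
  calc Fintype.card (ZMod k) * c = ∑ _t : ZMod k, c := by
        rw [Finset.sum_const, Finset.card_univ, smul_eq_mul]
  _ ≤ ∑ t, f (layer A t) := Finset.sum_le_sum fun t _ => h t

lemma claimX_pair (hk : 3 ≤ k) (u : W) (hu : ∀ c : ZMod k, c ≠ 0 → c • u ≠ 0)
    {A : Finset (W × ZMod k)}
    (hlay : ∀ t : ZMod k, (layer A t).Nonempty ∧ (layer A t).card ≤ 2) :
    3 ≤ cc ((0 : W), (1 : ZMod k)) A + cc (u, (1 : ZMod k)) A := by
  have hε1 : ∀ c : ZMod k, c ≠ 0 → c • (u - 0) ≠ 0 := by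
    intro c hc; rw [sub_zero]; exact hu c hc
  have hε2 : ∀ c : ZMod k, c ≠ 0 → c • ((0 : W) - u) ≠ 0 := by
    intro c hc hz
    apply hu c hc
    rw [zero_sub, smul_neg] at hz
    simpa using congrArg Neg.neg hz
  by_cases hcv : cc ((0 : W), (1 : ZMod k)) A ≤ 1
  · have := claimX hk (0 : W) u hε1 A hlay hcv
    omega
  · by_cases hcd : cc (u, (1 : ZMod k)) A ≤ 1
    · have := claimX hk u (0 : W) hε2 A hlay hcd
      omega
    · omega

/-- The `U1` statement at product level. -/
lemma u1_TF (q : ℕ) (hq : 1 ≤ q) (u : W)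
    (f : Finset W → ℕ)
    (hf1 : ∀ B : Finset W, B.Nonempty → B ≠ Finset.univ → 2 * q - 1 ≤ f B)
    {A : Finset (W × ZMod k)}
    (hful : ∃ s, layer A s = Finset.univ)
    (hnoe : ∀ t, (layer A t).Nonempty)
    (hpart : ∃ p, layer A p ≠ Finset.univ) :
    2 * q + 1 ≤ (∑ t, f (layer A t)) + cc ((0 : W), (1 : ZMod k)) A + cc (u, (1 : ZMod k)) A := by
  obtain ⟨s, hs⟩ := hful
  obtain ⟨p, hp⟩ := hpart
  have hfp : 2 * q - 1 ≤ f (layer A p) := hf1 _ (hnoe p) hp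
  have hsum : f (layer A p) ≤ ∑ t, f (layer A t) :=
    Finset.single_le_sum (f := fun t => f (layer A t)) (fun t _ => Nat.zero_le _)
      (Finset.mem_univ p)
  have hcompl : 1 ≤ ((layer A p)ᶜ).card := Finset.card_pos.2 (compl_nonempty_of_ne_univ hp)
  have h0 := cc_ge_compl_layer (0 : W) hs p
  have h1 := cc_ge_compl_layer u hs p
  omega

lemma u1_prod (q : ℕ) (hq : 1 ≤ q) (hk : 3 ≤ k) (u : W)
    (hN : 2 * q + 1 ≤ Fintype.card W)
    (f : Finset W → ℕ) (hfc : ∀ B, f Bᶜ = f B)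
    (hf1 : ∀ B : Finset W, B.Nonempty → B ≠ Finset.univ → 2 * q - 1 ≤ f B)
    (A : Finset (W × ZMod k)) (hne : A.Nonempty) (hproper : A ≠ Finset.univ) :
    2 * q + 1 ≤ (∑ t, f (layer A t)) + cc ((0 : W), (1 : ZMod k)) A + cc (u, (1 : ZMod k)) A := by
  have hlayne : ∃ t, (layer A t).Nonempty := by
    obtain ⟨⟨x, t⟩, hx⟩ := hne
    exact ⟨t, ⟨x, mem_layer.2 hx⟩⟩
  have hlaypr : ∃ t, layer A t ≠ Finset.univ := by
    obtain ⟨⟨x, t⟩, hx⟩ := compl_nonempty_of_ne_univ (W := W × ZMod k) hproper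
    rw [Finset.mem_compl] at hx
    exact ⟨t, fun hc => hx (mem_layer.1 (hc ▸ Finset.mem_univ x))⟩
  by_cases hful : ∃ s, layer A s = Finset.univ
  · by_cases hemp : ∃ e, layer A e = ∅
    · have := prod_L1 u hful hemp
      omega
    · push_neg at hemp
      have hnoe : ∀ t, (layer A t).Nonempty := by
        intro t
        rcases (layer A t).eq_empty_or_nonempty with he | h
        · exact absurd he (Finset.nonempty_iff_ne_empty.1 (hemp t))
        · exact h
      exact u1_TF q hq u f hf1 hful hnoe hlaypr
  · by_cases hemp : ∃ e, layer A e = ∅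
    · -- complement
      rw [← lhs_compl u f hfc A]
      apply u1_TF q hq u f hf1
      · obtain ⟨e, he⟩ := hemp
        exact ⟨e, by rw [layer_compl, he, Finset.compl_empty]⟩
      · intro t
        rw [layer_compl]
        apply compl_nonempty_of_ne_univ
        exact fun hc => hful ⟨t, hc⟩
      · obtain ⟨t, ht⟩ := hlayne
        refine ⟨t, ?_⟩
        rw [layer_compl]
        intro hc
        obtain ⟨x, hx⟩ := ht
        have := hc ▸ Finset.mem_univ x
        exact (Finset.mem_compl.1 this) hx
    · -- all layers partial
      push_neg at hemp
      have hall : ∀ t, 2 * q - 1 ≤ f (layer A t) := by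
        intro t
        apply hf1
        · rcases (layer A t).eq_empty_or_nonempty with he | h
          · exact absurd he (Finset.nonempty_iff_ne_empty.1 (hemp t))
          · exact h
        · exact fun hc => hful ⟨t, hc⟩
      have := sum_layers_ge f (2 * q - 1) hall
      rw [ZMod.card] at this
      have hk3 : 3 * (2 * q - 1) ≤ k * (2 * q - 1) := Nat.mul_le_mul_right _ hk
      omega

end AQaux

namespace AQaux

variable {k : ℕ} [NeZero k] {W : Type*} [DecidableEq W] [AddCommGroup W] [Fintype W]
variable [Module (ZMod k) W]

lemma sum_compl_layers (A : Finset (W × ZMod k)) :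
    ∑ t, ((layer A t)ᶜ).card = Aᶜ.card := by
  rw [← sum_card_layers Aᶜ]
  exact Finset.sum_congr rfl fun t _ => by rw [layer_compl]

/-- Case: every layer nonempty and some layer full (for the main bound, `q ≥ 2`). -/
lemma step_L2 (q : ℕ) (hq : 2 ≤ q) (hk : 3 ≤ k) (u : W)
    (hu : ∀ c : ZMod k, c ≠ 0 → c • u ≠ 0)
    (hN : 3 * q + 2 ≤ Fintype.card W)
    (f : Finset W → ℕ) (hfc : ∀ B, f Bᶜ = f B)
    (hf1 : ∀ B : Finset W, B.Nonempty → B ≠ Finset.univ → 2 * q - 1 ≤ f B)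
    (hf2 : ∀ B : Finset W, B.card = 2 → 4 * q - 3 ≤ f B)
    (hfK : ∀ B : Finset W, 3 ≤ B.card → 3 ≤ Bᶜ.card → 6 * q - 6 ≤ f B)
    (A : Finset (W × ZMod k))
    (hful : ∃ s, layer A s = Finset.univ)
    (hnoe : ∀ t, (layer A t).Nonempty)
    (hA3' : 3 ≤ Aᶜ.card) :
    6 * q ≤ (∑ t, f (layer A t)) + cc ((0 : W), (1 : ZMod k)) A + cc (u, (1 : ZMod k)) A := by
  obtain ⟨s, hs⟩ := hful
  by_cases hbig : ∃ t, 3 ≤ ((layer A t)ᶜ).card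
  · obtain ⟨t, ht⟩ := hbig
    have h0 := cc_ge_compl_layer (0 : W) hs t
    have h1 := cc_ge_compl_layer u hs t
    by_cases hsz : 3 ≤ (layer A t).card
    · have hft : 6 * q - 6 ≤ f (layer A t) := hfK _ hsz ht
      have hsum : f (layer A t) ≤ ∑ r, f (layer A r) :=
        Finset.single_le_sum (f := fun r => f (layer A r)) (fun r _ => Nat.zero_le _)
          (Finset.mem_univ t)
      omega
    · -- tiny layer: compl has ≥ cardW - 2 ≥ 3q elements
      push_neg at hsz
      have hcompl : ((layer A t)ᶜ).card = Fintype.card W - (layer A t).card :=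
        Finset.card_compl _
      omega
  · push_neg at hbig
    -- every layer misses at most 2 points
    set P := Finset.univ.filter (fun t : ZMod k => layer A t ≠ Finset.univ) with hP
    have hmisseq : ∑ t ∈ P, ((layer A t)ᶜ).card = Aᶜ.card := by
      rw [← sum_compl_layers A]
      apply Finset.sum_subset (Finset.subset_univ _)
      intro t _ ht
      rw [hP, Finset.mem_filter] at ht
      push_neg at ht
      have : layer A t = Finset.univ := ht (Finset.mem_univ t)
      rw [this, Finset.compl_univ, Finset.card_empty]
    have hmissle : ∀ t ∈ P, ((layer A t)ᶜ).card ≤ 2 := fun t _ => by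
      have := hbig t; omega
    have hmissge : ∀ t ∈ P, 1 ≤ ((layer A t)ᶜ).card := by
      intro t ht
      rw [hP, Finset.mem_filter] at ht
      exact Finset.card_pos.2 (compl_nonempty_of_ne_univ ht.2)
    have hPcard2 : 2 ≤ P.card := by
      by_contra hc
      push_neg at hc
      have hle : P.card ≤ 1 := by omega
      rcases Nat.le_one_iff_eq_zero_or_eq_one.1 hle with h0 | h1
      · rw [Finset.card_eq_zero] at h0
        rw [h0, Finset.sum_empty] at hmisseq
        omega
      · obtain ⟨t, hPt⟩ := Finset.card_eq_one.1 h1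
        rw [hPt, Finset.sum_singleton] at hmisseq
        have := hmissle t (by rw [hPt]; exact Finset.mem_singleton_self t)
        omega
    by_cases h2 : ∃ t ∈ P, ((layer A t)ᶜ).card = 2
    · obtain ⟨t₁, ht₁P, ht₁⟩ := h2
      have hft₁ : 4 * q - 3 ≤ f (layer A t₁) := by
        rw [← hfc]
        exact hf2 _ ht₁
      obtain ⟨t₂, ht₂P, ht₂ne⟩ := Finset.exists_mem_ne (s := P) (by omega) t₁
      have ht₂pr : layer A t₂ ≠ Finset.univ := (Finset.mem_filter.1 ht₂P).2
      have hft₂ : 2 * q - 1 ≤ f (layer A t₂) := hf1 _ (hnoe t₂) ht₂pr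
      have hsum : f (layer A t₁) + f (layer A t₂) ≤ ∑ r, f (layer A r) := by
        have hle : ∑ r ∈ ({t₁, t₂} : Finset (ZMod k)), f (layer A r) ≤ ∑ r, f (layer A r) :=
          Finset.sum_le_sum_of_subset (Finset.subset_univ _)
        rwa [Finset.sum_pair (Ne.symm ht₂ne)] at hle
      have h0 := cc_ge_compl_layer (0 : W) hs t₁
      have h1 := cc_ge_compl_layer u hs t₁
      omega
    · push_neg at h2
      have hmiss1 : ∀ t ∈ P, ((layer A t)ᶜ).card = 1 := by
        intro t ht
        have := hmissle t ht
        have := hmissge t ht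
        have := h2 t ht
        omega
      have hPeq : P.card = Aᶜ.card := by
        rw [← hmisseq]
        rw [Finset.card_eq_sum_ones]
        exact Finset.sum_congr rfl fun t ht => (hmiss1 t ht).symm
      have hsum3 : 3 * (2 * q - 1) ≤ ∑ r, f (layer A r) := by
        have h1 : ∀ t ∈ P, 2 * q - 1 ≤ f (layer A t) := by
          intro t ht
          exact hf1 _ (hnoe t) ((Finset.mem_filter.1 ht).2)
        calc 3 * (2 * q - 1) ≤ P.card * (2 * q - 1) := by
              have : 3 ≤ P.card := by omega
              exact Nat.mul_le_mul_right _ this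
        _ = ∑ _t ∈ P, (2 * q - 1) := by rw [Finset.sum_const, smul_eq_mul]
        _ ≤ ∑ t ∈ P, f (layer A t) := Finset.sum_le_sum h1
        _ ≤ ∑ r, f (layer A r) := Finset.sum_le_sum_of_subset (Finset.subset_univ _)
      -- get two distinct elements of P
      obtain ⟨t₁, ht₁P⟩ : P.Nonempty := Finset.card_pos.1 (by omega)
      obtain ⟨t₂, ht₂P, ht₂ne⟩ := Finset.exists_mem_ne (s := P) (by omega) t₁
      obtain ⟨m₁, hm₁⟩ := compl_nonempty_of_ne_univ ((Finset.mem_filter.1 ht₁P).2)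
      obtain ⟨m₂, hm₂⟩ := compl_nonempty_of_ne_univ ((Finset.mem_filter.1 ht₂P).2)
      have hvd := vd_ge_three hu hs (Ne.symm ht₂ne) (Finset.mem_compl.1 hm₁) (Finset.mem_compl.1 hm₂)
      omega

/-- Case: all layers partial and small (for the main bound). -/
lemma step_L4_small (q : ℕ) (hq : 2 ≤ q) (hk : 3 ≤ k) (u : W)
    (hu : ∀ c : ZMod k, c ≠ 0 → c • u ≠ 0)
    (f : Finset W → ℕ)
    (hf1 : ∀ B : Finset W, B.Nonempty → B ≠ Finset.univ → 2 * q - 1 ≤ f B)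
    (A : Finset (W × ZMod k))
    (hpart : ∀ t, (layer A t).Nonempty ∧ layer A t ≠ Finset.univ)
    (hsm : ∀ t, (layer A t).card ≤ 2) :
    6 * q ≤ (∑ t, f (layer A t)) + cc ((0 : W), (1 : ZMod k)) A + cc (u, (1 : ZMod k)) A := by
  have hsum : k * (2 * q - 1) ≤ ∑ t, f (layer A t) := by
    have := sum_layers_ge f (2 * q - 1) (fun t => hf1 _ (hpart t).1 (hpart t).2)
    rwa [ZMod.card] at this
  have hvd := claimX_pair hk u hu (A := A) (fun t => ⟨(hpart t).1, hsm t⟩)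
  have hk3 : 3 * (2 * q - 1) ≤ k * (2 * q - 1) := Nat.mul_le_mul_right _ hk
  omega

lemma step_L4 (q : ℕ) (hq : 2 ≤ q) (hk : 3 ≤ k) (u : W)
    (hu : ∀ c : ZMod k, c ≠ 0 → c • u ≠ 0)
    (hN : 3 * q + 2 ≤ Fintype.card W)
    (f : Finset W → ℕ) (hfc : ∀ B, f Bᶜ = f B)
    (hf1 : ∀ B : Finset W, B.Nonempty → B ≠ Finset.univ → 2 * q - 1 ≤ f B)
    (hfK : ∀ B : Finset W, 3 ≤ B.card → 3 ≤ Bᶜ.card → 6 * q - 6 ≤ f B)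
    (A : Finset (W × ZMod k))
    (hpart : ∀ t, (layer A t).Nonempty ∧ layer A t ≠ Finset.univ) :
    6 * q ≤ (∑ t, f (layer A t)) + cc ((0 : W), (1 : ZMod k)) A + cc (u, (1 : ZMod k)) A := by
  by_cases hmid : ∃ t, 3 ≤ (layer A t).card ∧ 3 ≤ ((layer A t)ᶜ).card
  · obtain ⟨t, ht1, ht2⟩ := hmid
    have hft : 6 * q - 6 ≤ f (layer A t) := hfK _ ht1 ht2
    have herase : ∑ r, f (layer A r) = f (layer A t) + ∑ r ∈ Finset.univ.erase t, f (layer A r) :=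
      (Finset.add_sum_erase _ _ (Finset.mem_univ t)).symm
    have hrest : (k - 1) * (2 * q - 1) ≤ ∑ r ∈ Finset.univ.erase t, f (layer A r) := by
      calc (k - 1) * (2 * q - 1) = (Finset.univ.erase t).card * (2 * q - 1) := by
            rw [Finset.card_erase_of_mem (Finset.mem_univ t), Finset.card_univ, ZMod.card]
      _ = ∑ _r ∈ Finset.univ.erase t, (2 * q - 1) := by rw [Finset.sum_const, smul_eq_mul]
      _ ≤ _ := Finset.sum_le_sum fun r _ => hf1 _ (hpart r).1 (hpart r).2
    have hk1 : 2 * (2 * q - 1) ≤ (k - 1) * (2 * q - 1) :=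
      Nat.mul_le_mul_right _ (by omega)
    omega
  · push_neg at hmid
    have hdich : ∀ t, (layer A t).card ≤ 2 ∨ ((layer A t)ᶜ).card ≤ 2 := by
      intro t
      by_cases h : 3 ≤ (layer A t).card
      · right; have := hmid t h; omega
      · left; omega
    by_cases hsmall : ∃ t, 3 ≤ ((layer A t)ᶜ).card
    · -- that layer is small; check if some layer is big
      by_cases hbigex : ∃ r, ((layer A r)ᶜ).card ≤ 2
      · -- mixed: big layer r, small layer t
        obtain ⟨t, ht⟩ := hsmall
        obtain ⟨r, hr⟩ := hbigex
        have htsm : (layer A t).card ≤ 2 := by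
          rcases hdich t with h | h
          · exact h
          · omega
        have hrcard : Fintype.card W - 2 ≤ (layer A r).card := by
          have := Finset.card_compl (layer A r)
          have := Finset.card_le_univ (layer A r)
          omega
        have hsd : (layer A r).card - (layer A t).card ≤ ((layer A r) \ (layer A t)).card := by
          have h1 := Finset.card_sdiff_add_card_inter (layer A r) (layer A t)
          have h2 : ((layer A r) ∩ (layer A t)).card ≤ (layer A t).card :=
            Finset.card_le_card (Finset.inter_subset_right)
          omega
        have hcv := cc_v_ge_sdiff (A := A) r t
        have hsum : k * (2 * q - 1) ≤ ∑ t, f (layer A t) := by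
          have := sum_layers_ge f (2 * q - 1) (fun t => hf1 _ (hpart t).1 (hpart t).2)
          rwa [ZMod.card] at this
        have hk3 : 3 * (2 * q - 1) ≤ k * (2 * q - 1) := Nat.mul_le_mul_right _ hk
        omega
      · -- all layers small
        push_neg at hbigex
        apply step_L4_small q hq hk u hu f hf1 A hpart
        intro t
        rcases hdich t with h | h
        · exact h
        · have := hbigex t; omega
    · -- all layers big: complement
      push_neg at hsmall
      rw [← lhs_compl u f hfc A]
      apply step_L4_small q hq hk u hu f hf1
      · intro t
        rw [layer_compl]
        refine ⟨compl_nonempty_of_ne_univ (hpart t).2, fun hc => ?_⟩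
        have : layer A t = ∅ := by simpa using congrArg compl hc
        exact (hpart t).1.ne_empty this
      · intro t
        rw [layer_compl, Finset.card_compl]
        have h1 := hsmall t
        have h2 := Finset.card_compl (layer A t)
        omega
  
end AQaux

namespace AQaux

variable {k : ℕ} [NeZero k] {W : Type*} [DecidableEq W] [AddCommGroup W] [Fintype W]
variable [Module (ZMod k) W]

lemma step_bound (q : ℕ) (hq : 2 ≤ q) (hk : 3 ≤ k) (u : W)
    (hu : ∀ c : ZMod k, c ≠ 0 → c • u ≠ 0)
    (hN : 3 * q + 2 ≤ Fintype.card W)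
    (f : Finset W → ℕ) (hfc : ∀ B, f Bᶜ = f B)
    (hf1 : ∀ B : Finset W, B.Nonempty → B ≠ Finset.univ → 2 * q - 1 ≤ f B)
    (hf2 : ∀ B : Finset W, B.card = 2 → 4 * q - 3 ≤ f B)
    (hfK : ∀ B : Finset W, 3 ≤ B.card → 3 ≤ Bᶜ.card → 6 * q - 6 ≤ f B)
    (A : Finset (W × ZMod k)) (hA3 : 3 ≤ A.card) (hA3' : 3 ≤ Aᶜ.card) :
    6 * q ≤ (∑ t, f (layer A t)) + cc ((0 : W), (1 : ZMod k)) A + cc (u, (1 : ZMod k)) A := by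
  by_cases hful : ∃ s, layer A s = Finset.univ
  · by_cases hemp : ∃ e, layer A e = ∅
    · have := prod_L1 u hful hemp
      omega
    · push_neg at hemp
      have hnoe : ∀ t, (layer A t).Nonempty := by
        intro t
        rcases (layer A t).eq_empty_or_nonempty with he | h
        · exact absurd he (Finset.nonempty_iff_ne_empty.1 (hemp t))
        · exact h
      exact step_L2 q hq hk u hu hN f hfc hf1 hf2 hfK A hful hnoe hA3'
  · by_cases hemp : ∃ e, layer A e = ∅
    · rw [← lhs_compl u f hfc A]
      apply step_L2 q hq hk u hu hN f hfc hf1 hf2 hfK Aᶜ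
      · obtain ⟨e, he⟩ := hemp
        exact ⟨e, by rw [layer_compl, he, Finset.compl_empty]⟩
      · intro t
        rw [layer_compl]
        exact compl_nonempty_of_ne_univ (fun hc => hful ⟨t, hc⟩)
      · rw [compl_compl]
        exact hA3
    · push_neg at hemp
      apply step_L4 q hq hk u hu hN f hfc hf1 hfK A
      intro t
      refine ⟨?_, fun hc => hful ⟨t, hc⟩⟩
      rcases (layer A t).eq_empty_or_nonempty with he | h
      · exact absurd he (Finset.nonempty_iff_ne_empty.1 (hemp t))
      · exact h

/-- Base case at `n = 2`: layers are copies of `W ≅ ZMod k`, `f = cc u`. -/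
lemma base_L2 (hk : 3 ≤ k) (u : W)
    (hu : ∀ c : ZMod k, c ≠ 0 → c • u ≠ 0)
    (hgen : ∀ x y : W, ∃ m : ℕ, y = x + m • u)
    (A : Finset (W × ZMod k))
    (hful : ∃ s, layer A s = Finset.univ)
    (hnoe : ∀ t, (layer A t).Nonempty)
    (hA3' : 3 ≤ Aᶜ.card) :
    6 ≤ (∑ t, cc u (layer A t)) + cc ((0 : W), (1 : ZMod k)) A + cc (u, (1 : ZMod k)) A := by
  obtain ⟨s, hs⟩ := hful
  have hf1 : ∀ B : Finset W, B.Nonempty → B ≠ Finset.univ → 1 ≤ cc u B := by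
    intro B h1 h2
    exact cc_pos_of_gen hgen h1 (exists_not_mem_of_ne_univ h2)
  by_cases hbig : ∃ t, 3 ≤ ((layer A t)ᶜ).card
  · obtain ⟨t, ht⟩ := hbig
    have h0 := cc_ge_compl_layer (0 : W) hs t
    have h1 := cc_ge_compl_layer u hs t
    omega
  · push_neg at hbig
    set P := Finset.univ.filter (fun t : ZMod k => layer A t ≠ Finset.univ) with hP
    have hmisseq : ∑ t ∈ P, ((layer A t)ᶜ).card = Aᶜ.card := by
      rw [← sum_compl_layers A]
      apply Finset.sum_subset (Finset.subset_univ _)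
      intro t _ ht
      rw [hP, Finset.mem_filter] at ht
      push_neg at ht
      have : layer A t = Finset.univ := ht (Finset.mem_univ t)
      rw [this, Finset.compl_univ, Finset.card_empty]
    have hmissle : ∀ t ∈ P, ((layer A t)ᶜ).card ≤ 2 := fun t _ => by
      have := hbig t; omega
    have hmissge : ∀ t ∈ P, 1 ≤ ((layer A t)ᶜ).card := by
      intro t ht
      rw [hP, Finset.mem_filter] at ht
      exact Finset.card_pos.2 (compl_nonempty_of_ne_univ ht.2)
    have hPcard2 : 2 ≤ P.card := by
      by_contra hc
      push_neg at hc
      have hle : P.card ≤ 1 := by omega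
      rcases Nat.le_one_iff_eq_zero_or_eq_one.1 hle with h0 | h1
      · rw [Finset.card_eq_zero] at h0
        rw [h0, Finset.sum_empty] at hmisseq
        omega
      · obtain ⟨t, hPt⟩ := Finset.card_eq_one.1 h1
        rw [hPt, Finset.sum_singleton] at hmisseq
        have := hmissle t (by rw [hPt]; exact Finset.mem_singleton_self t)
        omega
    obtain ⟨t₁, ht₁P⟩ : P.Nonempty := Finset.card_pos.1 (by omega)
    obtain ⟨t₂, ht₂P, ht₂ne⟩ := Finset.exists_mem_ne (s := P) (by omega) t₁
    have hsum2 : cc u (layer A t₁) + cc u (layer A t₂) ≤ ∑ r, cc u (layer A r) := by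
      have hle : ∑ r ∈ ({t₁, t₂} : Finset (ZMod k)), cc u (layer A r) ≤ ∑ r, cc u (layer A r) :=
        Finset.sum_le_sum_of_subset (Finset.subset_univ _)
      rwa [Finset.sum_pair (Ne.symm ht₂ne)] at hle
    have hft₁ : 1 ≤ cc u (layer A t₁) := hf1 _ (hnoe t₁) ((Finset.mem_filter.1 ht₁P).2)
    have hft₂ : 1 ≤ cc u (layer A t₂) := hf1 _ (hnoe t₂) ((Finset.mem_filter.1 ht₂P).2)
    by_cases h2 : ∃ t ∈ P, ((layer A t)ᶜ).card = 2
    · obtain ⟨t, htP, ht⟩ := h2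
      have h0 := cc_ge_compl_layer (0 : W) hs t
      have h1 := cc_ge_compl_layer u hs t
      omega
    · push_neg at h2
      have hmiss1 : ∀ t ∈ P, ((layer A t)ᶜ).card = 1 := by
        intro t ht
        have := hmissle t ht
        have := hmissge t ht
        have := h2 t ht
        omega
      have hPeq : P.card = Aᶜ.card := by
        rw [← hmisseq, Finset.card_eq_sum_ones]
        exact Finset.sum_congr rfl fun t ht => (hmiss1 t ht).symm
      have hsum3 : 3 ≤ ∑ r, cc u (layer A r) := by
        have h1 : ∀ t ∈ P, 1 ≤ cc u (layer A t) := by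
          intro t ht
          exact hf1 _ (hnoe t) ((Finset.mem_filter.1 ht).2)
        calc (3 : ℕ) ≤ P.card := by omega
        _ = ∑ _t ∈ P, 1 := by rw [Finset.sum_const, smul_eq_mul, mul_one]
        _ ≤ ∑ t ∈ P, cc u (layer A t) := Finset.sum_le_sum h1
        _ ≤ ∑ r, cc u (layer A r) := Finset.sum_le_sum_of_subset (Finset.subset_univ _)
      obtain ⟨m₁, hm₁⟩ := compl_nonempty_of_ne_univ ((Finset.mem_filter.1 ht₁P).2)
      obtain ⟨m₂, hm₂⟩ := compl_nonempty_of_ne_univ ((Finset.mem_filter.1 ht₂P).2)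
      have hvd := vd_ge_three hu hs (Ne.symm ht₂ne) (Finset.mem_compl.1 hm₁) (Finset.mem_compl.1 hm₂)
      omega

lemma base_bound (hk : 3 ≤ k) (u : W)
    (hu : ∀ c : ZMod k, c ≠ 0 → c • u ≠ 0)
    (hgen : ∀ x y : W, ∃ m : ℕ, y = x + m • u)
    (hcard : Fintype.card W = k)
    (A : Finset (W × ZMod k)) (hA3 : 3 ≤ A.card) (hA3' : 3 ≤ Aᶜ.card) :
    6 ≤ (∑ t, cc u (layer A t)) + cc ((0 : W), (1 : ZMod k)) A + cc (u, (1 : ZMod k)) A := by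
  have hfc : ∀ B : Finset W, cc u Bᶜ = cc u B := fun B => cc_compl u B
  have hf1 : ∀ B : Finset W, B.Nonempty → B ≠ Finset.univ → 1 ≤ cc u B := by
    intro B h1 h2
    exact cc_pos_of_gen hgen h1 (exists_not_mem_of_ne_univ h2)
  by_cases hful : ∃ s, layer A s = Finset.univ
  · by_cases hemp : ∃ e, layer A e = ∅
    · have := prod_L1 u hful hemp
      omega
    · push_neg at hemp
      have hnoe : ∀ t, (layer A t).Nonempty := by
        intro t
        rcases (layer A t).eq_empty_or_nonempty with he | h
        · exact absurd he (Finset.nonempty_iff_ne_empty.1 (hemp t))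
        · exact h
      exact base_L2 hk u hu hgen A hful hnoe hA3'
  · by_cases hemp : ∃ e, layer A e = ∅
    · rw [← lhs_compl u (cc u) hfc A]
      apply base_L2 hk u hu hgen Aᶜ
      · obtain ⟨e, he⟩ := hemp
        exact ⟨e, by rw [layer_compl, he, Finset.compl_empty]⟩
      · intro t
        rw [layer_compl]
        exact compl_nonempty_of_ne_univ (fun hc => hful ⟨t, hc⟩)
      · rw [compl_compl]
        exact hA3
    · -- all layers partial
      push_neg at hemp
      have hpart : ∀ t, (layer A t).Nonempty ∧ layer A t ≠ Finset.univ := by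
        intro t
        refine ⟨?_, fun hc => hful ⟨t, hc⟩⟩
        rcases (layer A t).eq_empty_or_nonempty with he | h
        · exact absurd he (Finset.nonempty_iff_ne_empty.1 (hemp t))
        · exact h
      have hsumf : k ≤ ∑ t, cc u (layer A t) := by
        have := sum_layers_ge (cc u) 1 (fun t => hf1 _ (hpart t).1 (hpart t).2)
        rwa [ZMod.card, mul_one] at this
      -- negative generation
      have hgen' : ∀ x y : W, ∃ m : ℕ, y = x + m • (-u) := by
        intro x y
        obtain ⟨m, hm⟩ := hgen x y
        refine ⟨m * (k - 1), ?_⟩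
        have hku : k • u = 0 := by
          rw [← hcard]
          exact card_nsmul_eq_zero
        have hadd : (m * (k - 1)) • u + m • u = 0 := by
          rw [← add_nsmul]
          have : m * (k - 1) + m = m * k := by
            have : 1 ≤ k := by omega
            calc m * (k - 1) + m = m * (k - 1 + 1) := by ring
            _ = m * k := by rw [Nat.sub_add_cancel this]
          rw [this, mul_comm m k, mul_nsmul, hku, smul_zero]
        have : (m * (k - 1)) • u = -(m • u) := eq_neg_of_add_eq_zero_left hadd
        rw [smul_neg, this, hm]
        abel
      by_cases hcv0 : cc ((0 : W), (1 : ZMod k)) A = 0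
      · have hd : Fintype.card W ≤ cc (u, (1 : ZMod k)) A := by
          apply helper_base (0 : W) u A ?_ hpart hcv0
          intro x y
          obtain ⟨m, hm⟩ := hgen x y
          exact ⟨m, by rwa [sub_zero]⟩
        rw [hcard] at hd
        omega
      · by_cases hcd0 : cc (u, (1 : ZMod k)) A = 0
        · have hd : Fintype.card W ≤ cc ((0 : W), (1 : ZMod k)) A := by
            apply helper_base u (0 : W) A ?_ hpart hcd0
            intro x y
            obtain ⟨m, hm⟩ := hgen' x y
            exact ⟨m, by rwa [zero_sub]⟩
          rw [hcard] at hd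
          omega
        · by_cases hk4 : 4 ≤ k
          · omega
          · -- k = 3 : all layers have ≤ 2 elements
            have hk3 : k = 3 := by omega
            have hsm : ∀ t, (layer A t).card ≤ 2 := by
              intro t
              have hlt : (layer A t).card < Fintype.card W := by
                apply Finset.card_lt_card
                rw [Finset.ssubset_univ_iff]
                exact (hpart t).2
              omega
            have := claimX_pair hk u hu (A := A) (fun t => ⟨(hpart t).1, hsm t⟩)
            omega

end AQaux

namespace AQaux

lemma cc_map {V V' : Type*} [DecidableEq V] [AddCommGroup V] [DecidableEq V'] [AddCommGroup V']
    (φ : V ≃+ V') (g : V) (A : Finset V) :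
    cc (φ g) (A.map φ.toEquiv.toEmbedding) = cc g A := by
  unfold cc
  rw [Finset.filter_map, Finset.card_map]
  congr 1
  apply Finset.filter_congr
  intro a _
  have hmem : ∀ b : V, (φ b ∈ A.map φ.toEquiv.toEmbedding ↔ b ∈ A) := by
    intro b
    rw [Finset.mem_map_equiv]
    simp
  show ¬(φ a + φ g ∈ A.map φ.toEquiv.toEmbedding) ↔ ¬(a + g ∈ A)
  rw [← map_add φ a g, hmem (a + g)]

variable (k : ℕ)

def Evec (n : ℕ) (i : Fin n) : Fin n → ZMod k := fun j => if j = i then 1 else 0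

def Dvec (n : ℕ) (i : Fin n) : Fin n → ZMod k := fun j => if j ≤ i then 1 else 0

def gens (n : ℕ) : Finset (Fin n → ZMod k) :=
  (Finset.univ.image (Evec k n)) ∪
    ((Finset.univ.filter (fun i : Fin n => 1 ≤ i.val)).image (Dvec k n))

lemma mem_gens_iff {n : ℕ} {g : Fin n → ZMod k} :
    g ∈ gens k n ↔ (∃ i, g = Evec k n i) ∨ (∃ i, 1 ≤ i.val ∧ g = Dvec k n i) := by
  unfold gens
  simp only [Finset.mem_union, Finset.mem_image, Finset.mem_filter, Finset.mem_univ, true_and]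
  constructor
  · rintro (⟨i, hi⟩ | ⟨i, hi1, hi⟩)
    · exact Or.inl ⟨i, hi.symm⟩
    · exact Or.inr ⟨i, hi1, hi.symm⟩
  · rintro (⟨i, hi⟩ | ⟨i, hi1, hi⟩)
    · exact Or.inl ⟨i, hi.symm⟩
    · exact Or.inr ⟨i, hi1, hi.symm⟩

lemma gens_coord {n : ℕ} {g : Fin n → ZMod k} (hg : g ∈ gens k n) (j : Fin n) :
    g j = 0 ∨ g j = 1 := by
  rcases mem_gens_iff k |>.1 hg with ⟨i, rfl⟩ | ⟨i, _, rfl⟩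
  · unfold Evec
    by_cases h : j = i <;> simp [h]
  · unfold Dvec
    by_cases h : j ≤ i <;> simp [h]

lemma gens_coord_one {n : ℕ} {g : Fin n → ZMod k} (hg : g ∈ gens k n) :
    ∃ j, g j = 1 := by
  rcases mem_gens_iff k |>.1 hg with ⟨i, rfl⟩ | ⟨i, _, rfl⟩
  · exact ⟨i, by simp [Evec]⟩
  · exact ⟨i, by simp [Dvec]⟩

section hk
variable (hk : 3 ≤ k)
include hk

lemma one_ne_zero_zmod : (1 : ZMod k) ≠ 0 := by
  have : ((1 : ℕ) : ZMod k) ≠ 0 := by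
    rw [Ne, ZMod.natCast_eq_zero_iff]
    exact fun hd => by have := Nat.le_of_dvd one_pos hd; omega
  simpa using this

lemma two_ne_zero_zmod : (1 : ZMod k) + 1 ≠ 0 := by
  have : ((2 : ℕ) : ZMod k) ≠ 0 := by
    rw [Ne, ZMod.natCast_eq_zero_iff]
    exact fun hd => by have := Nat.le_of_dvd two_pos hd; omega
  have h2 : ((2 : ℕ) : ZMod k) = 1 + 1 := by push_cast; ring
  rwa [h2] at this

lemma gens_ne_zero {n : ℕ} {g : Fin n → ZMod k} (hg : g ∈ gens k n) : g ≠ 0 := by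
  obtain ⟨j, hj⟩ := gens_coord_one k hg
  intro hc
  rw [hc] at hj
  exact one_ne_zero_zmod k hk hj.symm

lemma gens_ne_neg {n : ℕ} {g h : Fin n → ZMod k} (hg : g ∈ gens k n) (hh : h ∈ gens k n) :
    g ≠ -h := by
  intro hc
  obtain ⟨j, hj⟩ := gens_coord_one k hg
  have h2 : g j + h j = 0 := by
    rw [hc]; simp
  rcases gens_coord k hh j with h0 | h1
  · rw [hj, h0, add_zero] at h2
    exact one_ne_zero_zmod k hk h2
  · rw [hj, h1] at h2
    exact two_ne_zero_zmod k hk h2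

lemma gens_add_self_ne_zero {n : ℕ} {g : Fin n → ZMod k} (hg : g ∈ gens k n) :
    g + g ≠ 0 := by
  intro hc
  obtain ⟨j, hj⟩ := gens_coord_one k hg
  have h2 : g j + g j = 0 := by
    rw [← Pi.add_apply, hc]; rfl
  rw [hj] at h2
  exact two_ne_zero_zmod k hk h2

lemma evec_inj {n : ℕ} : Function.Injective (Evec k n) := by
  intro i i' h
  have := congrFun h i
  unfold Evec at this
  simp only [if_pos rfl] at this
  by_contra hne
  rw [if_neg (fun hc : i = i' => hne hc)] at this
  exact one_ne_zero_zmod k hk this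

lemma dvec_inj {n : ℕ} : Function.Injective (Dvec k n) := by
  intro i i' h
  have key : ∀ j, j ≤ i ↔ j ≤ i' := by
    intro j
    have := congrFun h j
    unfold Dvec at this
    by_cases h1 : j ≤ i <;> by_cases h2 : j ≤ i'
    · exact iff_of_true h1 h2
    · rw [if_pos h1, if_neg h2] at this
      exact absurd this (one_ne_zero_zmod k hk)
    · rw [if_neg h1, if_pos h2] at this
      exact absurd this (one_ne_zero_zmod k hk).symm
    · exact iff_of_false h1 h2
  exact le_antisymm ((key i).1 le_rfl) ((key i').2 le_rfl)

lemma card_gens {n : ℕ} (hn : 1 ≤ n) : (gens k n).card = 2 * n - 1 := by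
  haveI : NeZero n := ⟨by omega⟩
  unfold gens
  rw [Finset.card_union_of_disjoint]
  · rw [Finset.card_image_of_injective _ (evec_inj k hk),
        Finset.card_image_of_injOn ((dvec_inj k hk).injOn), Finset.card_univ, Fintype.card_fin]
    have hneg : Finset.univ.filter (fun i : Fin n => ¬ 1 ≤ i.val) = {0} := by
      ext i
      simp only [Finset.mem_filter, Finset.mem_univ, true_and, Finset.mem_singleton, not_le]
      constructor
      · intro h
        have : i.val = 0 := by omega
        exact Fin.ext this
      · intro h
        subst h
        simp [Fin.val_zero]
    have := Finset.card_filter_add_card_filter_not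
      (s := (Finset.univ : Finset (Fin n))) (p := fun i : Fin n => 1 ≤ i.val)
    rw [hneg, Finset.card_singleton, Finset.card_univ, Fintype.card_fin] at this
    omega
  · rw [Finset.disjoint_left]
    rintro g hg hg'
    obtain ⟨i, _, rfl⟩ := Finset.mem_image.1 hg
    obtain ⟨i', hi', hdi⟩ := Finset.mem_image.1 hg'
    rw [Finset.mem_filter] at hi'
    have h0 : Dvec k n i' 0 = 1 := by
      have hz : (0 : Fin n) ≤ i' := by rw [Fin.le_def]; simp
      simp [Dvec, hz]
    have hi0 : i = 0 := by
      have := congrFun hdi 0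
      rw [h0] at this
      unfold Evec at this
      by_contra hne
      rw [if_neg (fun hc : (0 : Fin n) = i => hne hc.symm)] at this
      exact one_ne_zero_zmod k hk this
    subst hi0
    have hii' : (i' : Fin n) ≠ 0 := by
      intro hc
      rw [hc] at hi'
      simp [Fin.val_zero] at hi'
    have := congrFun hdi i'
    unfold Evec Dvec at this
    rw [if_pos le_rfl, if_neg hii'] at this
    exact one_ne_zero_zmod k hk this

end hk

def sigw (n : ℕ) (A : Finset (Fin n → ZMod k)) : ℕ := ∑ g ∈ gens k n, cc g A

lemma sigw_compl [NeZero k] (n : ℕ) (A : Finset (Fin n → ZMod k)) : sigw k n Aᶜ = sigw k n A :=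
  Finset.sum_congr rfl fun g _ => cc_compl g A

end AQaux

namespace AQaux

variable (k : ℕ)

def prodEquiv (n : ℕ) : (Fin (n + 1) → ZMod k) ≃+ ((Fin n → ZMod k) × ZMod k) where
  toFun x := (fun j => x j.castSucc, x (Fin.last n))
  invFun p := Fin.snoc p.1 p.2
  left_inv x := by
    funext j
    rcases Fin.eq_castSucc_or_eq_last j with ⟨j', rfl⟩ | rfl
    · simp
    · simp
  right_inv p := by
    refine Prod.ext ?_ ?_
    · funext j
      simp
    · simp
  map_add' x y := rfl

lemma prodEquiv_evec_castSucc (n : ℕ) (i : Fin n) :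
    prodEquiv k n (Evec k (n + 1) i.castSucc) = (Evec k n i, 0) := by
  refine Prod.ext ?_ ?_
  · funext j
    show (if j.castSucc = i.castSucc then (1 : ZMod k) else 0) = _
    simp [Evec, Fin.castSucc_inj]
  · show (if (Fin.last n) = i.castSucc then (1 : ZMod k) else 0) = 0
    rw [if_neg (Fin.castSucc_lt_last i).ne']

lemma prodEquiv_evec_last (n : ℕ) :
    prodEquiv k n (Evec k (n + 1) (Fin.last n)) = (0, 1) := by
  refine Prod.ext ?_ ?_
  · funext j
    show (if j.castSucc = Fin.last n then (1 : ZMod k) else 0) = 0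
    rw [if_neg (Fin.castSucc_lt_last j).ne]
  · show (if (Fin.last n) = Fin.last n then (1 : ZMod k) else 0) = 1
    rw [if_pos rfl]

lemma prodEquiv_dvec_castSucc (n : ℕ) (i : Fin n) :
    prodEquiv k n (Dvec k (n + 1) i.castSucc) = (Dvec k n i, 0) := by
  refine Prod.ext ?_ ?_
  · funext j
    show (if j.castSucc ≤ i.castSucc then (1 : ZMod k) else 0) = _
    simp [Dvec, Fin.castSucc_le_castSucc_iff]
  · show (if (Fin.last n) ≤ i.castSucc then (1 : ZMod k) else 0) = 0
    rw [if_neg (not_le.2 (Fin.castSucc_lt_last i))]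

lemma prodEquiv_dvec_last (n : ℕ) :
    prodEquiv k n (Dvec k (n + 1) (Fin.last n)) = ((fun _ => 1), 1) := by
  refine Prod.ext ?_ ?_
  · funext j
    show (if j.castSucc ≤ Fin.last n then (1 : ZMod k) else 0) = 1
    rw [if_pos (Fin.le_last _)]
  · show (if (Fin.last n) ≤ Fin.last n then (1 : ZMod k) else 0) = 1
    rw [if_pos le_rfl]

lemma gens_succ (n : ℕ) (hn : 1 ≤ n) :
    (gens k (n + 1)).image (prodEquiv k n) =
      ((gens k n).image (fun g => (g, (0 : ZMod k)))) ∪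
        {((0 : Fin n → ZMod k), (1 : ZMod k)), ((fun _ => (1 : ZMod k)), (1 : ZMod k))} := by
  ext p
  simp only [Finset.mem_image, Finset.mem_union, Finset.mem_insert, Finset.mem_singleton]
  constructor
  · rintro ⟨g, hg, rfl⟩
    rcases (mem_gens_iff k).1 hg with ⟨i, rfl⟩ | ⟨i, hi1, rfl⟩
    · rcases Fin.eq_castSucc_or_eq_last i with ⟨i', rfl⟩ | rfl
      · exact Or.inl ⟨Evec k n i', (mem_gens_iff k).2 (Or.inl ⟨i', rfl⟩),
          (prodEquiv_evec_castSucc k n i').symm ▸ rfl⟩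
      · exact Or.inr (Or.inl (prodEquiv_evec_last k n))
    · rcases Fin.eq_castSucc_or_eq_last i with ⟨i', rfl⟩ | rfl
      · refine Or.inl ⟨Dvec k n i', (mem_gens_iff k).2 (Or.inr ⟨i', ?_, rfl⟩),
          (prodEquiv_dvec_castSucc k n i').symm ▸ rfl⟩
        simpa using hi1
      · exact Or.inr (Or.inr (prodEquiv_dvec_last k n))
  · rintro (⟨g, hg, rfl⟩ | h | h)
    · rcases (mem_gens_iff k).1 hg with ⟨i, rfl⟩ | ⟨i, hi1, rfl⟩
      · exact ⟨Evec k (n + 1) i.castSucc,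
          (mem_gens_iff k).2 (Or.inl ⟨i.castSucc, rfl⟩), prodEquiv_evec_castSucc k n i⟩
      · refine ⟨Dvec k (n + 1) i.castSucc,
          (mem_gens_iff k).2 (Or.inr ⟨i.castSucc, ?_, rfl⟩), prodEquiv_dvec_castSucc k n i⟩
        simpa using hi1
    · exact ⟨Evec k (n + 1) (Fin.last n),
        (mem_gens_iff k).2 (Or.inl ⟨Fin.last n, rfl⟩), h ▸ prodEquiv_evec_last k n⟩
    · refine ⟨Dvec k (n + 1) (Fin.last n),
        (mem_gens_iff k).2 (Or.inr ⟨Fin.last n, ?_, rfl⟩), h ▸ prodEquiv_dvec_last k n⟩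
      simpa using hn

lemma sigw_succ (hk : 3 ≤ k) [NeZero k] (n : ℕ) (hn : 1 ≤ n)
    (A : Finset (Fin (n + 1) → ZMod k)) :
    sigw k (n + 1) A =
      (∑ t, sigw k n (layer (A.map (prodEquiv k n).toEquiv.toEmbedding) t)) +
        cc ((0 : Fin n → ZMod k), (1 : ZMod k)) (A.map (prodEquiv k n).toEquiv.toEmbedding) +
        cc ((fun _ => (1 : ZMod k)), (1 : ZMod k)) (A.map (prodEquiv k n).toEquiv.toEmbedding) := by
  set B := A.map (prodEquiv k n).toEquiv.toEmbedding with hB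
  have h1 : sigw k (n + 1) A = ∑ g ∈ gens k (n + 1), cc (prodEquiv k n g) B :=
    Finset.sum_congr rfl fun g _ => (cc_map (prodEquiv k n) g A).symm
  have h2 : ∑ g ∈ gens k (n + 1), cc (prodEquiv k n g) B
      = ∑ p ∈ (gens k (n + 1)).image (prodEquiv k n), cc p B := by
    rw [Finset.sum_image (fun x _ y _ h => (prodEquiv k n).injective h)]
  have hdisj : Disjoint ((gens k n).image (fun g => (g, (0 : ZMod k))))
      ({((0 : Fin n → ZMod k), (1 : ZMod k)), ((fun _ => (1 : ZMod k)), (1 : ZMod k))} :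
        Finset ((Fin n → ZMod k) × ZMod k)) := by
    rw [Finset.disjoint_left]
    rintro p hp hp'
    obtain ⟨g, _, rfl⟩ := Finset.mem_image.1 hp
    rw [Finset.mem_insert, Finset.mem_singleton] at hp'
    rcases hp' with h | h
    · exact one_ne_zero_zmod k hk (congrArg Prod.snd h).symm
    · exact one_ne_zero_zmod k hk (congrArg Prod.snd h).symm
  have hne01 : ((0 : Fin n → ZMod k), (1 : ZMod k)) ≠ ((fun _ => (1 : ZMod k)), (1 : ZMod k)) := by
    intro hc
    have := congrFun (congrArg Prod.fst hc) ⟨0, by omega⟩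
    exact one_ne_zero_zmod k hk this.symm
  have h3 : ∑ g ∈ gens k n, cc (g, (0 : ZMod k)) B = ∑ t, sigw k n (layer B t) := by
    calc ∑ g ∈ gens k n, cc (g, (0 : ZMod k)) B
        = ∑ g ∈ gens k n, ∑ t, cc g (layer B t) :=
          Finset.sum_congr rfl fun g _ => cc_horiz g B
    _ = ∑ t, ∑ g ∈ gens k n, cc g (layer B t) := Finset.sum_comm
    _ = ∑ t, sigw k n (layer B t) := rfl
  rw [h1, h2, gens_succ k n hn, Finset.sum_union hdisj, Finset.sum_pair hne01,
    Finset.sum_image (fun x _ y _ h => (Prod.mk.injEq _ _ _ _ ▸ h : _ ∧ _).1), h3]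
  ring

end AQaux

namespace AQaux

variable (k : ℕ)

lemma pow_ge_lin1 : ∀ q : ℕ, 1 ≤ q → 2 * q + 1 ≤ 3 ^ q := by
  intro q hq
  induction q, hq using Nat.le_induction with
  | base => norm_num
  | succ q hq IH =>
      have : 3 ^ (q + 1) = 3 * 3 ^ q := by ring
      omega

lemma pow_ge_lin2 : ∀ q : ℕ, 2 ≤ q → 3 * q + 2 ≤ 3 ^ q := by
  intro q hq
  induction q, hq using Nat.le_induction with
  | base => norm_num
  | succ q hq IH =>
      have : 3 ^ (q + 1) = 3 * 3 ^ q := by ring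
      omega

variable [NeZero k]

lemma card_fun_eq (n : ℕ) : Fintype.card (Fin n → ZMod k) = k ^ n := by
  rw [Fintype.card_fun, ZMod.card, Fintype.card_fin]

lemma mapB_compl_card (n : ℕ) (A : Finset (Fin (n + 1) → ZMod k)) :
    ((A.map (prodEquiv k n).toEquiv.toEmbedding)ᶜ).card = Aᶜ.card := by
  rw [Finset.card_compl, Finset.card_compl, Finset.card_map,
    Fintype.card_congr (prodEquiv k n).toEquiv]

lemma mapB_ne_univ (n : ℕ) {A : Finset (Fin (n + 1) → ZMod k)} (h : A ≠ Finset.univ) :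
    A.map (prodEquiv k n).toEquiv.toEmbedding ≠ Finset.univ := by
  intro hc
  apply h
  apply Finset.eq_univ_of_card
  have h1 : (A.map (prodEquiv k n).toEquiv.toEmbedding).card = A.card := Finset.card_map _
  have h2 := congrArg Finset.card hc
  rw [h1, Finset.card_univ] at h2
  rw [h2]
  exact (Fintype.card_congr (prodEquiv k n).toEquiv).symm

lemma evec_one_eq_ones : Evec k 1 0 = (fun _ => (1 : ZMod k)) := by
  funext j
  have : j = 0 := Subsingleton.elim _ _
  subst this
  simp [Evec]

lemma ones_gen (n : ℕ) (hn : n = 1) :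
    ∀ x y : Fin n → ZMod k, ∃ m : ℕ, y = x + m • (fun _ => (1 : ZMod k)) := by
  subst hn
  intro x y
  refine ⟨(y 0 - x 0).val, ?_⟩
  funext j
  have hj : j = 0 := Subsingleton.elim _ _
  subst hj
  show y 0 = x 0 + ((y 0 - x 0).val • (fun _ => (1 : ZMod k)) : Fin 1 → ZMod k) 0
  rw [Pi.smul_apply, nsmul_eq_mul, mul_one, ZMod.natCast_val, ZMod.cast_id]
  abel

lemma ones_ne_smul (hk : 3 ≤ k) (n : ℕ) (hn : 1 ≤ n) :
    ∀ c : ZMod k, c ≠ 0 → c • (fun _ => (1 : ZMod k) : Fin n → ZMod k) ≠ 0 := by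
  intro c hc hz
  apply hc
  have := congrFun hz ⟨0, by omega⟩
  rw [Pi.smul_apply, smul_eq_mul, mul_one] at this
  exact this

lemma gens_one : gens k 1 = {Evec k 1 0} := by
  unfold gens
  have hfil : (Finset.univ.filter (fun i : Fin 1 => 1 ≤ i.val)) = ∅ := by
    ext i
    simp only [Finset.mem_filter, Finset.mem_univ, true_and, Finset.notMem_empty, iff_false,
      not_le]
    have := i.isLt
    omega
  rw [hfil, Finset.image_empty, Finset.union_empty]
  have huniv : (Finset.univ : Finset (Fin 1)) = {0} := by
    ext i
    simp [Subsingleton.elim i 0]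
  rw [huniv, Finset.image_singleton]

lemma sigw_one (A : Finset (Fin 1 → ZMod k)) :
    sigw k 1 A = cc (fun _ => (1 : ZMod k)) A := by
  rw [sigw, gens_one, Finset.sum_singleton, evec_one_eq_ones]

theorem U1thm (hk : 3 ≤ k) : ∀ n, 1 ≤ n → ∀ A : Finset (Fin n → ZMod k),
    A.Nonempty → A ≠ Finset.univ → 2 * n - 1 ≤ sigw k n A := by
  intro n hn
  induction n, hn using Nat.le_induction with
  | base =>
      intro A hne hproper
      rw [sigw_one]
      have h1 : 1 ≤ cc (fun _ => (1 : ZMod k)) A :=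
        cc_pos_of_gen (ones_gen k 1 rfl) hne (exists_not_mem_of_ne_univ hproper)
      omega
  | succ q hq IH =>
      intro A hne hproper
      rw [sigw_succ k hk q hq A]
      set B := A.map (prodEquiv k q).toEquiv.toEmbedding with hBdef
      have hN : 2 * q + 1 ≤ Fintype.card (Fin q → ZMod k) := by
        rw [card_fun_eq]
        calc 2 * q + 1 ≤ 3 ^ q := pow_ge_lin1 q hq
        _ ≤ k ^ q := Nat.pow_le_pow_left hk q
      have key := u1_prod q hq hk (fun _ => (1 : ZMod k)) hN (sigw k q) (sigw_compl k q)
        (fun C h1 h2 => IH C h1 h2) B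
        (Finset.map_nonempty.2 hne) (mapB_ne_univ k q hproper)
      omega

theorem U2thm (hk : 3 ≤ k) (n : ℕ) (hn : 1 ≤ n) (A : Finset (Fin n → ZMod k))
    (hA : A.card = 2) : 4 * n - 3 ≤ sigw k n A := by
  obtain ⟨x, y, hxy, rfl⟩ := Finset.card_eq_two.1 hA
  have claim2 : ∀ g ∈ gens k n, 1 ≤ cc g ({x, y} : Finset (Fin n → ZMod k)) := by
    intro g hg
    by_cases hxg : x + g ∈ ({x, y} : Finset (Fin n → ZMod k))
    · rw [Finset.mem_insert, Finset.mem_singleton] at hxg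
      rcases hxg with h | h
      · exact absurd (by rwa [add_eq_left] at h : g = 0) (gens_ne_zero k hk hg)
      · -- x + g = y ; then y exits
        apply cc_pos (Finset.mem_insert_of_mem (Finset.mem_singleton_self y))
        rw [Finset.mem_insert, Finset.mem_singleton]
        rintro (hc | hc)
        · -- y + g = x
          apply gens_add_self_ne_zero k hk hg
          have : x + (g + g) = x := by
            rw [← add_assoc, h, hc]
          rwa [add_eq_left] at this
        · exact gens_ne_zero k hk hg (by rwa [add_eq_left] at hc)
    · exact cc_pos (Finset.mem_insert_self x _) hxg
  have claim1 : ∀ g ∈ gens k n, g ≠ y - x → g ≠ x - y →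
      2 ≤ cc g ({x, y} : Finset (Fin n → ZMod k)) := by
    intro g hg hg1 hg2
    have hxg : x + g ∉ ({x, y} : Finset (Fin n → ZMod k)) := by
      rw [Finset.mem_insert, Finset.mem_singleton]
      rintro (hc | hc)
      · exact gens_ne_zero k hk hg (by rwa [add_eq_left] at hc)
      · exact hg1 (by rw [← hc]; abel)
    have hyg : y + g ∉ ({x, y} : Finset (Fin n → ZMod k)) := by
      rw [Finset.mem_insert, Finset.mem_singleton]
      rintro (hc | hc)
      · exact hg2 (by rw [← hc]; abel)
      · exact gens_ne_zero k hk hg (by rwa [add_eq_left] at hc)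
    have hsub : ({x, y} : Finset (Fin n → ZMod k)) ⊆
        ({x, y} : Finset (Fin n → ZMod k)).filter (fun z => z + g ∉ ({x, y} : Finset (Fin n → ZMod k))) := by
      intro z hz
      rw [Finset.mem_insert, Finset.mem_singleton] at hz
      rcases hz with rfl | rfl
      · exact Finset.mem_filter.2 ⟨Finset.mem_insert_self _ _, hxg⟩
      · exact Finset.mem_filter.2 ⟨Finset.mem_insert_of_mem (Finset.mem_singleton_self _), hyg⟩
    have := Finset.card_le_card hsub
    rw [Finset.card_pair hxy] at this
    exact this
  set bad := (gens k n) ∩ ({y - x, x - y} : Finset (Fin n → ZMod k)) with hbad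
  have hbad1 : bad.card ≤ 1 := by
    rw [Finset.card_le_one]
    intro a ha b hb
    rw [hbad, Finset.mem_inter, Finset.mem_insert, Finset.mem_singleton] at ha hb
    have hkey : ∀ c d : Fin n → ZMod k, c ∈ gens k n → d ∈ gens k n →
        c = y - x → d = x - y → False := by
      intro c d hc hd hc' hd'
      apply gens_ne_neg k hk hc hd
      rw [hc', hd']
      abel
    rcases ha.2 with h1 | h1 <;> rcases hb.2 with h2 | h2
    · rw [h1, h2]
    · exact absurd (hkey a b ha.1 hb.1 h1 h2) (fun h => h)
    · exact absurd (hkey b a hb.1 ha.1 h2 h1) (fun h => h)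
    · rw [h1, h2]
  have hsplit : sigw k n ({x, y} : Finset (Fin n → ZMod k)) =
      (∑ g ∈ gens k n \ bad, cc g ({x, y} : Finset (Fin n → ZMod k))) +
      (∑ g ∈ bad, cc g ({x, y} : Finset (Fin n → ZMod k))) := by
    rw [sigw]
    rw [← Finset.sum_sdiff (Finset.inter_subset_left (s₂ := ({y - x, x - y} : Finset (Fin n → ZMod k))))]
  have hcard_sdiff : (gens k n \ bad).card = (gens k n).card - bad.card :=
    Finset.card_sdiff_of_subset (Finset.inter_subset_left)
  have hsum1 : 2 * (gens k n \ bad).card ≤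
      ∑ g ∈ gens k n \ bad, cc g ({x, y} : Finset (Fin n → ZMod k)) := by
    calc 2 * (gens k n \ bad).card = ∑ _g ∈ gens k n \ bad, 2 := by
          rw [Finset.sum_const, smul_eq_mul, mul_comm]
    _ ≤ _ := by
      apply Finset.sum_le_sum
      intro g hg
      rw [Finset.mem_sdiff] at hg
      have hg1 : g ≠ y - x := by
        intro hc
        exact hg.2 (Finset.mem_inter.2 ⟨hg.1, by rw [hc]; exact Finset.mem_insert_self _ _⟩)
      have hg2 : g ≠ x - y := by
        intro hc
        exact hg.2 (Finset.mem_inter.2 ⟨hg.1,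
          by rw [hc]; exact Finset.mem_insert_of_mem (Finset.mem_singleton_self _)⟩)
      exact claim1 g hg.1 hg1 hg2
  have hsum2 : bad.card ≤ ∑ g ∈ bad, cc g ({x, y} : Finset (Fin n → ZMod k)) := by
    calc bad.card = ∑ _g ∈ bad, 1 := by rw [Finset.sum_const, smul_eq_mul, mul_one]
    _ ≤ _ := Finset.sum_le_sum fun g hg =>
        claim2 g (Finset.mem_of_mem_inter_left hg)
  have hcard := card_gens k hk (n := n) hn
  have hble : bad.card ≤ (gens k n).card := Finset.card_le_card (Finset.inter_subset_left)
  omega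

theorem Kthm (hk : 3 ≤ k) : ∀ n, 2 ≤ n → ∀ A : Finset (Fin n → ZMod k),
    3 ≤ A.card → 3 ≤ Aᶜ.card → 6 * n - 6 ≤ sigw k n A := by
  intro n hn
  induction n, hn using Nat.le_induction with
  | base =>
      intro A hA3 hA3'
      rw [sigw_succ k hk 1 le_rfl A]
      set B := A.map (prodEquiv k 1).toEquiv.toEmbedding with hBdef
      have hrw : (∑ t, sigw k 1 (layer B t)) = ∑ t, cc (fun _ => (1 : ZMod k)) (layer B t) :=
        Finset.sum_congr rfl fun t _ => sigw_one k _
      rw [hrw]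
      have key := base_bound hk (fun _ => (1 : ZMod k)) (ones_ne_smul k hk 1 le_rfl)
        (ones_gen k 1 rfl) (by rw [card_fun_eq]; exact pow_one k) B
        (by rw [hBdef, Finset.card_map]; exact hA3)
        (by rw [hBdef, mapB_compl_card]; exact hA3')
      omega
  | succ q hq IH =>
      intro A hA3 hA3'
      rw [sigw_succ k hk q (by omega) A]
      set B := A.map (prodEquiv k q).toEquiv.toEmbedding with hBdef
      have hN : 3 * q + 2 ≤ Fintype.card (Fin q → ZMod k) := by
        rw [card_fun_eq]
        calc 3 * q + 2 ≤ 3 ^ q := pow_ge_lin2 q hq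
        _ ≤ k ^ q := Nat.pow_le_pow_left hk q
      have key := step_bound q hq hk (fun _ => (1 : ZMod k)) (ones_ne_smul k hk q (by omega)) hN
        (sigw k q) (sigw_compl k q)
        (fun C h1 h2 => U1thm k hk q (by omega) C h1 h2)
        (fun C h2 => U2thm k hk q (by omega) C h2)
        (fun C h1 h2 => IH C h1 h2) B
        (by rw [hBdef, Finset.card_map]; exact hA3)
        (by rw [hBdef, mapB_compl_card]; exact hA3')
      omega

end AQaux

namespace AQaux

lemma AQ_adj_gen (n k : ℕ) (hk : 3 ≤ k) {g : Fin n → ZMod k} (hg : g ∈ gens k n)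
    (x : Fin n → ZMod k) : (AQ n k).Adj x (x + g) := by
  have hne : x ≠ x + g := by
    intro hc
    exact gens_ne_zero k hk hg (left_eq_add.1 hc)
  rcases (mem_gens_iff k).1 hg with ⟨i, rfl⟩ | ⟨i, hi1, rfl⟩
  · refine ⟨hne, Or.inl ⟨i, Or.inl ?_, ?_⟩⟩
    · rw [Pi.add_apply]
      simp [Evec]
    · intro j hj
      rw [Pi.add_apply]
      simp [Evec, hj]
  · refine ⟨hne, Or.inr ⟨i, hi1, Or.inl ?_, ?_⟩⟩
    · intro j hj
      rw [Pi.add_apply]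
      simp [Dvec, hj]
    · intro j hj
      rw [Pi.add_apply]
      simp [Dvec, not_le.2 hj]

end AQaux

/-- Let `n ≥ 2`, `k ≥ 3` and `S` an edge set of `AQ_{n,k}` with `|S| ≤ 12n-13`.
Then `AQ_{n,k} - S` has a connected component with at least `k^n - 2` vertices. -/
theorem AQ_edge_fault_large_component' (n k : ℕ) (hn : 2 ≤ n) (hk : 3 ≤ k)
    (S : Set (Sym2 (Fin n → ZMod k))) (hSsub : S ⊆ (AQ n k).edgeSet)
    (hS : S.ncard ≤ 12 * n - 13) :
    ∃ H : ((AQ n k).deleteEdges S).ConnectedComponent,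
      k ^ n - 2 ≤ H.supp.ncard := by
  classical
  haveI : NeZero k := ⟨by omega⟩
  set G' := (AQ n k).deleteEdges S with hG'
  by_contra hcon
  push_neg at hcon
  have hkn9 : 9 ≤ k ^ n := by
    calc 9 = 3 ^ 2 := by norm_num
    _ ≤ 3 ^ n := Nat.pow_le_pow_right (by norm_num) hn
    _ ≤ k ^ n := Nat.pow_le_pow_left hk n
  have hcardV : Fintype.card (Fin n → ZMod k) = k ^ n := AQaux.card_fun_eq k n
  set comp : (Fin n → ZMod k) → Finset (Fin n → ZMod k) :=
    fun x => Finset.univ.filter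
      (fun y => G'.connectedComponentMk y = G'.connectedComponentMk x) with hcomp
  have hcomp_card : ∀ x, (comp x).card ≤ k ^ n - 3 := by
    intro x
    have h := hcon (G'.connectedComponentMk x)
    have hsupp : (G'.connectedComponentMk x).supp.ncard = (comp x).card := by
      have hset : (G'.connectedComponentMk x).supp = ↑(comp x) := by
        ext y
        simp [SimpleGraph.ConnectedComponent.mem_supp_iff, hcomp]
      rw [hset, Set.ncard_coe_finset]
    omega
  have hmem_comp_self : ∀ x, x ∈ comp x := fun x => by
    simp only [hcomp, Finset.mem_filter, Finset.mem_univ, true_and]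
  have hclosed : ∀ x y z, y ∈ comp x → G'.Reachable y z → z ∈ comp x := by
    intro x y z hy hr
    simp only [hcomp, Finset.mem_filter, Finset.mem_univ, true_and] at hy ⊢
    rw [← SimpleGraph.ConnectedComponent.sound hr]
    exact hy
  obtain ⟨A, hAclosed, hA3, hA3'⟩ :
      ∃ A : Finset (Fin n → ZMod k),
        (∀ y ∈ A, ∀ z, G'.Reachable y z → z ∈ A) ∧ 3 ≤ A.card ∧ 3 ≤ Aᶜ.card := by
    by_cases hbig : ∃ x, 3 ≤ (comp x).card
    · obtain ⟨x, hx⟩ := hbig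
      refine ⟨comp x, fun y hy z hz => hclosed x y z hy hz, hx, ?_⟩
      rw [Finset.card_compl, hcardV]
      have := hcomp_card x
      have hle : (comp x).card ≤ k ^ n := by
        have := Finset.card_le_univ (comp x)
        rwa [hcardV] at this
      omega
    · push_neg at hbig
      have x₁ : Fin n → ZMod k := fun _ => 0
      have hne1 : comp x₁ ≠ Finset.univ := by
        intro hc
        have := congrArg Finset.card hc
        rw [Finset.card_univ, hcardV] at this
        have := hbig x₁
        omega
      obtain ⟨x₂, hx₂⟩ := AQaux.exists_not_mem_of_ne_univ hne1
      have hne2 : comp x₁ ∪ comp x₂ ≠ Finset.univ := by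
        intro hc
        have := congrArg Finset.card hc
        rw [Finset.card_univ, hcardV] at this
        have h1 := hbig x₁
        have h2 := hbig x₂
        have := Finset.card_union_le (comp x₁) (comp x₂)
        omega
      obtain ⟨x₃, hx₃⟩ := AQaux.exists_not_mem_of_ne_univ hne2
      refine ⟨comp x₁ ∪ comp x₂ ∪ comp x₃, ?_, ?_, ?_⟩
      · intro y hy z hz
        rw [Finset.mem_union] at hy
        rcases hy with hy | hy
        · rw [Finset.mem_union] at hy
          rcases hy with hy | hy
          · exact Finset.mem_union_left _ (Finset.mem_union_left _ (hclosed x₁ y z hy hz))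
          · exact Finset.mem_union_left _ (Finset.mem_union_right _ (hclosed x₂ y z hy hz))
        · exact Finset.mem_union_right _ (hclosed x₃ y z hy hz)
      · -- contains x₁, x₂, x₃ which are pairwise distinct
        have hm1 : x₁ ∈ comp x₁ ∪ comp x₂ ∪ comp x₃ :=
          Finset.mem_union_left _ (Finset.mem_union_left _ (hmem_comp_self x₁))
        have hm2 : x₂ ∈ comp x₁ ∪ comp x₂ ∪ comp x₃ :=
          Finset.mem_union_left _ (Finset.mem_union_right _ (hmem_comp_self x₂))
        have hm3 : x₃ ∈ comp x₁ ∪ comp x₂ ∪ comp x₃ :=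
          Finset.mem_union_right _ (hmem_comp_self x₃)
        have h12 : x₂ ≠ x₁ := fun hc => hx₂ (hc ▸ hmem_comp_self x₁)
        have h13 : x₃ ≠ x₁ := fun hc =>
          hx₃ (Finset.mem_union_left _ (hc ▸ hmem_comp_self x₁))
        have h23 : x₃ ≠ x₂ := fun hc =>
          hx₃ (Finset.mem_union_right _ (hc ▸ hmem_comp_self x₂))
        have hsub : ({x₁, x₂, x₃} : Finset (Fin n → ZMod k)) ⊆ comp x₁ ∪ comp x₂ ∪ comp x₃ := by
          intro z hz
          rw [Finset.mem_insert, Finset.mem_insert, Finset.mem_singleton] at hz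
          rcases hz with rfl | rfl | rfl
          · exact hm1
          · exact hm2
          · exact hm3
        have hcard3 : ({x₁, x₂, x₃} : Finset (Fin n → ZMod k)).card = 3 := by
          rw [Finset.card_insert_of_notMem, Finset.card_insert_of_notMem,
            Finset.card_singleton]
          · rw [Finset.mem_singleton]
            exact fun hc => h23 hc.symm
          · rw [Finset.mem_insert, Finset.mem_singleton]
            push_neg
            exact ⟨fun hc => h12 hc.symm, fun hc => h13 hc.symm⟩
        calc 3 = ({x₁, x₂, x₃} : Finset (Fin n → ZMod k)).card := hcard3.symm
        _ ≤ _ := Finset.card_le_card hsub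
      · rw [Finset.card_compl, hcardV]
        have h1 := hbig x₁
        have h2 := hbig x₂
        have h3 := hbig x₃
        have hu1 := Finset.card_union_le (comp x₁ ∪ comp x₂) (comp x₃)
        have hu2 := Finset.card_union_le (comp x₁) (comp x₂)
        omega
  -- every crossing generator edge lies in S
  have hedge : ∀ g ∈ AQaux.gens k n, ∀ x : Fin n → ZMod k,
      ((x ∈ A ∧ x + g ∉ A) ∨ (x ∉ A ∧ x + g ∈ A)) → s(x, x + g) ∈ S := by
    intro g hg x hx
    by_contra hSmem
    have hadj : G'.Adj x (x + g) := by
      rw [hG', SimpleGraph.deleteEdges_adj]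
      exact ⟨AQaux.AQ_adj_gen n k hk hg x, hSmem⟩
    rcases hx with ⟨h1, h2⟩ | ⟨h1, h2⟩
    · exact h2 (hAclosed x h1 _ hadj.reachable)
    · exact h1 (hAclosed _ h2 x hadj.symm.reachable)
  set Q := ((AQaux.gens k n) ×ˢ (Finset.univ : Finset (Fin n → ZMod k))).filter
      (fun p => (p.2 ∈ A ∧ p.2 + p.1 ∉ A) ∨ (p.2 ∉ A ∧ p.2 + p.1 ∈ A)) with hQ
  have hQmem : ∀ p ∈ Q, p.1 ∈ AQaux.gens k n ∧
      ((p.2 ∈ A ∧ p.2 + p.1 ∉ A) ∨ (p.2 ∉ A ∧ p.2 + p.1 ∈ A)) := by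
    intro p hp
    rw [hQ, Finset.mem_filter, Finset.mem_product] at hp
    exact ⟨hp.1.1, hp.2⟩
  set T := Q.image (fun p => s(p.2, p.2 + p.1)) with hT
  have hTcard : T.card = Q.card := by
    rw [hT]
    apply Finset.card_image_of_injOn
    rintro ⟨g, x⟩ hp ⟨h, y⟩ hq heq
    simp only at heq
    rw [Sym2.eq_iff] at heq
    rcases heq with ⟨h1, h2⟩ | ⟨h1, h2⟩
    · subst h1
      have : g = h := by
        have := h2
        rwa [add_right_inj] at this
      rw [this]
    · exfalso
      have hg : g ∈ AQaux.gens k n := (hQmem _ hp).1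
      have hh : h ∈ AQaux.gens k n := (hQmem _ hq).1
      apply AQaux.gens_ne_neg k hk hg hh
      have : y + h + g = y := by rw [← h1, h2]
      have hgh : h + g = 0 := by
        have := this
        rwa [add_assoc, add_eq_left] at this
      rw [eq_neg_iff_add_eq_zero]
      rwa [add_comm] at hgh
  have hQcard : Q.card = ∑ g ∈ AQaux.gens k n, (AQaux.cc g A + AQaux.cc g Aᶜ) := by
    rw [hQ]
    rw [Finset.card_eq_sum_card_fiberwise (f := Prod.fst) (t := AQaux.gens k n)
      (fun p hp => (Finset.mem_product.1 (Finset.mem_filter.1 hp).1).1)]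
    refine Finset.sum_congr rfl fun g hg => ?_
    have hdisj : Disjoint (A.filter (fun x => x + g ∉ A)) (Aᶜ.filter (fun x => x + g ∈ A)) := by
      rw [Finset.disjoint_left]
      intro x hx hx'
      exact (Finset.mem_compl.1 (Finset.mem_filter.1 hx').1) (Finset.mem_filter.1 hx).1
    have hccA : AQaux.cc g A = (A.filter (fun x => x + g ∉ A)).card := rfl
    have hccA' : AQaux.cc g Aᶜ = (Aᶜ.filter (fun x => x + g ∈ A)).card := by
      unfold AQaux.cc
      congr 1
      apply Finset.filter_congr
      intro x _
      simp
    rw [hccA, hccA', ← Finset.card_union_of_disjoint hdisj]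
    apply Finset.card_bij (fun p _ => p.2)
    · rintro ⟨g', x⟩ hp
      simp only [Finset.mem_filter] at hp
      obtain ⟨hp1, hp2⟩ := hp
      have hgg : g' = g := hp2
      subst hgg
      obtain hcond := hp1.2
      rw [Finset.mem_union]
      rcases hcond with ⟨h1, h2⟩ | ⟨h1, h2⟩
      · exact Or.inl (Finset.mem_filter.2 ⟨h1, h2⟩)
      · exact Or.inr (Finset.mem_filter.2 ⟨Finset.mem_compl.2 h1, h2⟩)
    · rintro ⟨g1, x1⟩ hp1 ⟨g2, x2⟩ hp2 hx
      simp only [Finset.mem_filter] at hp1 hp2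
      exact Prod.ext (by rw [hp1.2, hp2.2] : g1 = g2) hx
    · intro x hx
      rw [Finset.mem_union] at hx
      refine ⟨(g, x), ?_, rfl⟩
      rw [Finset.mem_filter]
      constructor
      · rw [Finset.mem_filter, Finset.mem_product]
        refine ⟨⟨hg, Finset.mem_univ _⟩, ?_⟩
        rcases hx with h | h
        · rw [Finset.mem_filter] at h
          exact Or.inl ⟨h.1, h.2⟩
        · rw [Finset.mem_filter] at h
          exact Or.inr ⟨Finset.mem_compl.1 h.1, h.2⟩
      · rfl
  have hQsig : Q.card = 2 * AQaux.sigw k n A := by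
    rw [hQcard, AQaux.sigw, Finset.mul_sum]
    refine Finset.sum_congr rfl fun g _ => ?_
    rw [AQaux.cc_compl]
    ring
  have hTsub : ↑T ⊆ S := by
    intro e he
    rw [hT] at he
    simp only [Finset.coe_image, Set.mem_image, Finset.mem_coe] at he
    obtain ⟨p, hp, rfl⟩ := he
    exact hedge p.1 (hQmem p hp).1 p.2 (hQmem p hp).2
  have hST : T.card ≤ S.ncard := by
    rw [← Set.ncard_coe_finset]
    exact Set.ncard_le_ncard hTsub (Set.toFinite S)
  have hK := AQaux.Kthm k hk n hn A hA3 hA3'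
  omega
end

section
/- For every integer n ≥ 3, the augmented 3-ary n-cube AQ_{n,3} is not (4n−8)-strongly Menger connected; that is, there exists a vertex set F ⊆ V(AQ_{n,3}) with |F| ≤ 4n−8 such that AQ_{n,3} − F is not strongly Menger connected: it contains two distinct vertices u and v that are not joined by min{deg_{AQ_{n,3}−F}(u), deg_{AQ_{n,3}−F}(v)} internally vertex-disjoint paths in AQ_{n,3} − F. -/
open SimpleGraph

namespace AQaux
variable {n : ℕ}

lemma AQ_adj {n k : ℕ} (u v : Fin n → ZMod k) : (AQ n k).Adj u v ↔ (u ≠ v ∧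
    ((∃ i : Fin n, (v i = u i + 1 ∨ v i = u i - 1) ∧ ∀ j, j ≠ i → v j = u j) ∨
     (∃ i : Fin n, 1 ≤ i.val ∧
       ((∀ j, j ≤ i → v j = u j + 1) ∨ (∀ j, j ≤ i → v j = u j - 1)) ∧
       (∀ j, i < j → v j = u j)))) := Iff.rfl

/-- single-coordinate vector -/
def sgl (s : ZMod 3) (m : ℕ) : Fin n → ZMod 3 := fun j => if j.val = m then s else 0
/-- prefix vector -/
def chi (s : ZMod 3) (m : ℕ) : Fin n → ZMod 3 := fun j => if j.val ≤ m then s else 0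

lemma sgl_ne_zero (s : ZMod 3) (hs : s ≠ 0) (m : ℕ) (hm : m < n) : sgl (n := n) s m ≠ 0 := by
  intro h
  have := congrFun h ⟨m, hm⟩
  simp [sgl] at this
  exact hs this

lemma chi_ne_zero (hn : 0 < n) (s : ZMod 3) (hs : s ≠ 0) (m : ℕ) : chi (n := n) s m ≠ 0 := by
  intro h
  have := congrFun h ⟨0, hn⟩
  simp [chi] at this
  exact hs this

lemma adj_zero_sgl (s : ZMod 3) (hs : s = 1 ∨ s = -1) (m : ℕ) (hm : m < n) :
    (AQ n 3).Adj 0 (sgl s m) := by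
  rw [AQ_adj]
  have hs0 : s ≠ 0 := by rcases hs with h | h <;> subst h <;> decide
  refine ⟨fun h => sgl_ne_zero s hs0 m hm h.symm, Or.inl ⟨⟨m, hm⟩, ?_, ?_⟩⟩
  · rcases hs with h | h <;> subst h
    · left; simp [sgl]
    · right; simp [sgl]
  · intro j hj
    simp only [sgl, Pi.zero_apply]
    rw [if_neg (fun hc => hj (Fin.ext hc))]

lemma adj_zero_chi (s : ZMod 3) (hs : s = 1 ∨ s = -1) (m : ℕ) (h1 : 1 ≤ m) (hm : m < n) :
    (AQ n 3).Adj 0 (chi s m) := by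
  rw [AQ_adj]
  have hs0 : s ≠ 0 := by rcases hs with h | h <;> subst h <;> decide
  refine ⟨fun h => chi_ne_zero (by omega) s hs0 m h.symm, Or.inr ⟨⟨m, hm⟩, h1, ?_, ?_⟩⟩
  · rcases hs with h | h <;> subst h
    · left; intro j hj; simp only [chi, Pi.zero_apply, zero_add]
      rw [if_pos (by exact Fin.le_def.mp hj)]
    · right; intro j hj; simp only [chi, Pi.zero_apply, zero_sub]
      rw [if_pos (by exact Fin.le_def.mp hj)]
  · intro j hj
    simp only [chi, Pi.zero_apply]
    rw [if_neg (by have := Fin.lt_def.mp hj; simp at this ⊢; omega)]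


lemma adj_sub_iff (u v : Fin n → ZMod 3) :
    (AQ n 3).Adj u v ↔ (AQ n 3).Adj 0 (v - u) := by
  rw [AQ_adj, AQ_adj]
  constructor
  · rintro ⟨hne, h⟩
    refine ⟨fun h0 => hne (sub_eq_zero.mp h0.symm).symm, ?_⟩
    · rcases h with ⟨i, hi, hj⟩ | ⟨i, h1, hpm, hj⟩
      · left
        refine ⟨i, ?_, fun j hj' => by simp [Pi.sub_apply, hj j hj']⟩
        rcases hi with h | h
        · left; simp [Pi.sub_apply, h]
        · right; simp [Pi.sub_apply, h]
      · right
        refine ⟨i, h1, ?_, fun j hj' => by simp [Pi.sub_apply, hj j hj']⟩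
        rcases hpm with h | h
        · left; intro j hj'; simp [Pi.sub_apply, h j hj']
        · right; intro j hj'; simp [Pi.sub_apply, h j hj']
  · rintro ⟨hne, h⟩
    refine ⟨fun h0 => hne (by rw [h0]; simp), ?_⟩
    rcases h with ⟨i, hi, hj⟩ | ⟨i, h1, hpm, hj⟩
    · left
      refine ⟨i, ?_, fun j hj' => by have := hj j hj'; simpa [Pi.sub_apply, sub_eq_zero] using this⟩
      rcases hi with h | h
      · left; have := h; simp [Pi.sub_apply] at this; linear_combination this
      · right; have := h; simp [Pi.sub_apply] at this; linear_combination this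
    · right
      refine ⟨i, h1, ?_, fun j hj' => by have := hj j hj'; simpa [Pi.sub_apply, sub_eq_zero] using this⟩
      rcases hpm with h | h
      · left; intro j hj'; have := h j hj'; simp [Pi.sub_apply] at this; linear_combination this
      · right; intro j hj'; have := h j hj'; simp [Pi.sub_apply] at this; linear_combination this

/-- classification of neighbours of 0 -/
lemma adj_zero_classify (w : Fin n → ZMod 3) (h : (AQ n 3).Adj 0 w) :
    (∃ m, m < n ∧ (w = sgl 1 m ∨ w = sgl (-1) m)) ∨
    (∃ m, 1 ≤ m ∧ m < n ∧ (w = chi 1 m ∨ w = chi (-1) m)) := by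
  rw [AQ_adj] at h
  obtain ⟨hne, h | h⟩ := h
  · obtain ⟨i, hi, hj⟩ := h
    left
    refine ⟨i.val, i.isLt, ?_⟩
    rcases hi with hi | hi
    · left; funext j
      by_cases hji : j = i
      · subst hji; simpa [sgl] using hi
      · rw [hj j hji]; simp only [sgl, Pi.zero_apply]
        rw [if_neg (fun hc => hji (Fin.ext hc))]
    · right; funext j
      by_cases hji : j = i
      · subst hji; simp [sgl]; simpa using hi
      · rw [hj j hji]; simp only [sgl, Pi.zero_apply]
        rw [if_neg (fun hc => hji (Fin.ext hc))]
  · obtain ⟨i, h1, hpm, hj⟩ := h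
    right
    refine ⟨i.val, h1, i.isLt, ?_⟩
    rcases hpm with hp | hp
    · left; funext j
      by_cases hji : j.val ≤ i.val
      · have := hp j (Fin.le_def.mpr hji); simp at this; simp [chi, hji, this]
      · have := hj j (Fin.lt_def.mpr (by omega)); simp at this; simp [chi, hji, this]
    · right; funext j
      by_cases hji : j.val ≤ i.val
      · have := hp j (Fin.le_def.mpr hji); simp at this; simp [chi, hji, this]
      · have := hj j (Fin.lt_def.mpr (by omega)); simp at this; simp [chi, hji, this]

/-- key structural invariant used for refutations -/
lemma adj_zero_invariant (w : Fin n → ZMod 3) (h : (AQ n 3).Adj 0 w)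
    (p q l : Fin n) (hpq : p.val < q.val) (hlq : l.val ≤ q.val)
    (hp : w p ≠ 0) (hq : w q ≠ 0) : w l = w q := by
  rcases adj_zero_classify w h with ⟨m, hm, hw | hw⟩ | ⟨m, h1, hm, hw | hw⟩ <;> subst hw
  · have cp : p.val = m := by by_contra hc; exact hp (by simp [sgl, hc])
    have cq : q.val = m := by by_contra hc; exact hq (by simp [sgl, hc])
    omega
  · have cp : p.val = m := by by_contra hc; exact hp (by simp [sgl, hc])
    have cq : q.val = m := by by_contra hc; exact hq (by simp [sgl, hc])
    omega
  · have cq : q.val ≤ m := by by_contra hc; exact hq (by simp [chi, hc])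
    simp [chi, cq, show l.val ≤ m by omega]
  · have cq : q.val ≤ m := by by_contra hc; exact hq (by simp [chi, hc])
    simp [chi, cq, show l.val ≤ m by omega]


/-- the vertex `a = (1,1,0,...,0)` -/
def av : Fin n → ZMod 3 := chi 1 1
/-- the vertex `x = (0,1,1,0,...,0)` -/
def xv : Fin n → ZMod 3 := sgl 1 1 + sgl 1 2

/-- the fault set -/
def Fset (n : ℕ) : Set (Fin n → ZMod 3) :=
  {w | (AQ n 3).Adj av w ∧ ¬ (AQ n 3).Adj 0 w ∧ w ≠ 0}
/-- the cut set -/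
def Cset (n : ℕ) : Set (Fin n → ZMod 3) :=
  {w | (AQ n 3).Adj 0 w ∧ w ≠ av}

variable (hn : 3 ≤ n)
include hn

lemma not_adj_zero_xv : ¬ (AQ n 3).Adj 0 (xv (n := n)) := by
  intro h
  have := adj_zero_invariant _ h ⟨1, by omega⟩ ⟨2, by omega⟩ ⟨0, by omega⟩
    (by simp) (by simp) (by simp [xv, sgl]) (by simp [xv, sgl])
  simp [xv, sgl] at this

lemma not_adj_av_xv : ¬ (AQ n 3).Adj (av (n := n)) xv := by
  intro h
  rw [adj_sub_iff] at h
  have := adj_zero_invariant _ h ⟨0, by omega⟩ ⟨2, by omega⟩ ⟨1, by omega⟩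
    (by simp) (by simp)
    (by simp [xv, av, sgl, chi]) (by simp [xv, av, sgl, chi])
  simp [xv, av, sgl, chi] at this

lemma xv_ne_zero : xv (n := n) ≠ 0 := by
  intro h
  have := congrFun h ⟨1, by omega⟩
  simp [xv, sgl] at this

lemma xv_ne_av : xv (n := n) ≠ av := by
  intro h
  have := congrFun h ⟨0, by omega⟩
  simp [xv, av, sgl, chi] at this

lemma av_ne_zero : av (n := n) ≠ 0 := by
  intro h
  have := congrFun h ⟨0, by omega⟩
  simp [av, chi] at this

omit hn in
lemma zero_not_mem_F : (0 : Fin n → ZMod 3) ∉ Fset n := fun h => h.2.2 rfl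

lemma xv_not_mem_F : xv (n := n) ∉ Fset n := fun h => not_adj_av_xv hn h.1

omit hn in
lemma eq_chi12 : av (n := n) + sgl 1 2 = chi 1 2 := by
  funext j; simp only [av, Pi.add_apply, chi, sgl]
  split_ifs <;> first | rfl | decide | (exfalso; omega)

omit hn in
lemma eq_sgl11 : av (n := n) + sgl (-1) 0 = sgl 1 1 := by
  funext j; simp only [av, Pi.add_apply, chi, sgl]
  split_ifs <;> first | rfl | decide | (exfalso; omega)

omit hn in
lemma eq_sgl10 : av (n := n) + sgl (-1) 1 = sgl 1 0 := by
  funext j; simp only [av, Pi.add_apply, chi, sgl]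
  split_ifs <;> first | rfl | decide | (exfalso; omega)

omit hn in
lemma eq_chim1 : av (n := n) + chi 1 1 = chi (-1) 1 := by
  funext j; simp only [av, Pi.add_apply, chi, sgl]
  split_ifs <;> first | rfl | decide | (exfalso; omega)

omit hn in
lemma eq_zero : av (n := n) + chi (-1) 1 = 0 := by
  funext j; simp only [av, Pi.add_apply, Pi.zero_apply, chi, sgl]
  split_ifs <;> first | rfl | decide | (exfalso; omega)

omit hn in
lemma eq_sglm2 : av (n := n) + chi (-1) 2 = sgl (-1) 2 := by
  funext j; simp only [av, Pi.add_apply, chi, sgl]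
  split_ifs <;> first | rfl | decide | (exfalso; omega)

lemma F_classify (w : Fin n → ZMod 3) (hw : w ∈ Fset n) :
    (∃ m, m < n ∧ m ≠ 2 ∧ w = av + sgl 1 m) ∨
    (∃ m, 2 ≤ m ∧ m < n ∧ w = av + sgl (-1) m) ∨
    (∃ m, 2 ≤ m ∧ m < n ∧ w = av + chi 1 m) ∨
    (∃ m, 3 ≤ m ∧ m < n ∧ w = av + chi (-1) m) := by
  obtain ⟨hadj, hnadj, hne⟩ := hw
  rw [adj_sub_iff] at hadj
  have hsum : ∀ s : Fin n → ZMod 3, w - av = s → w = av + s := by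
    intro s hs; rw [← hs]; ring
  rcases adj_zero_classify _ hadj with ⟨m, hm, hc | hc⟩ | ⟨m, h1, hm, hc | hc⟩
  · by_cases h2 : m = 2
    · subst h2
      exact absurd ((hsum _ hc).symm ▸ (eq_chi12 ▸
        adj_zero_chi 1 (Or.inl rfl) 2 (by omega) (by omega))) hnadj
    · exact Or.inl ⟨m, hm, h2, hsum _ hc⟩
  · match m, hm with
    | 0, _ =>
      exact absurd ((hsum _ hc).symm ▸ (eq_sgl11 ▸
        adj_zero_sgl 1 (Or.inl rfl) 1 (by omega))) hnadj
    | 1, _ =>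
      exact absurd ((hsum _ hc).symm ▸ (eq_sgl10 ▸
        adj_zero_sgl 1 (Or.inl rfl) 0 (by omega))) hnadj
    | (m+2), hm =>
      exact Or.inr (Or.inl ⟨m+2, by omega, hm, hsum _ hc⟩)
  · by_cases h2 : m = 1
    · subst h2
      exact absurd ((hsum _ hc).symm ▸ (eq_chim1 ▸
        adj_zero_chi (-1) (Or.inr rfl) 1 (by omega) (by omega))) hnadj
    · exact Or.inr (Or.inr (Or.inl ⟨m, by omega, hm, hsum _ hc⟩))
  · match m, h1, hm with
    | 1, _, _ => exact absurd ((hsum _ hc).trans eq_zero) hne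
    | 2, _, hm =>
      exact absurd ((hsum _ hc).symm ▸ (eq_sglm2 ▸
        adj_zero_sgl (-1) (Or.inr rfl) 2 (by omega))) hnadj
    | (m+3), _, hm =>
      exact Or.inr (Or.inr (Or.inr ⟨m+3, by omega, hm, hsum _ hc⟩))

lemma not_adj_xv_F : ∀ w ∈ Fset n, ¬ (AQ n 3).Adj (xv (n := n)) w := by
  intro w hw hadj
  rw [adj_sub_iff] at hadj
  rcases F_classify hn w hw with ⟨m, hm, hm2, hc⟩ | ⟨m, hm2, hm, hc⟩ | ⟨m, hm2, hm, hc⟩ | ⟨m, hm3, hm, hc⟩ <;> subst hc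
  · have := adj_zero_invariant _ hadj ⟨0, by omega⟩ ⟨2, by omega⟩ ⟨1, by omega⟩
      (by simp) (by simp)
      (by simp only [Pi.add_apply, Pi.sub_apply, av, xv, chi, sgl, Fin.val_mk]
          split_ifs <;> first | decide | (exfalso; first | assumption | omega))
      (by simp only [Pi.add_apply, Pi.sub_apply, av, xv, chi, sgl, Fin.val_mk]
          split_ifs <;> first | decide | (exfalso; first | assumption | omega))
    simp only [Pi.add_apply, Pi.sub_apply, av, xv, chi, sgl, Fin.val_mk] at this
    split_ifs at this <;> first | exact absurd this (by decide) | omega | (exfalso; assumption)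
  · have := adj_zero_invariant _ hadj ⟨0, by omega⟩ ⟨2, by omega⟩ ⟨1, by omega⟩
      (by simp) (by simp)
      (by simp only [Pi.add_apply, Pi.sub_apply, av, xv, chi, sgl, Fin.val_mk]
          split_ifs <;> first | decide | (exfalso; first | assumption | omega))
      (by simp only [Pi.add_apply, Pi.sub_apply, av, xv, chi, sgl, Fin.val_mk]
          split_ifs <;> first | decide | (exfalso; first | assumption | omega))
    simp only [Pi.add_apply, Pi.sub_apply, av, xv, chi, sgl, Fin.val_mk] at this
    split_ifs at this <;> first | exact absurd this (by decide) | omega | (exfalso; assumption)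
  · have := adj_zero_invariant _ hadj ⟨0, by omega⟩ ⟨1, by omega⟩ ⟨0, by omega⟩
      (by simp) (by simp)
      (by simp only [Pi.add_apply, Pi.sub_apply, av, xv, chi, sgl, Fin.val_mk]
          split_ifs <;> first | decide | (exfalso; first | assumption | omega))
      (by simp only [Pi.add_apply, Pi.sub_apply, av, xv, chi, sgl, Fin.val_mk]
          split_ifs <;> first | decide | (exfalso; first | assumption | omega))
    simp only [Pi.add_apply, Pi.sub_apply, av, xv, chi, sgl, Fin.val_mk] at this
    split_ifs at this <;> first | exact absurd this (by decide) | omega | (exfalso; assumption)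
  · have := adj_zero_invariant _ hadj ⟨1, by omega⟩ ⟨2, by omega⟩ ⟨1, by omega⟩
      (by simp) (by simp)
      (by simp only [Pi.add_apply, Pi.sub_apply, av, xv, chi, sgl, Fin.val_mk]
          split_ifs <;> first | decide | (exfalso; first | assumption | omega))
      (by simp only [Pi.add_apply, Pi.sub_apply, av, xv, chi, sgl, Fin.val_mk]
          split_ifs <;> first | decide | (exfalso; first | assumption | omega))
    simp only [Pi.add_apply, Pi.sub_apply, av, xv, chi, sgl, Fin.val_mk] at this
    split_ifs at this <;> first | exact absurd this (by decide) | omega | (exfalso; assumption)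

/-- enumeration of the fault set -/
def gF (n : ℕ) : (Fin (n-1) ⊕ Fin (n-2) ⊕ Fin (n-2) ⊕ Fin (n-3)) → (Fin n → ZMod 3)
  | .inl t => av + sgl 1 (if t.val < 2 then t.val else t.val+1)
  | .inr (.inl t) => av + sgl (-1) (t.val+2)
  | .inr (.inr (.inl t)) => av + chi 1 (t.val+2)
  | .inr (.inr (.inr t)) => av + chi (-1) (t.val+3)

lemma F_sub_range : Fset n ⊆ Set.range (gF n) := by
  intro w hw
  rcases F_classify hn w hw with ⟨m, hm, hm2, hc⟩ | ⟨m, hm2, hm, hc⟩ | ⟨m, hm2, hm, hc⟩ |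
    ⟨m, hm3, hm, hc⟩
  · by_cases hlt : m < 2
    · refine ⟨.inl ⟨m, by omega⟩, ?_⟩
      simp only [gF, Fin.val_mk, if_pos hlt]
      exact hc.symm
    · refine ⟨.inl ⟨m - 1, by omega⟩, ?_⟩
      simp only [gF, Fin.val_mk, if_neg (by omega : ¬ (m - 1 < 2))]
      rw [show m - 1 + 1 = m by omega]
      exact hc.symm
  · refine ⟨.inr (.inl ⟨m - 2, by omega⟩), ?_⟩
    simp only [gF, Fin.val_mk]
    rw [show m - 2 + 2 = m by omega]
    exact hc.symm
  · refine ⟨.inr (.inr (.inl ⟨m - 2, by omega⟩)), ?_⟩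
    simp only [gF, Fin.val_mk]
    rw [show m - 2 + 2 = m by omega]
    exact hc.symm
  · refine ⟨.inr (.inr (.inr ⟨m - 3, by omega⟩)), ?_⟩
    simp only [gF, Fin.val_mk]
    rw [show m - 3 + 3 = m by omega]
    exact hc.symm

lemma ncard_F_le : (Fset n).ncard ≤ 4 * n - 8 := by
  have h1 : (Fset n).ncard ≤ (Set.range (gF n)).ncard :=
    Set.ncard_le_ncard (F_sub_range hn) (Set.toFinite _)
  have h2 : (Set.range (gF n)).ncard ≤ Nat.card (Fin (n-1) ⊕ Fin (n-2) ⊕ Fin (n-2) ⊕ Fin (n-3)) := by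
    rw [← Set.image_univ, ← Set.ncard_univ]
    exact Set.ncard_image_le (Set.toFinite _)
  have h3 : Nat.card (Fin (n-1) ⊕ Fin (n-2) ⊕ Fin (n-2) ⊕ Fin (n-3)) = 4 * n - 8 := by
    simp [Nat.card_eq_fintype_card]
    omega
  omega

/-- enumeration of the cut set -/
def hC (n : ℕ) : (Fin n ⊕ Fin n ⊕ Fin (n-2) ⊕ Fin (n-1)) → (Fin n → ZMod 3)
  | .inl i => sgl 1 i.val
  | .inr (.inl i) => sgl (-1) i.val
  | .inr (.inr (.inl t)) => chi 1 (t.val+2)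
  | .inr (.inr (.inr t)) => chi (-1) (t.val+1)

lemma C_sub_range : Cset n ⊆ Set.range (hC n) := by
  intro w hw
  obtain ⟨hadj, hne⟩ := hw
  rcases adj_zero_classify _ hadj with ⟨m, hm, hc | hc⟩ | ⟨m, h1, hm, hc | hc⟩
  · exact ⟨.inl ⟨m, hm⟩, hc.symm⟩
  · exact ⟨.inr (.inl ⟨m, hm⟩), hc.symm⟩
  · by_cases h2 : m = 1
    · exact absurd (hc.trans (by rw [h2]; rfl)) hne
    · refine ⟨.inr (.inr (.inl ⟨m - 2, by omega⟩)), ?_⟩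
      simp only [hC, Fin.val_mk]
      rw [show m - 2 + 2 = m by omega]
      exact hc.symm
  · refine ⟨.inr (.inr (.inr ⟨m - 1, by omega⟩)), ?_⟩
    simp only [hC, Fin.val_mk]
    rw [show m - 1 + 1 = m by omega]
    exact hc.symm

lemma ncard_C_le : (Cset n).ncard ≤ 4 * n - 3 := by
  have h1 : (Cset n).ncard ≤ (Set.range (hC n)).ncard :=
    Set.ncard_le_ncard (C_sub_range hn) (Set.toFinite _)
  have h2 : (Set.range (hC n)).ncard ≤ Nat.card (Fin n ⊕ Fin n ⊕ Fin (n-2) ⊕ Fin (n-1)) := by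
    rw [← Set.image_univ, ← Set.ncard_univ]
    exact Set.ncard_image_le (Set.toFinite _)
  have h3 : Nat.card (Fin n ⊕ Fin n ⊕ Fin (n-2) ⊕ Fin (n-1)) = 4 * n - 3 := by
    simp [Nat.card_eq_fintype_card]
    omega
  omega

/-- enumeration of the neighbours of a vertex -/
def nbr (n : ℕ) : (Fin n ⊕ Fin n ⊕ Fin (n-1) ⊕ Fin (n-1)) → (Fin n → ZMod 3)
  | .inl i => sgl 1 i.val
  | .inr (.inl i) => sgl (-1) i.val
  | .inr (.inr (.inl t)) => chi 1 (t.val+1)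
  | .inr (.inr (.inr t)) => chi (-1) (t.val+1)

lemma adj_zero_nbr (idx) : (AQ n 3).Adj 0 (nbr n idx) := by
  rcases idx with i | i | t | t
  · exact adj_zero_sgl 1 (Or.inl rfl) i.val i.isLt
  · exact adj_zero_sgl (-1) (Or.inr rfl) i.val i.isLt
  · exact adj_zero_chi 1 (Or.inl rfl) (t.val+1) (by omega) (by have := t.isLt; omega)
  · exact adj_zero_chi (-1) (Or.inr rfl) (t.val+1) (by omega) (by have := t.isLt; omega)

omit hn in
lemma sgl_inj_m {s : ZMod 3} (hs : s ≠ 0) {m m' : ℕ} (hm : m < n) (hm' : m' < n)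
    (h : sgl (n := n) s m = sgl s m') : m = m' := by
  by_contra hc
  have := congrFun h ⟨m, hm⟩
  simp only [sgl, Fin.val_mk, if_pos rfl, if_neg hc] at this
  exact hs this

omit hn in
lemma sgl_ne_sgl {m m' : ℕ} (hm : m < n) : sgl (n := n) 1 m ≠ sgl (-1) m' := by
  intro h
  have := congrFun h ⟨m, hm⟩
  simp only [sgl, Fin.val_mk, if_pos rfl] at this
  split_ifs at this <;> exact absurd this (by decide)

omit hn in
lemma sgl_ne_chi (hn2 : 2 ≤ n) {s t : ZMod 3} (ht : t ≠ 0) {m m' : ℕ} (hm' : 1 ≤ m') :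
    sgl (n := n) s m ≠ chi t m' := by
  intro h
  by_cases h0 : m = 0
  · have := congrFun h ⟨1, by omega⟩
    simp only [sgl, chi, Fin.val_mk, if_neg (by omega : ¬ (1 : ℕ) = m),
      if_pos (by omega : 1 ≤ m')] at this
    exact ht this.symm
  · have := congrFun h ⟨0, by omega⟩
    simp only [sgl, chi, Fin.val_mk, if_neg (by omega : ¬ (0 : ℕ) = m),
      if_pos (by omega : 0 ≤ m')] at this
    exact ht this.symm

omit hn in
lemma chi_inj_m {s : ZMod 3} (hs : s ≠ 0) {m m' : ℕ} (hm : m < n) (hm' : m' < n)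
    (h : chi (n := n) s m = chi s m') : m = m' := by
  by_contra hc
  rcases Nat.lt_or_ge m m' with hlt | hge
  · have := congrFun h ⟨m', hm'⟩
    simp only [chi, Fin.val_mk, if_neg (by omega : ¬ m' ≤ m), if_pos le_rfl] at this
    exact hs this.symm
  · have := congrFun h ⟨m, hm⟩
    simp only [chi, Fin.val_mk, if_pos le_rfl, if_neg (by omega : ¬ m ≤ m')] at this
    exact hs this

omit hn in
lemma chi_ne_chi (hn1 : 1 ≤ n) {m m' : ℕ} : chi (n := n) 1 m ≠ chi (-1) m' := by
  intro h
  have := congrFun h ⟨0, by omega⟩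
  simp only [chi, Fin.val_mk, if_pos (Nat.zero_le _)] at this
  exact absurd this (by decide)

lemma nbr_inj : Function.Injective (nbr n) := by
  have h3 : 3 ≤ n := hn
  rintro (i | i | t | t) (j | j | u | u) h <;> simp only [nbr] at h
  · exact congrArg _ (Fin.ext (sgl_inj_m (by decide) i.isLt j.isLt h))
  · exact absurd h (sgl_ne_sgl i.isLt)
  · exact absurd h (sgl_ne_chi (by omega) (by decide) (by omega))
  · exact absurd h (sgl_ne_chi (by omega) (by decide) (by omega))
  · exact absurd h.symm (sgl_ne_sgl j.isLt)
  · exact congrArg _ (congrArg _ (Fin.ext (sgl_inj_m (by decide) i.isLt j.isLt h)))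
  · exact absurd h (sgl_ne_chi (by omega) (by decide) (by omega))
  · exact absurd h (sgl_ne_chi (by omega) (by decide) (by omega))
  · exact absurd h.symm (sgl_ne_chi (by omega) (by decide) (by omega))
  · exact absurd h.symm (sgl_ne_chi (by omega) (by decide) (by omega))
  · have := chi_inj_m (by decide) (by have := t.isLt; omega) (by have := u.isLt; omega) h
    exact congrArg _ (congrArg _ (congrArg _ (Fin.ext (by omega))))
  · exact absurd h (chi_ne_chi (by omega))
  · exact absurd h.symm (sgl_ne_chi (by omega) (by decide) (by omega))
  · exact absurd h.symm (sgl_ne_chi (by omega) (by decide) (by omega))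
  · exact absurd h.symm (chi_ne_chi (by omega))
  · have := chi_inj_m (by decide) (by have := t.isLt; omega) (by have := u.isLt; omega) h
    exact congrArg _ (congrArg _ (congrArg _ (Fin.ext (by omega))))

lemma adj_self_add_nbr (z : Fin n → ZMod 3) (idx) : (AQ n 3).Adj z (z + nbr n idx) := by
  rw [adj_sub_iff]
  rw [add_sub_cancel_left]
  exact adj_zero_nbr hn idx

lemma deg_ge (z : Fin n → ZMod 3) (hz : z ∈ (Fset n)ᶜ)
    (hnb : ∀ idx, z + nbr n idx ∈ (Fset n)ᶜ) :
    4 * n - 2 ≤ deg ((AQ n 3).induce (Fset n)ᶜ) ⟨z, hz⟩ := by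
  classical
  set H := (AQ n 3).induce (Fset n)ᶜ with hH
  set φ : (Fin n ⊕ Fin n ⊕ Fin (n-1) ⊕ Fin (n-1)) → (H.neighborSet ⟨z, hz⟩) :=
    fun idx => ⟨⟨z + nbr n idx, hnb idx⟩, by
      show H.Adj ⟨z, hz⟩ ⟨z + nbr n idx, hnb idx⟩
      exact adj_self_add_nbr hn z idx⟩ with hφ
  have hinj : Function.Injective φ := by
    intro i j hij
    have h1 : z + nbr n i = z + nbr n j :=
      Subtype.ext_iff.mp (Subtype.ext_iff.mp hij)
    exact nbr_inj hn (add_left_cancel h1)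
  have hle : Nat.card (Fin n ⊕ Fin n ⊕ Fin (n-1) ⊕ Fin (n-1)) ≤
      Nat.card (H.neighborSet ⟨z, hz⟩) := Nat.card_le_card_of_injective φ hinj
  have hcard : Nat.card (Fin n ⊕ Fin n ⊕ Fin (n-1) ⊕ Fin (n-1)) = 4 * n - 2 := by
    simp [Nat.card_eq_fintype_card]
    omega
  rw [deg, ← Nat.card_coe_set_eq]
  omega

lemma deg_zero_ge :
    4 * n - 2 ≤ deg ((AQ n 3).induce (Fset n)ᶜ) ⟨0, zero_not_mem_F⟩ := by
  apply deg_ge hn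
  intro idx
  rw [zero_add]
  intro hmem
  exact hmem.2.1 (adj_zero_nbr hn idx)

lemma deg_xv_ge :
    4 * n - 2 ≤ deg ((AQ n 3).induce (Fset n)ᶜ) ⟨xv, xv_not_mem_F hn⟩ := by
  apply deg_ge hn
  intro idx hmem
  exact not_adj_xv_F hn _ hmem (adj_self_add_nbr hn xv idx)

lemma walk_hits_C (xh : ↥(Fset n)ᶜ) (hx : (xh : Fin n → ZMod 3) = xv) :
    ∀ (u : ↥(Fset n)ᶜ) (w : ((AQ n 3).induce (Fset n)ᶜ).Walk u xh),
      ((u : Fin n → ZMod 3) = 0 ∨ (u : Fin n → ZMod 3) = av) →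
      ∃ c, c ∈ w.support ∧ (c : Fin n → ZMod 3) ∈ Cset n := by
  intro u w
  induction w with
  | nil =>
    intro hu
    rcases hu with hu | hu
    · exact absurd (hx ▸ hu) (xv_ne_zero hn)
    · exact absurd (hx ▸ hu) (xv_ne_av hn)
  | @cons u b xh hadj p ih =>
    intro hu
    by_cases hb : (b : Fin n → ZMod 3) = 0 ∨ (b : Fin n → ZMod 3) = av
    · obtain ⟨c, hc1, hc2⟩ := ih hx hb
      exact ⟨c, by rw [SimpleGraph.Walk.support_cons]; exact List.mem_cons_of_mem _ hc1, hc2⟩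
    · push_neg at hb
      have hAdj : (AQ n 3).Adj (u : Fin n → ZMod 3) (b : Fin n → ZMod 3) := hadj
      have hmem : b ∈ (SimpleGraph.Walk.cons hadj p).support := by
        rw [SimpleGraph.Walk.support_cons]
        exact List.mem_cons_of_mem _ p.start_mem_support
      refine ⟨b, hmem, ?_⟩
      rcases hu with hu | hu
      · exact ⟨hu ▸ hAdj, hb.2⟩
      · have hb0 : (b : Fin n → ZMod 3) ≠ 0 := hb.1
        have hAdj' : (AQ n 3).Adj av (b : Fin n → ZMod 3) := hu ▸ hAdj
        have : (AQ n 3).Adj 0 (b : Fin n → ZMod 3) := by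
          by_contra hc
          exact b.2 ⟨hAdj', hc, hb0⟩
        exact ⟨this, hb.2⟩

end AQaux

/-- For every integer `n ≥ 3`, `AQ_{n,3}` is not `(4n-8)`-strongly Menger connected. -/
theorem AQ_k3_not_strongly_menger_connected (n : ℕ) (hn : 3 ≤ n) :
    ∃ F : Set (Fin n → ZMod 3), F.ncard ≤ 4 * n - 8 ∧
      ¬ StronglyMengerConnected ((AQ n 3).induce Fᶜ) := by
  classical
  refine ⟨AQaux.Fset n, AQaux.ncard_F_le hn, ?_⟩
  intro hSMC
  set H := (AQ n 3).induce (AQaux.Fset n)ᶜ with hH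
  set xh : ↥(AQaux.Fset n)ᶜ := ⟨AQaux.xv, AQaux.xv_not_mem_F hn⟩ with hxh
  set yh : ↥(AQaux.Fset n)ᶜ := ⟨0, AQaux.zero_not_mem_F⟩ with hyh
  have hne : xh ≠ yh := fun h => AQaux.xv_ne_zero hn (Subtype.ext_iff.mp h)
  obtain ⟨P, hpath, hdist, hdisj⟩ := hSMC xh yh hne
  have hd : 4 * n - 2 ≤ min (deg H xh) (deg H yh) :=
    le_min (AQaux.deg_xv_ge hn) (AQaux.deg_zero_ge hn)
  have hCmem : ∀ i, ∃ ch, ch ∈ (P i).support ∧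
      ((ch : Fin n → ZMod 3) ∈ AQaux.Cset n) := by
    intro i
    obtain ⟨ch, hc1, hc2⟩ := AQaux.walk_hits_C hn xh rfl yh (P i).reverse (Or.inl rfl)
    refine ⟨ch, ?_, hc2⟩
    rwa [SimpleGraph.Walk.support_reverse, List.mem_reverse] at hc1
  choose c hc1 hc2 using hCmem
  have hninj : ¬ Function.Injective
      (fun i => (⟨(c i : Fin n → ZMod 3), hc2 i⟩ : ↥(AQaux.Cset n))) := by
    intro hinj
    have h1 := Nat.card_le_card_of_injective _ hinj
    rw [Nat.card_eq_fintype_card, Fintype.card_fin] at h1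
    have hC := AQaux.ncard_C_le hn
    rw [← Nat.card_coe_set_eq] at hC
    have hbd : Nat.card {x // x ∈ AQaux.Cset n} = Nat.card ↥(AQaux.Cset n) := rfl
    rw [hbd] at h1
    have hmin : min (deg H xh) (deg H yh) ≤ deg H xh := min_le_left _ _
    omega
  rw [Function.not_injective_iff] at hninj
  obtain ⟨i, j, heq, hij⟩ := hninj
  have hval : (c i : Fin n → ZMod 3) = (c j : Fin n → ZMod 3) := congrArg (Subtype.val : ↥(AQaux.Cset n) → (Fin n → ZMod 3)) heq
  have hceq : c i = c j := Subtype.ext hval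
  have hmem2 : c i ∈ (P j).support := hceq ▸ hc1 j
  rcases hdisj i j hij (c i) (hc1 i) hmem2 with h | h
  · have h0 : (c i : Fin n → ZMod 3) = AQaux.xv := by rw [h]
    exact AQaux.not_adj_zero_xv hn (h0 ▸ (hc2 i).1)
  · have h0 : (c i : Fin n → ZMod 3) = 0 := by rw [h]
    exact (AQ n 3).loopless.irrefl 0 (h0 ▸ (hc2 i).1)
end

section
/- For all integers n ≥ 3 and k ≥ 4, the augmented k-ary n-cube AQ_{n,k} is not (4n−7)-strongly Menger connected; that is, there exists a vertex set F ⊆ V(AQ_{n,k}) with |F| ≤ 4n−7 such that AQ_{n,k} − F is not strongly Menger connected: it contains two distinct vertices u and v that are not joined by min{deg_{AQ_{n,k}−F}(u), deg_{AQ_{n,k}−F}(v)} internally vertex-disjoint paths in AQ_{n,k} − F. -/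
open SimpleGraph

namespace AQaux

variable {n k : ℕ}

def sv (n k : ℕ) (i : Fin n) (ε : ZMod k) : Fin n → ZMod k := fun j => if j = i then ε else 0
def pv (n k : ℕ) (i : Fin n) (ε : ZMod k) : Fin n → ZMod k := fun j => if j ≤ i then ε else 0

@[simp] lemma sv_apply (i j : Fin n) (ε : ZMod k) : sv n k i ε j = if j = i then ε else 0 := rfl
@[simp] lemma pv_apply (i j : Fin n) (ε : ZMod k) : pv n k i ε j = if j ≤ i then ε else 0 := rfl

lemma aq_adj_iff (x w : Fin n → ZMod k) :
    (AQ n k).Adj x w ↔ w ≠ x ∧ ∃ ε : ZMod k, (ε = 1 ∨ ε = -1) ∧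
      ((∃ i, w = x + sv n k i ε) ∨ (∃ i : Fin n, 1 ≤ i.val ∧ w = x + pv n k i ε)) := by
  constructor
  · rintro ⟨hne, h⟩
    refine ⟨hne.symm, ?_⟩
    rcases h with ⟨i, hi, hj⟩ | ⟨i, hi1, hpm, hj⟩
    · rcases hi with h1 | h1
      · exact ⟨1, Or.inl rfl, Or.inl ⟨i, funext fun j => by
          by_cases hji : j = i
          · subst hji; simp [h1]
          · simp [hji, hj j hji]⟩⟩
      · exact ⟨-1, Or.inr rfl, Or.inl ⟨i, funext fun j => by
          by_cases hji : j = i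
          · subst hji; simp [h1, sub_eq_add_neg]
          · simp [hji, hj j hji]⟩⟩
    · rcases hpm with h1 | h1
      · exact ⟨1, Or.inl rfl, Or.inr ⟨i, hi1, funext fun j => by
          by_cases hji : j ≤ i
          · simp [hji, h1 j hji]
          · simp [hji, hj j (lt_of_not_ge hji)]⟩⟩
      · exact ⟨-1, Or.inr rfl, Or.inr ⟨i, hi1, funext fun j => by
          by_cases hji : j ≤ i
          · simp [hji, h1 j hji, sub_eq_add_neg]
          · simp [hji, hj j (lt_of_not_ge hji)]⟩⟩
  · rintro ⟨hne, ε, hε, h⟩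
    refine ⟨hne.symm, ?_⟩
    rcases h with ⟨i, rfl⟩ | ⟨i, hi1, rfl⟩
    · left
      refine ⟨i, ?_, fun j hj => by simp [hj]⟩
      rcases hε with rfl | rfl
      · left; simp
      · right; simp [sub_eq_add_neg]
    · right
      refine ⟨i, hi1, ?_, fun j hj => by simp [not_le.mpr hj]⟩
      rcases hε with rfl | rfl
      · left; intro j hj; simp [hj]
      · right; intro j hj; simp [hj, sub_eq_add_neg]

lemma zmod_ne_zero (hk : 4 ≤ k) {m : ℕ} (h0 : 0 < m) (hm : m < k) : (m : ZMod k) ≠ 0 := by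
  intro h
  rw [ZMod.natCast_eq_zero_iff] at h
  exact absurd (Nat.le_of_dvd h0 h) (by omega)

lemma zmod1 (hk : 4 ≤ k) : (1 : ZMod k) ≠ 0 := by
  have := zmod_ne_zero hk (m := 1) (by omega) (by omega); simpa using this
lemma zmod2 (hk : 4 ≤ k) : (2 : ZMod k) ≠ 0 := by
  have := zmod_ne_zero hk (m := 2) (by omega) (by omega); simpa using this
lemma zmod3 (hk : 4 ≤ k) : (3 : ZMod k) ≠ 0 := by
  have := zmod_ne_zero hk (m := 3) (by omega) (by omega); simpa using this

lemma aux2 (hk : 4 ≤ k) {x y : ZMod k} (hx : x = 0 ∨ x = 1 ∨ x = -1)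
    (hy : y = 0 ∨ y = 1 ∨ y = -1) (h : x = 2 + y) : x ≠ 0 ∧ y ≠ 0 := by
  have h1 := zmod1 hk
  have h2 := zmod2 hk
  have h3 := zmod3 hk
  rcases hx with rfl | rfl | rfl <;> rcases hy with rfl | rfl | rfl
  · exact absurd (show (2:ZMod k) = 0 by linear_combination -h) h2
  · exact absurd (show (3:ZMod k) = 0 by linear_combination -h) h3
  · exact absurd (show (1:ZMod k) = 0 by linear_combination -h) h1
  · exact absurd (show (1:ZMod k) = 0 by linear_combination -h) h1
  · exact absurd (show (2:ZMod k) = 0 by linear_combination -h) h2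
  · exact ⟨h1, fun hc => h1 (by linear_combination -hc)⟩
  · exact absurd (show (3:ZMod k) = 0 by linear_combination -h) h3
  · exact ⟨fun hc => h1 (by linear_combination -hc), h1⟩
  · exact absurd (show (2:ZMod k) = 0 by linear_combination -h) h2

lemma adj_delta {x w : Fin n → ZMod k} (h : (AQ n k).Adj x w) :
    ∃ d : Fin n → ZMod k, w = x + d ∧ ∃ ε : ZMod k, (ε = 1 ∨ ε = -1) ∧
      ((∃ i, d = sv n k i ε) ∨ (∃ i : Fin n, 1 ≤ i.val ∧ d = pv n k i ε)) := by
  obtain ⟨hne, ε, hε, hf⟩ := (aq_adj_iff x w).mp h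
  rcases hf with ⟨i, hw⟩ | ⟨i, hi, hw⟩
  · exact ⟨_, hw, ε, hε, Or.inl ⟨i, rfl⟩⟩
  · exact ⟨_, hw, ε, hε, Or.inr ⟨i, hi, rfl⟩⟩

lemma delta_vals {d : Fin n → ZMod k} {ε : ZMod k} (hε : ε = 1 ∨ ε = -1)
    (hf : (∃ i, d = sv n k i ε) ∨ (∃ i : Fin n, 1 ≤ i.val ∧ d = pv n k i ε)) (j : Fin n) :
    d j = 0 ∨ d j = 1 ∨ d j = -1 := by
  have hv : d j = 0 ∨ d j = ε := by
    rcases hf with ⟨i, rfl⟩ | ⟨i, -, rfl⟩ <;> simp only [sv_apply, pv_apply] <;> split <;> simp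
  rcases hv with h | h
  · exact Or.inl h
  · rcases hε with rfl | rfl
    · exact Or.inr (Or.inl h)
    · exact Or.inr (Or.inr h)

lemma adj_add_right {x y t : Fin n → ZMod k} (h : (AQ n k).Adj x y) :
    (AQ n k).Adj (x + t) (y + t) := by
  rw [aq_adj_iff] at h ⊢
  obtain ⟨hne, ε, hε, hf⟩ := h
  refine ⟨fun hc => hne (add_right_cancel hc), ε, hε, ?_⟩
  rcases hf with ⟨i, rfl⟩ | ⟨i, hi, rfl⟩
  · exact Or.inl ⟨i, by ring⟩
  · exact Or.inr ⟨i, hi, by ring⟩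

lemma vec_ne_of_coord {f g : Fin n → ZMod k} (j : Fin n) (h : f j ≠ g j) : f ≠ g :=
  fun hc => h (congrFun hc j)

section Coords
variable (hk : 4 ≤ k) {i0 i1 i2 : Fin n} (h0 : i0.val = 0) (h1 : i1.val = 1) (h2 : i2.val = 2)

include hk h0 h1 h2

lemma key_disj {w : Fin n → ZMod k}
    (haw : (AQ n k).Adj (pv n k i1 1) w)
    (hvw : (AQ n k).Adj (pv n k i1 1 + (sv n k i0 2 + sv n k i2 2)) w) : False := by
  obtain ⟨d, hwd, ε, hε, hf⟩ := adj_delta haw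
  obtain ⟨d', hwd', ε', hε', hf'⟩ := adj_delta hvw
  have hne02 : ¬(i0 = i2) := fun hc => by rw [hc, h2] at h0; omega
  have hne10 : ¬(i1 = i0) := fun hc => by rw [hc, h0] at h1; omega
  have hne12 : ¬(i1 = i2) := fun hc => by rw [hc, h2] at h1; omega
  have hne20 : ¬(i2 = i0) := fun hc => by rw [hc, h0] at h2; omega
  have hDt : d = (sv n k i0 2 + sv n k i2 2) + d' := by
    have h := hwd.symm.trans hwd'
    rw [add_assoc] at h
    exact (add_right_inj _).mp h
  have e0 : d i0 = 2 + d' i0 := by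
    have h := congrFun hDt i0
    simp only [Pi.add_apply, sv_apply] at h
    rw [if_true, if_neg hne02] at h
    linear_combination h
  have e1 : d i1 = d' i1 := by
    have h := congrFun hDt i1
    simp only [Pi.add_apply, sv_apply] at h
    rw [if_neg hne10, if_neg hne12] at h
    linear_combination h
  have e2 : d i2 = 2 + d' i2 := by
    have h := congrFun hDt i2
    simp only [Pi.add_apply, sv_apply] at h
    rw [if_neg hne20, if_true] at h
    linear_combination h
  have n0 := aux2 hk (delta_vals hε hf i0) (delta_vals hε' hf' i0) e0
  have n2 := aux2 hk (delta_vals hε hf i2) (delta_vals hε' hf' i2) e2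
  have hd : ∃ i : Fin n, 1 ≤ i.val ∧ d = pv n k i ε := by
    rcases hf with ⟨i, rfl⟩ | h
    · exfalso
      have hi0 : i0 = i := by by_contra hc; exact n0.1 (by simp [hc])
      have hi2 : i2 = i := by by_contra hc; exact n2.1 (by simp [hc])
      exact hne02 (hi0.trans hi2.symm)
    · exact h
  have hd' : ∃ i : Fin n, 1 ≤ i.val ∧ d' = pv n k i ε' := by
    rcases hf' with ⟨i, rfl⟩ | h
    · exfalso
      have hi0 : i0 = i := by by_contra hc; exact n0.2 (by simp [hc])
      have hi2 : i2 = i := by by_contra hc; exact n2.2 (by simp [hc])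
      exact hne02 (hi0.trans hi2.symm)
    · exact h
  obtain ⟨i, hi, rfl⟩ := hd
  obtain ⟨i', hi', rfl⟩ := hd'
  have li0 : i0 ≤ i := by rw [Fin.le_def]; omega
  have li1 : i1 ≤ i := by rw [Fin.le_def]; omega
  have li0' : i0 ≤ i' := by rw [Fin.le_def]; omega
  have li1' : i1 ≤ i' := by rw [Fin.le_def]; omega
  rw [pv_apply, pv_apply, if_pos li1, if_pos li1'] at e1
  rw [pv_apply, pv_apply, if_pos li0, if_pos li0'] at e0
  exact zmod2 hk (by linear_combination e1 - e0)

lemma not_adj_zero_v :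
    ¬ (AQ n k).Adj 0 (pv n k i1 1 + (sv n k i0 2 + sv n k i2 2)) := by
  intro h
  obtain ⟨d, hwd, ε, hε, hf⟩ := adj_delta h
  have hne02 : ¬(i0 = i2) := fun hc => by rw [hc, h2] at h0; omega
  have hne10 : ¬(i1 = i0) := fun hc => by rw [hc, h0] at h1; omega
  have hne12 : ¬(i1 = i2) := fun hc => by rw [hc, h2] at h1; omega
  have li01 : i0 ≤ i1 := by rw [Fin.le_def]; omega
  have hv0 : d i0 = 3 := by
    have h := congrFun hwd i0
    simp only [Pi.add_apply, sv_apply, pv_apply, Pi.zero_apply] at h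
    rw [if_pos li01, if_true, if_neg hne02] at h
    linear_combination -h
  have hv1 : d i1 = 1 := by
    have h := congrFun hwd i1
    simp only [Pi.add_apply, sv_apply, pv_apply, Pi.zero_apply] at h
    rw [if_pos (le_refl i1), if_neg hne10, if_neg hne12] at h
    linear_combination -h
  rcases hf with ⟨i, rfl⟩ | ⟨i, hi, rfl⟩
  · have hi0 : i0 = i := by
      by_contra hc; rw [sv_apply, if_neg hc] at hv0
      exact zmod3 hk (by linear_combination -hv0)
    have hi1 : i1 = i := by
      by_contra hc; rw [sv_apply, if_neg hc] at hv1
      exact zmod1 hk (by linear_combination -hv1)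
    have := congrArg Fin.val (hi0.trans hi1.symm); omega
  · have li0 : i0 ≤ i := by rw [Fin.le_def]; omega
    have li1 : i1 ≤ i := by rw [Fin.le_def]; omega
    rw [pv_apply, if_pos li0] at hv0
    rw [pv_apply, if_pos li1] at hv1
    exact zmod2 hk (by linear_combination hv1 - hv0)

lemma not_adj_a_v :
    ¬ (AQ n k).Adj (pv n k i1 1) (pv n k i1 1 + (sv n k i0 2 + sv n k i2 2)) := by
  intro h
  obtain ⟨d, hwd, ε, hε, hf⟩ := adj_delta h
  have hne02 : ¬(i0 = i2) := fun hc => by rw [hc, h2] at h0; omega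
  have hne10 : ¬(i1 = i0) := fun hc => by rw [hc, h0] at h1; omega
  have hne12 : ¬(i1 = i2) := fun hc => by rw [hc, h2] at h1; omega
  have hne20 : ¬(i2 = i0) := fun hc => by rw [hc, h0] at h2; omega
  have hDt : (sv n k i0 2 + sv n k i2 2) = d := (add_right_inj _).mp hwd
  have hv0 : d i0 = 2 := by
    have h := congrFun hDt i0
    simp only [Pi.add_apply, sv_apply] at h
    rw [if_true, if_neg hne02] at h
    linear_combination -h
  have hv1 : d i1 = 0 := by
    have h := congrFun hDt i1
    simp only [Pi.add_apply, sv_apply] at h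
    rw [if_neg hne10, if_neg hne12] at h
    linear_combination -h
  have hv2 : d i2 = 2 := by
    have h := congrFun hDt i2
    simp only [Pi.add_apply, sv_apply] at h
    rw [if_neg hne20, if_true] at h
    linear_combination -h
  rcases hf with ⟨i, rfl⟩ | ⟨i, hi, rfl⟩
  · have hi0 : i0 = i := by
      by_contra hc; rw [sv_apply, if_neg hc] at hv0
      exact zmod2 hk (by linear_combination -hv0)
    have hi2 : i2 = i := by
      by_contra hc; rw [sv_apply, if_neg hc] at hv2
      exact zmod2 hk (by linear_combination -hv2)
    exact hne02 (hi0.trans hi2.symm)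
  · have li0 : i0 ≤ i := by rw [Fin.le_def]; omega
    have li1 : i1 ≤ i := by rw [Fin.le_def]; omega
    rw [pv_apply, if_pos li0] at hv0
    rw [pv_apply, if_pos li1] at hv1
    exact zmod2 hk (by linear_combination hv1 - hv0)



lemma adj_zero_a : (AQ n k).Adj 0 (pv n k i1 1) := by
  rw [aq_adj_iff]
  refine ⟨vec_ne_of_coord i1 ?_, 1, Or.inl rfl, Or.inr ⟨i1, by omega, (zero_add _).symm⟩⟩
  simp only [pv_apply, if_pos (le_refl i1), Pi.zero_apply]
  exact zmod1 hk

lemma adj_zero_sv0 : (AQ n k).Adj 0 (sv n k i0 1) := by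
  rw [aq_adj_iff]
  refine ⟨vec_ne_of_coord i0 ?_, 1, Or.inl rfl, Or.inl ⟨i0, (zero_add _).symm⟩⟩
  simp only [sv_apply, if_true, Pi.zero_apply]
  exact zmod1 hk

lemma adj_zero_sv1 : (AQ n k).Adj 0 (sv n k i1 1) := by
  rw [aq_adj_iff]
  refine ⟨vec_ne_of_coord i1 ?_, 1, Or.inl rfl, Or.inl ⟨i1, (zero_add _).symm⟩⟩
  simp only [sv_apply, if_true, Pi.zero_apply]
  exact zmod1 hk

lemma adj_zero_pv2 : (AQ n k).Adj 0 (pv n k i2 1) := by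
  rw [aq_adj_iff]
  refine ⟨vec_ne_of_coord i2 ?_, 1, Or.inl rfl, Or.inr ⟨i2, by omega, (zero_add _).symm⟩⟩
  simp only [pv_apply, if_pos (le_refl i2), Pi.zero_apply]
  exact zmod1 hk

lemma adj_zero_sv2m : (AQ n k).Adj 0 (sv n k i2 (-1)) := by
  rw [aq_adj_iff]
  refine ⟨vec_ne_of_coord i2 ?_, -1, Or.inr rfl, Or.inl ⟨i2, (zero_add _).symm⟩⟩
  simp only [sv_apply, if_true, Pi.zero_apply]
  intro hc
  exact zmod1 hk (by linear_combination -hc)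

lemma adj_a_sv0 : (AQ n k).Adj (pv n k i1 1) (sv n k i0 1) := by
  have hne10 : ¬(i1 = i0) := fun hc => by rw [hc, h0] at h1; omega
  rw [aq_adj_iff]
  refine ⟨vec_ne_of_coord i1 ?_, -1, Or.inr rfl, Or.inl ⟨i1, ?_⟩⟩
  · simp only [sv_apply, pv_apply, if_neg hne10, if_pos (le_refl i1)]
    intro hc
    exact zmod1 hk (by linear_combination -hc)
  · funext j
    simp only [Pi.add_apply, sv_apply, pv_apply, Fin.ext_iff, Fin.le_def, h0, h1, h2]
    split_ifs <;> first | rfl | ring1 | (exfalso; omega)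

lemma adj_a_sv1 : (AQ n k).Adj (pv n k i1 1) (sv n k i1 1) := by
  have hne01 : ¬(i0 = i1) := fun hc => by rw [hc, h1] at h0; omega
  have li01 : i0 ≤ i1 := by rw [Fin.le_def]; omega
  rw [aq_adj_iff]
  refine ⟨vec_ne_of_coord i0 ?_, -1, Or.inr rfl, Or.inl ⟨i0, ?_⟩⟩
  · simp only [sv_apply, pv_apply, if_neg hne01, if_pos li01]
    intro hc
    exact zmod1 hk (by linear_combination -hc)
  · funext j
    simp only [Pi.add_apply, sv_apply, pv_apply, Fin.ext_iff, Fin.le_def, h0, h1, h2]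
    split_ifs <;> first | rfl | ring1 | (exfalso; omega)

lemma adj_a_pv2 : (AQ n k).Adj (pv n k i1 1) (pv n k i2 1) := by
  have hnle : ¬(i2 ≤ i1) := fun hc => by rw [Fin.le_def, h1, h2] at hc; omega
  rw [aq_adj_iff]
  refine ⟨vec_ne_of_coord i2 ?_, 1, Or.inl rfl, Or.inl ⟨i2, ?_⟩⟩
  · simp only [pv_apply, if_neg hnle, if_pos (le_refl i2)]
    exact fun hc => zmod1 hk hc
  · funext j
    simp only [Pi.add_apply, sv_apply, pv_apply, Fin.ext_iff, Fin.le_def, h0, h1, h2]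
    split_ifs <;> first | rfl | ring1 | (exfalso; omega)

lemma adj_a_sv2m : (AQ n k).Adj (pv n k i1 1) (sv n k i2 (-1)) := by
  have hne02 : ¬(i0 = i2) := fun hc => by rw [hc, h2] at h0; omega
  have li01 : i0 ≤ i1 := by rw [Fin.le_def]; omega
  rw [aq_adj_iff]
  refine ⟨vec_ne_of_coord i0 ?_, -1, Or.inr rfl, Or.inr ⟨i2, by omega, ?_⟩⟩
  · simp only [sv_apply, pv_apply, if_neg hne02, if_pos li01]
    exact fun hc => zmod1 hk hc.symm
  · funext j
    simp only [Pi.add_apply, sv_apply, pv_apply, Fin.ext_iff, Fin.le_def, h0, h1, h2]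
    split_ifs <;> first | rfl | ring1 | (exfalso; omega)

end Coords

end AQaux


open AQaux in
/-- For all integers `n ≥ 3` and `k ≥ 4`, `AQ_{n,k}` is not `(4n-7)`-strongly Menger
connected. -/
theorem AQ_not_strongly_menger_connected (n k : ℕ) (hn : 3 ≤ n) (hk : 4 ≤ k) :
    ∃ F : Set (Fin n → ZMod k), F.ncard ≤ 4 * n - 7 ∧
      ¬ StronglyMengerConnected ((AQ n k).induce Fᶜ) := by

  classical
  haveI : NeZero k := ⟨by omega⟩
  obtain ⟨i0, h0⟩ : ∃ i : Fin n, i.val = 0 := ⟨⟨0, by omega⟩, rfl⟩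
  obtain ⟨i1, h1⟩ : ∃ i : Fin n, i.val = 1 := ⟨⟨1, by omega⟩, rfl⟩
  obtain ⟨i2, h2⟩ : ∃ i : Fin n, i.val = 2 := ⟨⟨2, by omega⟩, rfl⟩
  have hne01 : ¬(i0 = i1) := fun hc => by rw [hc, h1] at h0; omega
  have hne02 : ¬(i0 = i2) := fun hc => by rw [hc, h2] at h0; omega
  have hne10 : ¬(i1 = i0) := fun hc => by rw [hc, h0] at h1; omega
  have hne12 : ¬(i1 = i2) := fun hc => by rw [hc, h2] at h1; omega
  have li01 : i0 ≤ i1 := by rw [Fin.le_def]; omega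
  have li02 : i0 ≤ i2 := by rw [Fin.le_def]; omega
  have li12 : i1 ≤ i2 := by rw [Fin.le_def]; omega
  have hz1 := zmod1 hk
  refine ⟨(AQ n k).neighborSet (pv n k i1 1) \ ({0} ∪ (AQ n k).neighborSet 0), ?_, ?_⟩
  · -- cardinality bound
    have hNa : ((AQ n k).neighborSet (pv n k i1 1)).ncard ≤ 4 * n - 2 := by
      set g : (Fin n × Bool) ⊕ (Fin (n-1) × Bool) → (Fin n → ZMod k) :=
        fun z => Sum.elim
          (fun p : Fin n × Bool => pv n k i1 1 + sv n k p.1 (if p.2 then 1 else -1))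
          (fun p : Fin (n-1) × Bool =>
            pv n k i1 1 + pv n k (⟨p.1.val + 1, by have := p.1.isLt; omega⟩ : Fin n)
              (if p.2 then 1 else -1)) z with hg
      have hsub : (AQ n k).neighborSet (pv n k i1 1) ⊆ Set.range g := by
        intro w hw
        obtain ⟨d, hwd, ε, hε, hf⟩ := adj_delta hw
        subst hwd
        rcases hf with ⟨i, rfl⟩ | ⟨i, hi, rfl⟩
        · rcases hε with rfl | rfl
          · exact ⟨Sum.inl (i, true), by simp [hg]⟩
          · exact ⟨Sum.inl (i, false), by simp [hg]⟩
        · have hlt : i.val - 1 < n - 1 := by have := i.isLt; omega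
          have hfi : (⟨(⟨i.val - 1, hlt⟩ : Fin (n-1)).val + 1, by omega⟩ : Fin n) = i := by
            apply Fin.ext; simp; omega
          rcases hε with rfl | rfl
          · exact ⟨Sum.inr (⟨i.val - 1, hlt⟩, true), by simp [hg, hfi]⟩
          · exact ⟨Sum.inr (⟨i.val - 1, hlt⟩, false), by simp [hg, hfi]⟩
      have hcard : (Set.range g).ncard ≤ 4 * n - 2 := by
        rw [← Set.image_univ]
        have h1' := Set.ncard_image_le (s := (Set.univ : Set ((Fin n × Bool) ⊕ (Fin (n-1) × Bool)))) (f := g) (Set.toFinite _)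
        have h2' : (Set.univ : Set ((Fin n × Bool) ⊕ (Fin (n-1) × Bool))).ncard = 4 * n - 2 := by
          rw [Set.ncard_univ, Nat.card_eq_fintype_card, Fintype.card_sum, Fintype.card_prod,
            Fintype.card_prod, Fintype.card_fin, Fintype.card_fin, Fintype.card_bool]
          omega
        omega
      exact le_trans (Set.ncard_le_ncard hsub (Set.toFinite _)) hcard
    have d1 : (0 : Fin n → ZMod k) ≠ sv n k i0 1 := by
      apply vec_ne_of_coord i0
      rw [sv_apply, if_pos rfl, Pi.zero_apply]
      exact fun hc => hz1 hc.symm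
    have d2 : (0 : Fin n → ZMod k) ≠ sv n k i1 1 := by
      apply vec_ne_of_coord i1
      rw [sv_apply, if_pos rfl, Pi.zero_apply]
      exact fun hc => hz1 hc.symm
    have d3 : (0 : Fin n → ZMod k) ≠ pv n k i2 1 := by
      apply vec_ne_of_coord i2
      rw [pv_apply, if_pos (le_refl i2), Pi.zero_apply]
      exact fun hc => hz1 hc.symm
    have d4 : (0 : Fin n → ZMod k) ≠ sv n k i2 (-1) := by
      apply vec_ne_of_coord i2
      rw [sv_apply, if_pos rfl, Pi.zero_apply]
      exact fun hc => hz1 (by linear_combination hc)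
    have d5 : sv n k i0 1 ≠ sv n k i1 1 := by
      apply vec_ne_of_coord i0
      rw [sv_apply, if_pos rfl, sv_apply, if_neg hne01]
      exact fun hc => hz1 hc
    have d6 : sv n k i0 1 ≠ pv n k i2 1 := by
      apply vec_ne_of_coord i1
      rw [sv_apply, if_neg hne10, pv_apply, if_pos li12]
      exact fun hc => hz1 hc.symm
    have d7 : sv n k i0 1 ≠ sv n k i2 (-1) := by
      apply vec_ne_of_coord i0
      rw [sv_apply, if_pos rfl, sv_apply, if_neg hne02]
      exact fun hc => hz1 hc
    have d8 : sv n k i1 1 ≠ pv n k i2 1 := by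
      apply vec_ne_of_coord i0
      rw [sv_apply, if_neg hne01, pv_apply, if_pos li02]
      exact fun hc => hz1 hc.symm
    have d9 : sv n k i1 1 ≠ sv n k i2 (-1) := by
      apply vec_ne_of_coord i1
      rw [sv_apply, if_pos rfl, sv_apply, if_neg hne12]
      exact fun hc => hz1 hc
    have d10 : pv n k i2 1 ≠ sv n k i2 (-1) := by
      apply vec_ne_of_coord i0
      rw [pv_apply, if_pos li02, sv_apply, if_neg hne02]
      exact fun hc => hz1 hc
    have hT5 : ({0, sv n k i0 1, sv n k i1 1, pv n k i2 1, sv n k i2 (-1)} :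
        Set (Fin n → ZMod k)).ncard = 5 := by
      have m1 : (0 : Fin n → ZMod k) ∉
          ({sv n k i0 1, sv n k i1 1, pv n k i2 1, sv n k i2 (-1)} : Set (Fin n → ZMod k)) := by
        simp only [Set.mem_insert_iff, Set.mem_singleton_iff]
        push_neg
        exact ⟨d1, d2, d3, d4⟩
      have m2 : sv n k i0 1 ∉
          ({sv n k i1 1, pv n k i2 1, sv n k i2 (-1)} : Set (Fin n → ZMod k)) := by
        simp only [Set.mem_insert_iff, Set.mem_singleton_iff]
        push_neg
        exact ⟨d5, d6, d7⟩
      have m3 : sv n k i1 1 ∉ ({pv n k i2 1, sv n k i2 (-1)} : Set (Fin n → ZMod k)) := by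
        simp only [Set.mem_insert_iff, Set.mem_singleton_iff]
        push_neg
        exact ⟨d8, d9⟩
      have m4 : pv n k i2 1 ∉ ({sv n k i2 (-1)} : Set (Fin n → ZMod k)) := by
        simp only [Set.mem_singleton_iff]
        exact d10
      rw [Set.ncard_insert_of_notMem m1 (Set.toFinite _),
        Set.ncard_insert_of_notMem m2 (Set.toFinite _),
        Set.ncard_insert_of_notMem m3 (Set.toFinite _),
        Set.ncard_insert_of_notMem m4 (Set.toFinite _), Set.ncard_singleton]
    have hTsubNa : ({0, sv n k i0 1, sv n k i1 1, pv n k i2 1, sv n k i2 (-1)} :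
        Set (Fin n → ZMod k)) ⊆ (AQ n k).neighborSet (pv n k i1 1) := by
      intro x hx
      simp only [Set.mem_insert_iff, Set.mem_singleton_iff] at hx
      rcases hx with rfl | rfl | rfl | rfl | rfl
      · exact (adj_zero_a hk h0 h1 h2).symm
      · exact adj_a_sv0 hk h0 h1 h2
      · exact adj_a_sv1 hk h0 h1 h2
      · exact adj_a_pv2 hk h0 h1 h2
      · exact adj_a_sv2m hk h0 h1 h2
    have hTsubU : ({0, sv n k i0 1, sv n k i1 1, pv n k i2 1, sv n k i2 (-1)} :
        Set (Fin n → ZMod k)) ⊆ {0} ∪ (AQ n k).neighborSet 0 := by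
      intro x hx
      simp only [Set.mem_insert_iff, Set.mem_singleton_iff] at hx
      rcases hx with rfl | rfl | rfl | rfl | rfl
      · exact Set.mem_union_left _ rfl
      · exact Set.mem_union_right _ (adj_zero_sv0 hk h0 h1 h2)
      · exact Set.mem_union_right _ (adj_zero_sv1 hk h0 h1 h2)
      · exact Set.mem_union_right _ (adj_zero_pv2 hk h0 h1 h2)
      · exact Set.mem_union_right _ (adj_zero_sv2m hk h0 h1 h2)
    have hstep1 : ((AQ n k).neighborSet (pv n k i1 1) \ ({0} ∪ (AQ n k).neighborSet 0)).ncard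
        ≤ ((AQ n k).neighborSet (pv n k i1 1) \
            {0, sv n k i0 1, sv n k i1 1, pv n k i2 1, sv n k i2 (-1)}).ncard :=
      Set.ncard_le_ncard (Set.diff_subset_diff_right hTsubU) (Set.toFinite _)
    have hstep2 : ((AQ n k).neighborSet (pv n k i1 1) \
        {0, sv n k i0 1, sv n k i1 1, pv n k i2 1, sv n k i2 (-1)}).ncard
        = ((AQ n k).neighborSet (pv n k i1 1)).ncard - 5 := by
      rw [Set.ncard_diff hTsubNa (Set.toFinite _), hT5]
    omega
  · -- not strongly Menger connected
    intro hSMC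
    set va : Fin n → ZMod k := pv n k i1 1 + (sv n k i0 2 + sv n k i2 2) with hva
    set Fs : Set (Fin n → ZMod k) :=
      (AQ n k).neighborSet (pv n k i1 1) \ ({0} ∪ (AQ n k).neighborSet 0) with hFs
    set G' : SimpleGraph ↥Fsᶜ := (AQ n k).induce Fsᶜ with hG'
    have adjG' : ∀ x y : ↥Fsᶜ, G'.Adj x y ↔ (AQ n k).Adj x.val y.val := fun x y => Iff.rfl
    have hvne : va ≠ 0 := by
      apply vec_ne_of_coord i1
      rw [hva]
      simp only [Pi.add_apply, sv_apply, pv_apply, Pi.zero_apply]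
      rw [if_pos (le_refl i1), if_neg hne10, if_neg hne12]
      exact fun hc => hz1 (by linear_combination hc)
    have hane_v : pv n k i1 1 ≠ va := by
      apply vec_ne_of_coord i0
      rw [hva]
      simp only [Pi.add_apply, sv_apply, pv_apply]
      rw [if_true, if_neg hne02]
      exact fun hc => zmod2 hk (by linear_combination -hc)
    have hmem_u : (0 : Fin n → ZMod k) ∈ Fsᶜ := by
      rw [Set.mem_compl_iff, hFs]
      rintro ⟨-, hb⟩
      exact hb (Set.mem_union_left _ rfl)
    have hmem_a : pv n k i1 1 ∈ Fsᶜ := by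
      rw [Set.mem_compl_iff, hFs]
      rintro ⟨hA, -⟩
      exact (AQ n k).irrefl hA
    have hmem_v : va ∈ Fsᶜ := by
      rw [Set.mem_compl_iff, hFs]
      rintro ⟨hA, -⟩
      exact not_adj_a_v hk h0 h1 h2 hA
    set u' : ↥Fsᶜ := ⟨0, hmem_u⟩ with hu'
    set v' : ↥Fsᶜ := ⟨va, hmem_v⟩ with hv'
    have hne_uv' : u' ≠ v' := fun hc => hvne (congrArg Subtype.val hc).symm
    obtain ⟨P, hPath, hPdist, hPdisj⟩ := hSMC u' v' hne_uv'
    have hNvF : ∀ w : Fin n → ZMod k, (AQ n k).Adj va w → w ∈ Fsᶜ := by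
      intro w hw hmem
      rw [hFs] at hmem
      exact key_disj hk h0 h1 h2 hmem.1 hw
    have hdeg : deg G' u' ≤ deg G' v' := by
      have hmaps : ∀ b : ↥Fsᶜ, b ∈ G'.neighborSet u' → (AQ n k).Adj va (va + b.val) := by
        intro b hb
        have hadj0 : (AQ n k).Adj 0 b.val := (adjG' u' b).mp hb
        have h := adj_add_right (t := va) hadj0
        rwa [zero_add, add_comm] at h
      apply Set.ncard_le_ncard_of_injOn
        (fun x : ↥Fsᶜ => if hx : va + x.val ∈ Fsᶜ then (⟨va + x.val, hx⟩ : ↥Fsᶜ) else x)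
      · intro b hb
        have hadj := hmaps b hb
        have hm := hNvF _ hadj
        simp only [dif_pos hm]
        exact (adjG' v' ⟨va + b.val, hm⟩).mpr hadj
      · intro b hb c hc hbc
        have hmb := hNvF _ (hmaps b hb)
        have hmc := hNvF _ (hmaps c hc)
        simp only [dif_pos hmb, dif_pos hmc] at hbc
        exact Subtype.ext (add_left_cancel (congrArg Subtype.val hbc))
    have hdmin : min (deg G' u') (deg G' v') = (G'.neighborSet u').ncard := min_eq_left hdeg
    have hlen : ∀ i, 1 ≤ (P i).length := by
      intro i
      have := Walk.not_nil_iff_lt_length.mp (Walk.not_nil_of_ne hne_uv' (p := P i))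
      omega
    have hsadj : ∀ i, G'.Adj u' ((P i).getVert 1) :=
      fun i => Walk.adj_snd (Walk.not_nil_of_ne hne_uv')
    have hsupp : ∀ i, (P i).getVert 1 ∈ (P i).support :=
      fun i => Walk.mem_support_iff_exists_getVert.mpr ⟨1, rfl, hlen i⟩
    have hsnv : ∀ i, (P i).getVert 1 ≠ v' := by
      intro i hc
      have h := (adjG' _ _).mp (hsadj i)
      rw [hc] at h
      exact not_adj_zero_v hk h0 h1 h2 h
    have hsinj : Function.Injective (fun i => (P i).getVert 1) := by
      intro i j hij
      by_contra hcne
      rcases hPdisj i j hcne ((P i).getVert 1) (hsupp i)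
          (by rw [show (P i).getVert 1 = (P j).getVert 1 from hij]; exact hsupp j) with h | h
      · exact (hsadj i).ne' h
      · exact hsnv i h
    have hrange : Set.range (fun i => (P i).getVert 1) = G'.neighborSet u' := by
      apply Set.eq_of_subset_of_ncard_le
      · rintro x ⟨i, rfl⟩
        exact hsadj i
      · have hr : (Set.range (fun i => (P i).getVert 1)).ncard
            = min (deg G' u') (deg G' v') := by
          rw [← Set.image_univ, Set.ncard_image_of_injective _ hsinj, Set.ncard_univ,
            Nat.card_eq_fintype_card, Fintype.card_fin]
        rw [hr]
        exact le_of_eq hdmin.symm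
      · exact Set.toFinite _
    have haadj : G'.Adj u' ⟨pv n k i1 1, hmem_a⟩ :=
      (adjG' u' ⟨pv n k i1 1, hmem_a⟩).mpr (adj_zero_a hk h0 h1 h2)
    have hamem : (⟨pv n k i1 1, hmem_a⟩ : ↥Fsᶜ) ∈ Set.range (fun i => (P i).getVert 1) := by
      rw [hrange]
      exact haadj
    obtain ⟨i₀, hi₀⟩ := hamem
    have hi₀' : (P i₀).getVert 1 = ⟨pv n k i1 1, hmem_a⟩ := hi₀
    obtain ⟨x, hux, q, hq⟩ := Walk.not_nil_iff.mp (Walk.not_nil_of_ne hne_uv' (p := P i₀))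
    have hxa : x = ⟨pv n k i1 1, hmem_a⟩ := by
      have hgv : (P i₀).getVert 1 = x := by
        rw [hq]
        simp [Walk.getVert_cons_succ, Walk.getVert_zero]
      exact hgv.symm.trans hi₀' 
    subst hxa
    have hp := hPath i₀
    rw [hq, Walk.cons_isPath_iff] at hp
    have havne' : (⟨pv n k i1 1, hmem_a⟩ : ↥Fsᶜ) ≠ v' :=
      fun hc => hane_v (congrArg Subtype.val hc)
    have hqnn : ¬ q.Nil := Walk.not_nil_of_ne havne'
    have hqlen : 1 ≤ q.length := by
      have := Walk.not_nil_iff_lt_length.mp hqnn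
      omega
    have hwadj : G'.Adj ⟨pv n k i1 1, hmem_a⟩ (q.getVert 1) := Walk.adj_snd hqnn
    have hwAQ : (AQ n k).Adj (pv n k i1 1) (q.getVert 1).val := (adjG' _ _).mp hwadj
    have hwsuppq : q.getVert 1 ∈ q.support :=
      Walk.mem_support_iff_exists_getVert.mpr ⟨1, rfl, hqlen⟩
    have hwnu : q.getVert 1 ≠ u' := fun hc => hp.2 (hc ▸ hwsuppq)
    have hwnv : q.getVert 1 ≠ v' := by
      intro hc
      have h := hwAQ
      rw [hc] at h
      exact not_adj_a_v hk h0 h1 h2 h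
    have hwadj0 : (AQ n k).Adj 0 (q.getVert 1).val := by
      by_contra hc
      exact (q.getVert 1).prop
        ⟨hwAQ, fun hm => hm.elim (fun h => hwnu (Subtype.ext h)) hc⟩
    have hwrange : q.getVert 1 ∈ Set.range (fun i => (P i).getVert 1) := by
      rw [hrange]
      exact (adjG' u' (q.getVert 1)).mpr hwadj0
    obtain ⟨i₁, hi₁⟩ := hwrange
    have hi₁' : (P i₁).getVert 1 = q.getVert 1 := hi₁
    have hne : i₀ ≠ i₁ := by
      intro hc
      apply hwAQ.ne'
      have h := hi₁'
      rw [← hc] at h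
      rw [hi₀'] at h
      exact (congrArg Subtype.val h).symm
    have hw0 : q.getVert 1 ∈ (P i₀).support := by
      rw [hq, Walk.support_cons]
      exact List.mem_cons_of_mem _ hwsuppq
    have hw1 : q.getVert 1 ∈ (P i₁).support := by
      rw [← hi₁']
      exact hsupp i₁
    rcases hPdisj i₀ i₁ hne _ hw0 hw1 with h | h
    · exact hwnu h
    · exact hwnv h
end

section
/- For all integers n ≥ 2 and k ≥ 3, the augmented k-ary n-cube AQ_{n,k} is not (4n−3)-strongly Menger edge connected; that is, there exists an edge set S ⊆ E(AQ_{n,k}) with |S| ≤ 4n−3 such that AQ_{n,k} − S is not strongly Menger edge connected: it contains two distinct vertices u and v that are not joined by min{deg_{AQ_{n,k}−S}(u), deg_{AQ_{n,k}−S}(v)} pairwise edge-disjoint paths in AQ_{n,k} − S. -/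
open SimpleGraph

open SimpleGraph

section Aux

variable {n k : ℕ}

private def eps (k : ℕ) (b : Bool) : ZMod k := if b then 1 else -1

private lemma two_nz (hk : 3 ≤ k) : (2 : ZMod k) ≠ 0 := by
  haveI : NeZero k := ⟨by omega⟩
  intro h
  have h2 : ((2 : ℕ) : ZMod k) = 0 := by push_cast; exact h
  have hd := (ZMod.natCast_eq_zero_iff 2 k).mp h2
  have := Nat.le_of_dvd (by norm_num) hd
  omega

private lemma one_nz (hk : 3 ≤ k) : (1 : ZMod k) ≠ 0 := by
  haveI : NeZero k := ⟨by omega⟩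
  intro h
  have h2 : ((1 : ℕ) : ZMod k) = 0 := by push_cast; exact h
  have hd := (ZMod.natCast_eq_zero_iff 1 k).mp h2
  have := Nat.le_of_dvd (by norm_num) hd
  omega

private lemma eps_nz (hk : 3 ≤ k) (b : Bool) : eps k b ≠ 0 := by
  cases b
  · simpa [eps] using one_nz hk
  · simpa [eps] using one_nz hk

private lemma eps_inj (hk : 3 ≤ k) : Function.Injective (eps k) := by
  intro b b' h
  cases b <;> cases b' <;> first
    | rfl
    | (exfalso; apply two_nz hk; simp [eps] at h; linear_combination h)
    | (exfalso; apply two_nz hk; simp [eps] at h; linear_combination -h)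

private def nbrFun (n k : ℕ) (x : Fin n → ZMod k) :
    (Fin n × Bool) ⊕ (Fin (n - 1) × Bool) → (Fin n → ZMod k)
  | .inl (i, b) => Function.update x i (x i + eps k b)
  | .inr (i, b) => fun j => if j.val ≤ i.val + 1 then x j + eps k b else x j

private lemma adj_nbrFun (hn : 2 ≤ n) (hk : 3 ≤ k) (x : Fin n → ZMod k) (l) :
    (AQ n k).Adj x (nbrFun n k x l) := by
  obtain ⟨i, b⟩ | ⟨i, b⟩ := l
  · constructor
    · intro h
      have h' := congrFun h i
      simp only [nbrFun, Function.update_self] at h'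
      exact eps_nz hk b (left_eq_add.mp h')
    · left
      refine ⟨i, ?_, fun j hj => Function.update_of_ne hj _ _⟩
      cases b
      · right; simp [nbrFun, eps, sub_eq_add_neg]
      · left; simp [nbrFun, eps]
  · have hi1 : i.val + 1 < n := by have := i.isLt; omega
    constructor
    · intro h
      have h' := congrFun h ⟨0, by omega⟩
      simp only [nbrFun, Nat.zero_le, if_pos] at h'
      exact eps_nz hk b (left_eq_add.mp h')
    · right
      refine ⟨⟨i.val + 1, hi1⟩, by simp, ?_, ?_⟩
      · cases b
        · right; intro j hj
          have hj' : j.val ≤ i.val + 1 := hj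
          simp [nbrFun, if_pos hj', eps, sub_eq_add_neg]
        · left; intro j hj
          have hj' : j.val ≤ i.val + 1 := hj
          simp [nbrFun, if_pos hj', eps]
      · intro j hj
        have hj' : ¬ (j.val ≤ i.val + 1) := by
          have : i.val + 1 < j.val := hj
          omega
        simp [nbrFun, if_neg hj']

private lemma adj_mem_range (x w : Fin n → ZMod k)
    (h : (AQ n k).Adj x w) : w ∈ Set.range (nbrFun n k x) := by
  obtain ⟨hne, ⟨i, hpm, hrest⟩ | ⟨i, h1, hpm, hrest⟩⟩ := h
  · rcases hpm with hp | hp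
    · refine ⟨.inl (i, true), ?_⟩
      funext j
      by_cases hj : j = i
      · subst hj; simp [nbrFun, eps, hp]
      · simp [nbrFun, eps, Function.update_of_ne hj, (hrest j hj).symm]
    · refine ⟨.inl (i, false), ?_⟩
      funext j
      by_cases hj : j = i
      · subst hj; simp [nbrFun, eps, hp, sub_eq_add_neg]
      · simp [nbrFun, eps, Function.update_of_ne hj, (hrest j hj).symm]
  · have hilt : i.val - 1 < n - 1 := by have := i.isLt; omega
    have hsum : (i.val - 1) + 1 = i.val := by omega
    rcases hpm with hp | hp
    · refine ⟨.inr (⟨i.val - 1, hilt⟩, true), ?_⟩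
      funext j
      simp only [nbrFun, hsum]
      by_cases hj : j.val ≤ i.val
      · rw [if_pos hj, (hp j hj)]; simp [eps]
      · rw [if_neg hj, (hrest j (by exact Nat.lt_of_not_le hj))]
    · refine ⟨.inr (⟨i.val - 1, hilt⟩, false), ?_⟩
      funext j
      simp only [nbrFun, hsum]
      by_cases hj : j.val ≤ i.val
      · rw [if_pos hj, (hp j hj)]; simp [eps, sub_eq_add_neg]
      · rw [if_neg hj, (hrest j (by exact Nat.lt_of_not_le hj))]

private lemma nbrFun_inj (hn : 2 ≤ n) (hk : 3 ≤ k) (x : Fin n → ZMod k) :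
    Function.Injective (nbrFun n k x) := by
  have e0 := eps_nz (k := k) hk
  have eI := eps_inj (k := k) hk
  have mixed : ∀ (i : Fin n) (b : Bool) (i' : Fin (n-1)) (b' : Bool),
      Function.update x i (x i + eps k b) =
        (fun j => if j.val ≤ i'.val + 1 then x j + eps k b' else x j) → False := by
    intro i b i' b' h
    set c : Fin n := if i.val = 0 then ⟨1, by omega⟩ else ⟨0, by omega⟩ with hc
    have hci : c ≠ i := by
      rw [hc]
      split
      · next h0 =>
          intro hh
          have h1' : (1 : ℕ) = i.val := congrArg Fin.val hh
          omega
      · next h0 =>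
          intro hh
          have h0' : (0 : ℕ) = i.val := congrArg Fin.val hh
          omega
    have hcle : c.val ≤ i'.val + 1 := by
      rw [hc]
      split
      · exact Nat.succ_le_succ (Nat.zero_le _)
      · exact Nat.zero_le _
    have h' := congrFun h c
    rw [Function.update_of_ne hci, if_pos hcle] at h'
    exact e0 b' (left_eq_add.mp h')
  rintro (⟨i, b⟩ | ⟨i, b⟩) (⟨i', b'⟩ | ⟨i', b'⟩) h
  · by_cases hii : i = i'
    · subst hii
      have h' := congrFun h i
      simp only [nbrFun, Function.update_self] at h'
      rw [eI (add_left_cancel h')]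
    · exfalso
      have h' := congrFun h i
      rw [show (nbrFun n k x (.inl (i,b))) i = x i + eps k b by
            simp [nbrFun],
          show (nbrFun n k x (.inl (i',b'))) i = x i by
            simp [nbrFun, Function.update_of_ne hii]] at h'
      exact e0 b (add_eq_left.mp h')
  · exact absurd h (fun hh => mixed i b i' b' hh)
  · exact absurd h.symm (fun hh => mixed i' b' i b hh)
  · have hb : b = b' := by
      have h' := congrFun h ⟨0, by omega⟩
      simp only [nbrFun, Nat.zero_le, if_pos] at h'
      exact eI (add_left_cancel h')
    subst hb
    have hii : i = i' := by
      by_contra hii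
      have hval : i.val ≠ i'.val := fun hv => hii (Fin.ext hv)
      rcases Nat.lt_or_ge i.val i'.val with hlt | hge
      · have hi1 : i'.val + 1 < n := by have := i'.isLt; omega
        have h' := congrFun h ⟨i'.val + 1, hi1⟩
        rw [show (nbrFun n k x (.inr (i,b))) ⟨i'.val+1, hi1⟩ = x ⟨i'.val+1, hi1⟩ by
              simp only [nbrFun]; rw [if_neg (by simp; omega)],
            show (nbrFun n k x (.inr (i',b))) ⟨i'.val+1, hi1⟩ = x ⟨i'.val+1, hi1⟩ + eps k b by
              simp only [nbrFun]; rw [if_pos (by simp)]] at h'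
        exact e0 b (left_eq_add.mp h')
      · have hlt : i'.val < i.val := by omega
        have hi1 : i.val + 1 < n := by have := i.isLt; omega
        have h' := congrFun h ⟨i.val + 1, hi1⟩
        rw [show (nbrFun n k x (.inr (i,b))) ⟨i.val+1, hi1⟩ = x ⟨i.val+1, hi1⟩ + eps k b by
              simp only [nbrFun]; rw [if_pos (by simp)],
            show (nbrFun n k x (.inr (i',b))) ⟨i.val+1, hi1⟩ = x ⟨i.val+1, hi1⟩ by
              simp only [nbrFun]; rw [if_neg (by simp; omega)]] at h'
        exact e0 b (add_eq_left.mp h')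
    rw [hii]

private lemma AQ_neighborSet (hn : 2 ≤ n) (hk : 3 ≤ k) (x : Fin n → ZMod k) :
    (AQ n k).neighborSet x = Set.range (nbrFun n k x) := by
  ext w
  constructor
  · exact adj_mem_range x w
  · rintro ⟨l, rfl⟩; exact adj_nbrFun hn hk x l

private lemma deg_AQ (hn : 2 ≤ n) (hk : 3 ≤ k) (x : Fin n → ZMod k) :
    deg (AQ n k) x = 4 * n - 2 := by
  rw [deg, AQ_neighborSet hn hk x, ← Set.image_univ,
      Set.ncard_image_of_injective _ (nbrFun_inj hn hk x), Set.ncard_univ,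
      Nat.card_eq_fintype_card]
  simp
  omega

end Aux
/-- For all integers `n ≥ 2` and `k ≥ 3`, `AQ_{n,k}` is not `(4n-3)`-strongly Menger edge
connected. -/
theorem AQ_not_strongly_menger_edge_connected (n k : ℕ) (hn : 2 ≤ n) (hk : 3 ≤ k) :
    ∃ S : Set (Sym2 (Fin n → ZMod k)), S ⊆ (AQ n k).edgeSet ∧ S.ncard ≤ 4 * n - 3 ∧
      ¬ StronglyMengerEdgeConnected ((AQ n k).deleteEdges S) := by
  haveI : NeZero k := ⟨by omega⟩
  set G := AQ n k with hG
  set u : Fin n → ZMod k := fun _ => 0 with hu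
  set v : Fin n → ZMod k := nbrFun n k u (.inl (⟨0, by omega⟩, true)) with hv
  set y : Fin n → ZMod k := fun j => if j.val = 0 then 1 else if j.val = 1 then 2 else 0
    with hy
  have h1 : (1 : ZMod k) ≠ 0 := one_nz hk
  have h2 : (2 : ZMod k) ≠ 0 := two_nz hk
  have h21 : (2 : ZMod k) ≠ 1 := fun h => h1 (by linear_combination h)
  have hadj_uv : G.Adj u v := adj_nbrFun hn hk u _
  have huv : u ≠ v := hadj_uv.ne
  have hne01 : (⟨1, by omega⟩ : Fin n) ≠ ⟨0, by omega⟩ := by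
    intro hh; exact absurd (congrArg Fin.val hh) (by simp)
  have hy0 : y ⟨0, by omega⟩ = 1 := by simp [hy]
  have hy1 : y ⟨1, by omega⟩ = 2 := by simp [hy]
  have hu0 : u ⟨0, by omega⟩ = 0 := rfl
  have hu1 : u ⟨1, by omega⟩ = 0 := rfl
  have hnadj_uy : ¬ G.Adj u y := by
    rintro ⟨hne, ⟨i, hpm, hrest⟩ | ⟨i, hi1, hpm, hrest⟩⟩
    · by_cases h0 : (⟨0, by omega⟩ : Fin n) = i
      · have hr := hrest ⟨1, by omega⟩ (by rw [← h0]; exact hne01)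
        rw [hy1, hu1] at hr
        exact h2 hr
      · have hr := hrest ⟨0, by omega⟩ h0
        rw [hy0, hu0] at hr
        exact h1 hr
    · have c1 : (⟨1, by omega⟩ : Fin n) ≤ i := by
        rw [Fin.le_def]; exact hi1
      have c0 : (⟨0, by omega⟩ : Fin n) ≤ i := by
        rw [Fin.le_def]; exact Nat.zero_le _
      rcases hpm with hp | hp
      · have e1 := hp _ c1
        rw [hy1, hu1, zero_add] at e1
        exact h21 e1
      · have e0 := hp _ c0
        rw [hy0, hu0, zero_sub] at e0
        exact h2 (by linear_combination e0)
  have huy : u ≠ y := by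
    intro h
    have := congrFun h ⟨0, by omega⟩
    rw [hy0, hu0] at this
    exact h1 this.symm
  have hvy : v ≠ y := by
    intro h
    have hv1 : v ⟨1, by omega⟩ = 0 := by
      rw [hv]
      simp only [nbrFun]
      rw [Function.update_of_ne hne01]
    have := congrFun h ⟨1, by omega⟩
    rw [hv1, hy1] at this
    exact h2 this.symm
  set S : Set (Sym2 (Fin n → ZMod k)) := (fun w => s(u, w)) '' (G.neighborSet u \ {v})
    with hS
  have hvmem : v ∈ G.neighborSet u := hadj_uv
  refine ⟨S, ?_, ?_, ?_⟩
  · rintro e ⟨w, ⟨hw, -⟩, rfl⟩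
    exact hw
  · calc S.ncard ≤ (G.neighborSet u \ {v}).ncard := Set.ncard_image_le (Set.toFinite _)
      _ = (G.neighborSet u).ncard - 1 :=
          Set.ncard_diff_singleton_of_mem hvmem
      _ ≤ 4 * n - 3 := by
          rw [show (G.neighborSet u).ncard = deg G u from rfl, deg_AQ hn hk]
          omega
  · intro hSM
    set G' := G.deleteEdges S with hG'
    have hSv : ∀ w, s(v, w) ∉ S := by
      rintro w ⟨w', hw', heq⟩
      rw [Sym2.eq_iff] at heq
      rcases heq with ⟨hq1, hq2⟩ | ⟨hq1, hq2⟩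
      · exact huv hq1
      · exact hw'.2 (by simp [hq2])
    have hSy : ∀ w, s(y, w) ∉ S := by
      rintro w ⟨w', hw', heq⟩
      rw [Sym2.eq_iff] at heq
      rcases heq with ⟨hq1, hq2⟩ | ⟨hq1, hq2⟩
      · exact huy hq1
      · exact hnadj_uy (by rw [hq2] at hw'; exact hw'.1)
    have hSuv : s(u, v) ∉ S := by
      rintro ⟨w', hw', heq⟩
      rw [Sym2.eq_iff] at heq
      rcases heq with ⟨hq1, hq2⟩ | ⟨hq1, hq2⟩
      · exact hw'.2 (by simp [hq2])
      · exact huv hq1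
    have hG'uv : G'.Adj u v := by
      rw [hG', deleteEdges_adj]; exact ⟨hadj_uv, hSuv⟩
    have hG'u : ∀ w, G'.Adj u w → w = v := by
      intro w hw
      rw [hG', deleteEdges_adj] at hw
      by_contra hwv
      exact hw.2 ⟨w, ⟨hw.1, by simpa using hwv⟩, rfl⟩
    have hNv : G'.neighborSet v = G.neighborSet v := by
      ext w
      simp only [mem_neighborSet, hG', deleteEdges_adj]
      exact ⟨fun h => h.1, fun h => ⟨h, hSv w⟩⟩
    have hNy : G'.neighborSet y = G.neighborSet y := by
      ext w
      simp only [mem_neighborSet, hG', deleteEdges_adj]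
      exact ⟨fun h => h.1, fun h => ⟨h, hSy w⟩⟩
    have hdegv : deg G' v = 4 * n - 2 := by
      rw [deg, hNv]; exact deg_AQ hn hk v
    have hdegy : deg G' y = 4 * n - 2 := by
      rw [deg, hNy]; exact deg_AQ hn hk y
    obtain ⟨P, hpath, hdisj⟩ := hSM v y hvy
    have key : ∀ i, ∃ w, G'.Adj v w ∧ w ≠ u ∧ s(v, w) ∈ (P i).edges := by
      intro i
      obtain ⟨w, hadj, q, hq⟩ := Walk.exists_eq_cons_of_ne hvy (P i)
      refine ⟨w, hadj, ?_, by rw [hq]; simp⟩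
      intro hwu
      subst hwu
      obtain ⟨w2, hadj2, q2, hq2⟩ := Walk.exists_eq_cons_of_ne huy q
      have hw2 : w2 = v := hG'u w2 hadj2
      subst hw2
      have hp := hpath i
      rw [hq, hq2] at hp
      have hnd := hp.support_nodup
      rw [Walk.support_cons, Walk.support_cons] at hnd
      exact (List.nodup_cons.mp hnd).1 (List.mem_cons_of_mem _ q2.start_mem_support)
    choose z hz1 hz2 hz3 using key
    have hzinj : Function.Injective z := by
      intro i j hij
      by_contra hne'
      exact hdisj i j hne' _ (hz3 i) (by rw [hij]; exact hz3 j)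
    have hT : Function.Injective
        (fun i => (⟨z i, ⟨hz1 i, by simpa using hz2 i⟩⟩ :
          (G'.neighborSet v \ {u} : Set _))) :=
      fun i j h => hzinj (congrArg Subtype.val h)
    have hle := Nat.card_le_card_of_injective _ hT
    rw [Nat.card_coe_set_eq, Nat.card_eq_fintype_card, Fintype.card_fin] at hle
    have humem : u ∈ G'.neighborSet v := hG'uv.symm
    have hcard : (G'.neighborSet v \ {u}).ncard = 4 * n - 3 := by
      rw [Set.ncard_diff_singleton_of_mem humem,
          show (G'.neighborSet v).ncard = deg G' v from rfl, hdegv]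
      omega
    rw [hcard, hdegv, hdegy, min_self] at hle
    omega
end
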